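/- arXiv:2502.03215 — 6 statements merged into one kernel-verified Lean document; each statement's English description precedes it below -/
import Mathlib

section
/- Let Γ' be a connected finite simple graph with a cut-vertex v. If v is not a central vertex of Γ' (i.e., v is not adjacent to every other vertex), then there exists a block Γ₁ of Γ' defined by v (the induced subgraph on v together with one connected component of Γ' minus v) such that v is neither a cut-vertex nor a central vertex of Γ₁. -/
open SimpleGraph

/-- A central vertex: adjacent to every other vertex. -/
def IsCentral {V : Type*} (G : SimpleGraph V) (v : V) : Prop :=
  ∀ u, u ≠ v → G.Adj v u

/-- A cut-vertex: removing it disconnects the graph. -/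
def IsCutVertex {V : Type*} (G : SimpleGraph V) (v : V) : Prop :=
  ¬ (G.induce {u | u ≠ v}).Connected

/-- The block of `G` defined by `v` and a connected component `c` of `G - v`:
the set of vertices consisting of `v` together with the vertices of `c`. -/
def blockSet {V : Type*} (G : SimpleGraph V) (v : V)
    (c : (G.induce {u | u ≠ v}).ConnectedComponent) : Set V :=
  insert v {u | ∃ h : u ≠ v, (G.induce {u | u ≠ v}).connectedComponentMk ⟨u, h⟩ = c}


/-- The component of `c` viewed as a set of vertices of `V`. -/
def compSetV {V : Type} (G : SimpleGraph V) (v : V)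
    (c : (G.induce {u | u ≠ v}).ConnectedComponent) : Set V :=
  {u | ∃ h : u ≠ v, (G.induce {u | u ≠ v}).connectedComponentMk ⟨u, h⟩ = c}

lemma reach_in_comp {V : Type} (G : SimpleGraph V) (v : V)
    {c : (G.induce {u | u ≠ v}).ConnectedComponent}
    (x y : {u // u ≠ v}) (p : (G.induce {u | u ≠ v}).Walk x y)
    (hx : (G.induce {u | u ≠ v}).connectedComponentMk x = c) :
    (G.induce (compSetV G v c)).Reachable
      ⟨x.1, x.2, hx⟩
      ⟨y.1, y.2, ((ConnectedComponent.eq.mpr p.reachable).symm.trans hx : _)⟩ := by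
  induction p with
  | nil => exact Reachable.refl _
  | @cons a b y h q ih =>
    have hb : (G.induce {u | u ≠ v}).connectedComponentMk b = c := by
      rw [← hx]; exact (SimpleGraph.ConnectedComponent.connectedComponentMk_eq_of_adj h).symm
    have step : (G.induce (compSetV G v c)).Adj ⟨a.1, a.2, hx⟩ ⟨b.1, b.2, hb⟩ := h
    exact (step.reachable).trans (ih hb)

lemma compSetV_connected {V : Type} (G : SimpleGraph V) (v : V)
    (c : (G.induce {u | u ≠ v}).ConnectedComponent) :
    (G.induce (compSetV G v c)).Connected := by
  obtain ⟨x, hx⟩ := c.exists_rep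
  rw [connected_iff_exists_forall_reachable]
  refine ⟨⟨x.1, x.2, hx⟩, ?_⟩
  rintro ⟨y, hy, hyc⟩
  obtain ⟨p⟩ := ConnectedComponent.exact (hx.trans hyc.symm)
  exact reach_in_comp G v x ⟨y, hy⟩ p hx

/-- every vertex of `G - v` is in the same component as some neighbour of `v`,
assuming `G` is connected. -/
lemma exists_adj_comp {V : Type} (G : SimpleGraph V) (hconn : G.Connected) (v : V)
    (x : {u // u ≠ v}) :
    ∃ w : V, ∃ hw : w ≠ v, G.Adj v w ∧
      (G.induce {u | u ≠ v}).connectedComponentMk ⟨w, hw⟩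
        = (G.induce {u | u ≠ v}).connectedComponentMk x := by
  obtain ⟨p⟩ := hconn.preconnected x.1 v
  clear hconn
  have key : ∀ (a t : V) (p : G.Walk a t), t = v → ∀ ha : a ≠ v,
      ∃ w : V, ∃ hw : w ≠ v, G.Adj v w ∧
        (G.induce {u | u ≠ v}).connectedComponentMk ⟨w, hw⟩
          = (G.induce {u | u ≠ v}).connectedComponentMk ⟨a, ha⟩ := by
    intro a t p
    induction p with
    | nil => intro ht ha; exact absurd ht ha
    | @cons a b t h q ih =>
      intro ht ha
      subst t
      by_cases hb : b = v
      · exact ⟨a, ha, (hb ▸ h).symm, rfl⟩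
      · obtain ⟨w, hw, hadj, hcomp⟩ := ih rfl hb
        refine ⟨w, hw, hadj, hcomp.trans ?_⟩
        exact (SimpleGraph.ConnectedComponent.connectedComponentMk_eq_of_adj
          (show (G.induce {u | u ≠ v}).Adj ⟨b, hb⟩ ⟨a, ha⟩ from h.symm))
  obtain ⟨w, hw, hadj, hcomp⟩ := key x.1 v p rfl x.2
  exact ⟨w, hw, hadj, hcomp⟩

/-- If `v` is a cut-vertex of a finite connected graph `G` and `v` is not
central, then some block of `G` defined by `v` is such that `v` is neither a cut-vertex
nor a central vertex of that block. -/
theorem stmt0 {V : Type} [Finite V] (G : SimpleGraph V) (hconn : G.Connected)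
    (v : V) (hcut : IsCutVertex G v) (hnc : ¬ IsCentral G v) :
    ∃ c : (G.induce {u | u ≠ v}).ConnectedComponent,
      ¬ IsCutVertex (G.induce (blockSet G v c)) ⟨v, Set.mem_insert v _⟩ ∧
      ¬ IsCentral (G.induce (blockSet G v c)) ⟨v, Set.mem_insert v _⟩ := by
  -- choose a vertex u₀ not adjacent to v
  simp only [IsCentral, not_forall] at hnc
  obtain ⟨u₀, hu₀v, hu₀⟩ := hnc
  set G' := G.induce {u | u ≠ v} with hG'
  set c : G'.ConnectedComponent := G'.connectedComponentMk ⟨u₀, hu₀v⟩ with hc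
  refine ⟨c, ?_, ?_⟩
  · -- not a cut vertex: removing v from the block leaves compSetV, which is connected
    intro hcv
    apply hcv
    -- build iso
    have hBS : blockSet G v c = insert v (compSetV G v c) := rfl
    let vb : ↥(blockSet G v c) := ⟨v, Set.mem_insert v _⟩
    have mem_comp : ∀ w : {u : ↥(blockSet G v c) // u ≠ vb}, (w.1 : V) ∈ compSetV G v c := by
      rintro ⟨⟨w, hw⟩, hne⟩
      rcases hw with h | h
      · exact absurd (Subtype.ext h) hne
      · exact h
    let φ : (G.induce (blockSet G v c)).induce {u | u ≠ vb} ≃g G.induce (compSetV G v c) :=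
      { toFun := fun w => ⟨w.1.1, mem_comp w⟩
        invFun := fun x => ⟨⟨x.1, Set.mem_insert_iff.mpr (Or.inr x.2)⟩,
          fun h => x.2.1 (congrArg Subtype.val h)⟩
        left_inv := fun w => by ext; rfl
        right_inv := fun x => by ext; rfl
        map_rel_iff' := Iff.rfl }
    exact φ.connected_iff.mpr (compSetV_connected G v c)
  · -- not central: u₀ is in the block and not adjacent to v
    intro hcen
    have hu₀mem : u₀ ∈ blockSet G v c := Or.inr ⟨hu₀v, rfl⟩
    have := hcen ⟨u₀, hu₀mem⟩ (fun h => hu₀v (congrArg Subtype.val h))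
    exact hu₀ this
end

section
/- Let Γ be a finite connected chordal graph. Then the flag complex (clique complex) of Γ is acyclic, i.e., all reduced simplicial homology groups of the clique complex of Γ vanish (over any coefficient ring). -/
open SimpleGraph Finset

variable {V : Type} [Fintype V] [LinearOrder V]

/-- The `k`-simplices of the flag (clique) complex of `G`: cliques with `k+1` vertices. -/
def FlagSimplex (G : SimpleGraph V) (k : ℕ) : Type :=
  {s : Finset V // s.card = k + 1 ∧ G.IsClique s}

/-- The simplicial `k`-chains of the flag complex with coefficients in `R`. -/
def FlagChain (G : SimpleGraph V) (R : Type*) [CommRing R] (k : ℕ) : Type _ :=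
  FlagSimplex G k →₀ R

noncomputable instance (G : SimpleGraph V) (R : Type*) [CommRing R] (k : ℕ) :
    AddCommGroup (FlagChain G R k) := Finsupp.instAddCommGroup

noncomputable instance (G : SimpleGraph V) (R : Type*) [CommRing R] (k : ℕ) :
    Module R (FlagChain G R k) := Finsupp.module _ _

/-- The simplicial boundary map of the flag complex (with the orientation coming
from the linear order on the vertices). -/
noncomputable def flagBdry (G : SimpleGraph V) (R : Type) [CommRing R] (k : ℕ) :
    FlagChain G R (k + 1) →ₗ[R] FlagChain G R k :=
  Finsupp.lsum R fun s =>
    (LinearMap.toSpanSingleton R _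
      (∑ v ∈ s.1.attach,
        ((-1 : R) ^ (s.1.filter (· < v.1)).card) •
          Finsupp.single (⟨s.1.erase v.1,
            by
              constructor
              · rw [Finset.card_erase_of_mem v.2, s.2.1]; rfl
              · exact s.2.2.subset (Finset.erase_subset _ _)⟩ : FlagSimplex G k) (1 : R)))

/-- The augmentation map: the sum of the coefficients of a `0`-chain. -/
noncomputable def flagAug (G : SimpleGraph V) (R : Type) [CommRing R] :
    FlagChain G R 0 →ₗ[R] R :=
  Finsupp.lsum R fun _ => LinearMap.id

/-- The flag complex of `G` is acyclic over `R`: all reduced simplicial homology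
groups with coefficients in `R` vanish. -/
def FlagAcyclic (G : SimpleGraph V) (R : Type) [CommRing R] : Prop :=
  Function.Surjective (flagAug G R) ∧
  LinearMap.ker (flagAug G R) = LinearMap.range (flagBdry G R 0) ∧
  ∀ k, LinearMap.ker (flagBdry G R k) = LinearMap.range (flagBdry G R (k + 1))

/-!
A chordal graph has a simplicial vertex outside any given clique (Dirac). In a connected vertex
set `S` with at least two vertices such a vertex `v` has a neighbour `u`, which then dominates
it: `N[v] ⊆ N[u]`. Folding `v` onto `u` deforms the flag complex of `S` onto that of `S \ {v}`:
for the cone operator `D` over `u`, the map `id - ∂D - D∂` sends chains on `S` to chains on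
`S \ {v}`, so each reduced cycle on `S` is homologous to one on `S \ {v}`. As `S \ {v}` is again
connected, induction on `S` ends at a single vertex.
-/

lemma Nat.add_one_mod_eq_iff {n a b : ℕ} (ha : a < n) (hb : b < n) :
    (a + 1) % n = b ↔ a + 1 = b ∨ (a + 1 = n ∧ b = 0) := by
  rcases (show a + 1 < n ∨ a + 1 = n by omega) with h | h
  · rw [Nat.mod_eq_of_lt h]; omega
  · rw [h, Nat.mod_self]; omega

namespace SimpleGraph

variable {α : Type*} {G : SimpleGraph α}

/-- Unlike `SimpleGraph.induce`, this keeps the vertex type of `G`. -/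
def inducedOn (G : SimpleGraph α) (X : Set α) : SimpleGraph α where
  Adj a b := a ∈ X ∧ b ∈ X ∧ G.Adj a b
  symm := ⟨fun _ _ h => ⟨h.2.1, h.1, h.2.2.symm⟩⟩
  loopless := ⟨fun _ h => G.irrefl h.2.2⟩

@[simp]
lemma inducedOn_adj {X : Set α} {a b : α} :
    (G.inducedOn X).Adj a b ↔ a ∈ X ∧ b ∈ X ∧ G.Adj a b := Iff.rfl

lemma inducedOn_mono {X Y : Set α} (h : X ⊆ Y) : G.inducedOn X ≤ G.inducedOn Y :=
  fun _ _ hab => inducedOn_adj.2 ⟨h hab.1, h hab.2.1, hab.2.2⟩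

lemma le_inducedOn_univ : G ≤ G.inducedOn Set.univ :=
  fun _ _ hab => by simpa using hab

lemma Reachable.inducedOn_setOf_reachable {W : Set α} {b z : α}
    (h : (G.inducedOn W).Reachable b z) :
    (G.inducedOn {z | z ∈ W ∧ (G.inducedOn W).Reachable b z}).Reachable b z := by
  rw [reachable_iff_reflTransGen] at h ⊢
  induction h with
  | refl => exact .refl
  | @tail z' z hbz' hz'z ih =>
    have hz' : (G.inducedOn W).Reachable b z' := (reachable_iff_reflTransGen _ _).2 hbz'
    rw [inducedOn_adj] at hz'z
    refine ih.tail ⟨⟨hz'z.1, hz'⟩, ⟨hz'z.2.1, hz'.trans ?_⟩, hz'z.2.2⟩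
    exact Adj.reachable (by simpa using hz'z)

lemma Walk.sub_le_edist_getVert {x y : α} (p : G.Walk x y) (hp : p.length = G.dist x y)
    {i j : ℕ} (hj : j ≤ p.length) :
    ((j - i : ℕ) : ℕ∞) ≤ G.edist (p.getVert i) (p.getVert j) := by
  have hx : G.edist x (p.getVert i) ≤ i :=
    (edist_le (p.take i)).trans (by rw [Walk.take_length]; exact_mod_cast min_le_left _ _)
  have hy : G.edist (p.getVert j) y ≤ ((p.length - j : ℕ) : ℕ∞) :=
    (edist_le (p.drop j)).trans (by rw [Walk.drop_length])
  have hxy :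
      (p.length : ℕ∞) ≤ i + G.edist (p.getVert i) (p.getVert j) + (p.length - j : ℕ) :=
    calc (p.length : ℕ∞) = G.edist x y := by rw [hp, p.reachable.coe_dist_eq_edist]
      _ ≤ G.edist x (p.getVert i) + G.edist (p.getVert i) (p.getVert j) +
          G.edist (p.getVert j) y := G.edist_triangle.trans (add_le_add G.edist_triangle le_rfl)
      _ ≤ _ := by gcongr
  generalize G.edist (p.getVert i) (p.getVert j) = e at hxy ⊢
  induction e using ENat.recTopCoe with
  | top => exact le_top
  | coe e => norm_cast at hxy ⊢; omega

lemma Walk.getVert_ne_getVert_of_length_eq_dist {x y : α} (p : G.Walk x y)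
    (hp : p.length = G.dist x y) {i j : ℕ} (hij : i < j) (hj : j ≤ p.length) :
    p.getVert i ≠ p.getVert j := by
  intro heq
  have := p.sub_le_edist_getVert hp (i := i) hj
  rw [heq, edist_self] at this
  norm_cast at this
  omega

lemma Walk.adj_getVert_iff_of_length_eq_dist {x y : α} (p : G.Walk x y)
    (hp : p.length = G.dist x y) {i j : ℕ} (hij : i < j) (hj : j ≤ p.length) :
    G.Adj (p.getVert i) (p.getVert j) ↔ j = i + 1 := by
  refine ⟨fun h => ?_, ?_⟩
  · have := p.sub_le_edist_getVert hp (i := i) hj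
    rw [edist_eq_one_iff_adj.2 h] at this
    norm_cast at this
    omega
  · rintro rfl
    exact p.adj_getVert_succ (by omega)

lemma Walk.getVert_mem_of_inducedOn {X : Set α} {x y : α} (p : (G.inducedOn X).Walk x y)
    (hy : y ∈ X) {i : ℕ} (hi : i ≤ p.length) : p.getVert i ∈ X := by
  rcases hi.lt_or_eq with hi | rfl
  · exact (p.adj_getVert_succ hi).1
  · rwa [p.getVert_length]

/-- The `fromRel` graph is the cycle on `Fin n`: no induced cycle has length at least four. -/
def IsChordal (G : SimpleGraph α) : Prop :=
  ∀ n, 4 ≤ n → ¬ ∃ f : Fin n ↪ α, ∀ a b, G.Adj (f a) (f b) ↔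
    (SimpleGraph.fromRel (fun i j : Fin n => (i.val + 1) % n = j.val)).Adj a b

/-- `c 0, …, c n, a` is an induced cycle of length `n + 2 ≥ 4`. -/
theorem IsChordal.false_of_induced_path_apex (hG : G.IsChordal) {n : ℕ} (hn : 2 ≤ n)
    (c : ℕ → α) (a : α) (hinj : ∀ i j, i < j → j ≤ n → c i ≠ c j)
    (hadj : ∀ i j, i < j → j ≤ n → (G.Adj (c i) (c j) ↔ j = i + 1))
    (ha : ∀ i ≤ n, a ≠ c i) (hapex : ∀ i ≤ n, G.Adj a (c i) ↔ i = 0 ∨ i = n) :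
    False := by
  have hadj' : ∀ i j, i ≤ n → j ≤ n →
      (G.Adj (c i) (c j) ↔ j = i + 1 ∨ i = j + 1) := by
    intro i j hi hj
    rcases lt_trichotomy i j with h | rfl | h
    · rw [hadj i j h hj]; omega
    · simp only [SimpleGraph.irrefl, false_iff]; omega
    · rw [G.adj_comm, hadj j i h hi]; omega
  let f : Fin (n + 2) → α := fun i => if i.val ≤ n then c i else a
  have hf : Function.Injective f := by
    intro i j hij
    simp only [f] at hij
    split_ifs at hij with hi hj hj
    · by_contra hne
      rcases lt_or_gt_of_ne (Fin.val_ne_of_ne hne) with h | h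
      · exact hinj _ _ h hj hij
      · exact hinj _ _ h hi hij.symm
    · exact absurd hij.symm (ha _ hi)
    · exact absurd hij (ha _ hj)
    · omega
  refine hG (n + 2) (by omega) ⟨⟨f, hf⟩, fun i j => ?_⟩
  simp only [Function.Embedding.coeFn_mk, fromRel_adj, ne_eq, Fin.ext_iff,
    Nat.add_one_mod_eq_iff i.isLt j.isLt, Nat.add_one_mod_eq_iff j.isLt i.isLt, f]
  split_ifs with hi hj hj
  · rw [hadj' _ _ hi hj]; omega
  · rw [G.adj_comm, hapex _ hi]; omega
  · rw [hapex _ hj]; omega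
  · simp only [SimpleGraph.irrefl, false_iff]; omega

/-- Otherwise a shortest path from `x` to `y` through `C`, closed up by `a`, would be an induced
cycle of length at least four. -/
theorem IsChordal.adj_of_adj_apex (hG : G.IsChordal) {C : Set α} {a x y : α}
    (hC : ∀ p ∈ C, ∀ q ∈ C, (G.inducedOn C).Reachable p q)
    (haC : ∀ c ∈ C, c ≠ a ∧ ¬ G.Adj a c)
    (hxC : ∃ c ∈ C, G.Adj x c) (hyC : ∃ c ∈ C, G.Adj y c)
    (hax : G.Adj a x) (hay : G.Adj a y) (hxy : x ≠ y) : G.Adj x y := by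
  by_contra hnxy
  obtain ⟨p, hp, hpx⟩ := hxC
  obtain ⟨q, hq, hqy⟩ := hyC
  set X : Set α := insert x (insert y C)
  have hCX : C ⊆ X := fun _ h => .inr (.inr h)
  have hreach : (G.inducedOn X).Reachable x y :=
    ((inducedOn_adj.2 ⟨.inl rfl, hCX hp, hpx⟩).reachable.trans
      ((hC p hp q hq).mono (inducedOn_mono hCX))).trans
      (inducedOn_adj.2 ⟨hCX hq, .inr (.inl rfl), hqy.symm⟩).reachable
  obtain ⟨w, hw⟩ := hreach.exists_walk_length_eq_dist
  have hmem : ∀ i ≤ w.length, w.getVert i ∈ X := fun i =>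
    w.getVert_mem_of_inducedOn (.inr (.inl rfl))
  have hinj : ∀ i j, i < j → j ≤ w.length → w.getVert i ≠ w.getVert j := fun i j =>
    w.getVert_ne_getVert_of_length_eq_dist hw
  have hadj : ∀ i j, i < j → j ≤ w.length →
      (G.Adj (w.getVert i) (w.getVert j) ↔ j = i + 1) := fun i j hij hj => by
    rw [← w.adj_getVert_iff_of_length_eq_dist hw hij hj, inducedOn_adj,
      and_iff_right (hmem i (by omega)), and_iff_right (hmem j hj)]
  have hlen : 2 ≤ w.length := by
    by_contra! h
    interval_cases hl : w.length
    · exact hxy (Walk.eq_of_length_eq_zero hl)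
    · exact hnxy (Walk.adj_of_length_eq_one hl).2.2
  have hint : ∀ i, 0 < i → i < w.length → w.getVert i ∈ C := by
    intro i h0 hi
    rcases hmem i hi.le with h | h | h
    · exact absurd (h.trans w.getVert_zero.symm) (hinj 0 i h0 hi.le).symm
    · exact absurd (h.trans w.getVert_length.symm) (hinj i _ hi le_rfl)
    · exact h
  refine hG.false_of_induced_path_apex hlen w.getVert a hinj hadj (fun i hi h => ?_)
    (fun i hi => ?_)
  · rcases hmem i hi with h' | h' | h'
    · exact hax.ne (h.trans h')
    · exact hay.ne (h.trans h')
    · exact (haC _ h').1 h.symm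
  · rcases (show i = 0 ∨ i = w.length ∨ (0 < i ∧ i < w.length) by omega)
      with rfl | rfl | ⟨h0, hi'⟩
    · simp [hax]
    · simp [w.getVert_length, hay]
    · simp only [(haC _ (hint i h0 hi')).2, false_iff]; omega

def IsSimplicial (G : SimpleGraph α) (S : Set α) (w : α) : Prop :=
  G.IsClique {x | x ∈ S ∧ G.Adj w x}

lemma IsSimplicial.of_subset {S T : Set α} {w : α} (h : G.IsSimplicial T w)
    (hST : ∀ x ∈ S, G.Adj w x → x ∈ T) : G.IsSimplicial S w :=
  IsClique.subset (fun x (hx : x ∈ S ∧ G.Adj w x) => show x ∈ T ∧ G.Adj w x from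
    ⟨hST x hx.1 hx.2, hx.2⟩) h

lemma IsSimplicial.of_diff_singleton {S : Set α} {a w : α} (h : G.IsSimplicial (S \ {a}) w)
    (ha : ∀ x ∈ S, x ≠ a → G.Adj a x) : G.IsSimplicial S w := by
  have hins : G.IsClique (insert a {x | x ∈ S \ {a} ∧ G.Adj w x}) :=
    IsClique.insert h fun x hx hax => ha x hx.1.1 (Ne.symm hax)
  refine hins.subset ?_
  rintro x ⟨hxS, hwx⟩
  by_cases hxa : x = a
  · exact .inl hxa
  · exact .inr ⟨⟨hxS, hxa⟩, hwx⟩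

lemma IsChordal.exists_component_isClique_boundary (hG : G.IsChordal)
    {S : Finset α} {a b : α} (hbS : b ∈ S) (hba : b ≠ a) (hab : ¬ G.Adj a b) :
    ∃ C ⊆ S, b ∈ C ∧ (∀ c ∈ C, c ≠ a ∧ ¬ G.Adj a c) ∧
      G.IsClique {x | x ∈ S ∧ x ∉ C ∧ ∃ c ∈ C, G.Adj x c} := by
  classical
  set W := S.filter fun x => x ≠ a ∧ ¬ G.Adj a x
  set C := W.filter fun z => (G.inducedOn W).Reachable b z with hCdef
  have hCW : C ⊆ W := filter_subset _ _
  have haC : ∀ c ∈ C, c ≠ a ∧ ¬ G.Adj a c := fun c hc => (mem_filter.1 (hCW hc)).2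
  refine ⟨C, hCW.trans (filter_subset _ _),
    mem_filter.2 ⟨mem_filter.2 ⟨hbS, hba, hab⟩, .refl _⟩, haC, ?_⟩
  have hCconn : ∀ p ∈ (C : Set α), ∀ q ∈ (C : Set α), (G.inducedOn C).Reachable p q := by
    have hb : ∀ p ∈ C, (G.inducedOn C).Reachable b p := fun p hp => by
      simpa [hCdef] using (mem_filter.1 hp).2.inducedOn_setOf_reachable
    exact fun p hp q hq => (hb p hp).symm.trans (hb q hq)
  have hax : ∀ x ∈ S, x ∉ C → ∀ c ∈ C, G.Adj x c → G.Adj a x := by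
    intro x hxS hxC c hc hxc
    by_contra hax
    have hxW : x ∈ W := mem_filter.2 ⟨hxS, fun h => (haC c hc).2 (h ▸ hxc), hax⟩
    exact hxC (mem_filter.2 ⟨hxW,
      (mem_filter.1 hc).2.trans (inducedOn_adj.2 ⟨hCW hc, hxW, hxc.symm⟩).reachable⟩)
  rintro x ⟨hxS, hxC, c, hc, hxc⟩ y ⟨hyS, hyC, d, hd, hyd⟩ hxy
  exact hG.adj_of_adj_apex hCconn haC ⟨c, hc, hxc⟩ ⟨d, hd, hyd⟩ (hax x hxS hxC c hc hxc)
    (hax y hyS hyC d hd hyd) hxy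

lemma IsClique.exists_mem_forall_mem_adj {K S : Finset α} (hK : G.IsClique (K : Set α))
    (hS : S.Nonempty) : ∃ a ∈ S, ∀ x ∈ S, x ∈ K → x = a ∨ G.Adj a x := by
  by_cases h : ∃ a ∈ S, a ∈ K
  · obtain ⟨a, haS, haK⟩ := h
    exact ⟨a, haS, fun x _ hxK => or_iff_not_imp_left.2 fun hxa => hK haK hxK (Ne.symm hxa)⟩
  · obtain ⟨a, ha⟩ := hS
    exact ⟨a, ha, fun x hxS hxK => absurd ⟨x, hxS, hxK⟩ h⟩

/-- Dirac's lemma, in a form that carries the induction. If some `a ∈ S` with `K ∩ S ⊆ N[a]` is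
not universal, recurse into a component `C` of `S \ N[a]` together with its boundary, which is a
clique. -/
theorem IsChordal.exists_isSimplicial [DecidableEq α] (hG : G.IsChordal) (S : Finset α) :
    ∀ K : Finset α, G.IsClique (K : Set α) → (S \ K).Nonempty →
      ∃ w ∈ S \ K, G.IsSimplicial S w := by
  induction S using Finset.strongInduction with
  | H S IH =>
  intro K hK hSK
  by_cases hS : G.IsClique (S : Set α)
  · obtain ⟨w, hw⟩ := hSK
    exact ⟨w, hw, hS.subset fun x hx => hx.1⟩
  obtain ⟨a, haS, haK⟩ := hK.exists_mem_forall_mem_adj (hSK.mono sdiff_subset)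
  by_cases huniv : ∀ x ∈ S, x ≠ a → G.Adj a x
  · have hSa : (S.erase a \ K).Nonempty := by
      rw [nonempty_iff_ne_empty, Ne, sdiff_eq_empty_iff_subset]
      intro h
      apply hS
      rw [← insert_erase haS, coe_insert]
      exact (hK.subset (coe_subset.2 h)).insert
        fun x hx hax => huniv x (mem_of_mem_erase hx) (Ne.symm hax)
    obtain ⟨w, hw, hsimp⟩ := IH _ (erase_ssubset haS) K hK hSa
    obtain ⟨hwS, hwK⟩ := mem_sdiff.1 hw
    rw [coe_erase] at hsimp
    exact ⟨w, mem_sdiff.2 ⟨mem_of_mem_erase hwS, hwK⟩, hsimp.of_diff_singleton huniv⟩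
  push Not at huniv
  obtain ⟨b, hbS, hba, hab⟩ := huniv
  obtain ⟨C, hCS, hbC, haC, hB⟩ := hG.exists_component_isClique_boundary hbS hba hab
  classical
  set B := S.filter fun x => x ∉ C ∧ ∃ c ∈ C, G.Adj x c
  have hHS : C ∪ B ⊂ S := by
    refine (ssubset_iff_of_subset (union_subset hCS (filter_subset _ _))).2
      ⟨a, haS, fun haH => ?_⟩
    rcases mem_union.1 haH with h | h
    · exact (haC a h).1 rfl
    · obtain ⟨c, hc, hac⟩ := (mem_filter.1 h).2.2
      exact (haC c hc).2 hac
  obtain ⟨w, hw, hsimp⟩ := IH _ hHS B (by simpa [B] using hB)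
    ⟨b, mem_sdiff.2 ⟨mem_union_left _ hbC, fun h => (mem_filter.1 h).2.1 hbC⟩⟩
  have hwC : w ∈ C := by
    obtain ⟨hwH, hwB⟩ := mem_sdiff.1 hw
    exact (mem_union.1 hwH).resolve_right hwB
  refine ⟨w, mem_sdiff.2 ⟨hCS hwC, fun hwK => ?_⟩, hsimp.of_subset fun x hxS hwx => ?_⟩
  · rcases haK w (hCS hwC) hwK with h | h
    · exact (haC w hwC).1 h
    · exact (haC w hwC).2 h
  · by_cases hxC : x ∈ C
    · exact mem_union_left _ hxC
    · exact mem_union_right _ (mem_filter.2 ⟨hxS, hxC, w, hwC, hwx.symm⟩)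

/-- The closed neighbourhood of `v` in `S` is contained in that of `u`. -/
structure Dominated (G : SimpleGraph α) (S : Set α) (v u : α) : Prop where
  v_mem : v ∈ S
  u_mem : u ∈ S
  adj : G.Adj v u
  adj_of_adj : ∀ w ∈ S, G.Adj v w → w ≠ u → G.Adj u w

lemma Dominated.isClique_insert {S t : Set α} {v u : α} (hd : G.Dominated S v u)
    (ht : G.IsClique t) (htS : t ⊆ S) (hv : v ∈ t) : G.IsClique (insert u t) :=
  ht.insert fun w hw huw => by
    rcases eq_or_ne w v with rfl | hwv
    · exact hd.adj.symm
    · exact hd.adj_of_adj w (htS hw) (ht hv hw hwv.symm) (Ne.symm huw)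

/-- Folding `v` onto `u` maps edges of `S` to edges or vertices of `S \ {v}`. -/
lemma Dominated.reachable_diff {S : Set α} {v u x y : α} (hd : G.Dominated S v u) (hx : x ≠ v)
    (hy : y ≠ v) (h : (G.inducedOn S).Reachable x y) :
    (G.inducedOn (S \ {v})).Reachable x y := by
  classical
  let r : α → α := fun z => if z = v then u else z
  have hstep : ∀ a b, a ∈ S → b ∈ S → G.Adj a b → b ≠ v →
      (G.inducedOn (S \ {v})).Reachable (r a) (r b) := by
    intro a b ha hb hab hbv
    simp only [r, if_neg hbv]
    split_ifs with hav
    · rw [hav] at hab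
      by_cases hbu : b = u
      · rw [hbu]
      · exact Adj.reachable (G := G.inducedOn (S \ {v}))
          ⟨⟨hd.u_mem, hd.adj.ne.symm⟩, ⟨hb, hbv⟩, hd.adj_of_adj b hb hab hbu⟩
    · exact Adj.reachable (G := G.inducedOn (S \ {v})) ⟨⟨ha, hav⟩, ⟨hb, hbv⟩, hab⟩
  have hr : ∀ a b, (G.inducedOn S).Adj a b →
      Relation.ReflTransGen (G.inducedOn (S \ {v})).Adj (r a) (r b) := by
    rintro a b ⟨ha, hb, hab⟩
    rw [← reachable_iff_reflTransGen]
    by_cases hbv : b = v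
    · exact (hstep b a hb ha hab.symm (hbv ▸ hab.ne)).symm
    · exact hstep a b ha hb hab hbv
  have := Relation.ReflTransGen.lift' r hr _ _ ((reachable_iff_reflTransGen _ _).1 h)
  simpa [r, hx, hy, Function.onFun, reachable_iff_reflTransGen] using this

lemma IsChordal.exists_dominated [DecidableEq α] (hG : G.IsChordal) {S : Finset α}
    (hS : ∀ x ∈ S, ∀ y ∈ S, (G.inducedOn S).Reachable x y) (hcard : 1 < S.card) :
    ∃ v u, G.Dominated S v u := by
  obtain ⟨v, hv, hsimp⟩ := hG.exists_isSimplicial S ∅ (by simp)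
    (by simpa using Finset.card_pos.1 (by omega))
  rw [Finset.sdiff_empty] at hv
  obtain ⟨y, hy, hyv⟩ := Finset.exists_mem_ne hcard v
  obtain ⟨u, hu⟩ : ∃ u, (G.inducedOn S).Adj v u := by
    obtain ⟨p⟩ := hS v hv y hy
    cases p with
    | nil => exact absurd rfl hyv
    | cons h _ => exact ⟨_, h⟩
  exact ⟨v, u, hv, hu.2.1, hu.2.2,
    fun w hw hvw hwu => hsimp ⟨hu.2.1, hu.2.2⟩ ⟨hw, hvw⟩ (Ne.symm hwu)⟩

end SimpleGraph

section FaceSign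

variable {α : Type*} [LinearOrder α] (R : Type*) [CommRing R]

/-- The sign `(-1)^i` of the face `s \ {v}` in the boundary of `s`, `v` being the `i`-th vertex. -/
def faceSign (s : Finset α) (v : α) : R := (-1) ^ #(s.filter (· < v))

variable {R}

lemma faceSign_mul_self (s : Finset α) (v : α) : faceSign R s v * faceSign R s v = 1 := by
  rw [faceSign, ← pow_add, Even.neg_one_pow ⟨_, rfl⟩]

lemma faceSign_singleton (a : α) : faceSign R {a} a = 1 := by
  simp [faceSign, filter_singleton]

lemma faceSign_erase {s : Finset α} {w : α} (hw : w ∈ s) (u : α) :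
    faceSign R (s.erase w) u = (if w < u then -1 else 1) * faceSign R s u := by
  rw [faceSign, faceSign, filter_erase]
  split_ifs with h
  · have hmem : w ∈ s.filter (· < u) := mem_filter.2 ⟨hw, h⟩
    obtain ⟨m, hm⟩ := Nat.exists_eq_add_of_lt (card_pos.2 ⟨w, hmem⟩)
    rw [card_erase_of_mem hmem, hm]
    simp [pow_succ]
  · have hmem : w ∉ s.filter (· < u) := fun h' => h (mem_filter.1 h').2
    rw [erase_eq_of_notMem hmem, one_mul]

lemma faceSign_insert {s : Finset α} {u : α} (hu : u ∉ s) (w : α) :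
    faceSign R (insert u s) w = (if u < w then -1 else 1) * faceSign R s w := by
  rw [faceSign, faceSign, filter_insert]
  split_ifs with h
  · rw [card_insert_of_notMem fun h' => hu (mem_filter.1 h').1, pow_succ']
  · rw [one_mul]

lemma faceSign_erase_self (s : Finset α) (u : α) : faceSign R (s.erase u) u = faceSign R s u := by
  by_cases hu : u ∈ s
  · rw [faceSign_erase hu, if_neg (lt_irrefl u), one_mul]
  · rw [erase_eq_of_notMem hu]

lemma faceSign_insert_self {s : Finset α} {u : α} (hu : u ∉ s) :
    faceSign R (insert u s) u = faceSign R s u := by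
  rw [faceSign_insert hu, if_neg (lt_irrefl u), one_mul]

lemma faceSign_mul_faceSign_erase {s : Finset α} {w z : α} (hw : w ∈ s) (hz : z ∈ s)
    (hne : w ≠ z) :
    faceSign R s w * faceSign R (s.erase w) z = -(faceSign R s z * faceSign R (s.erase z) w) := by
  rw [faceSign_erase hw, faceSign_erase hz]
  rcases hne.lt_or_gt with h | h
  · rw [if_pos h, if_neg (asymm h)]; ring
  · rw [if_neg (asymm h), if_pos h]; ring

lemma faceSign_mul_faceSign_insert {s : Finset α} {u w : α} (hu : u ∉ s) (hw : w ∈ s) :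
    faceSign R s u * faceSign R (insert u s) w = -(faceSign R s w * faceSign R (s.erase w) u) := by
  rw [faceSign_insert hu, faceSign_erase hw]
  rcases (show w ≠ u from fun h => hu (h ▸ hw)).lt_or_gt with h | h
  · rw [if_neg (asymm h), if_pos h]; ring
  · rw [if_pos h, if_neg (asymm h)]; ring

lemma faceSign_pair_add {a b : α} (hab : a ≠ b) :
    faceSign R {a, b} a + faceSign R {a, b} b = 0 := by
  have h := faceSign_mul_faceSign_erase (R := R) (s := {a, b}) (by simp) (by simp) hab
  rw [erase_insert (by simpa using hab), pair_comm, erase_insert (by simpa using hab.symm),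
    faceSign_singleton, faceSign_singleton, mul_one, mul_one, pair_comm] at h
  rw [h, neg_add_cancel]

end FaceSign

section Chains

omit [Fintype V]

variable {G : SimpleGraph V} {R : Type} [CommRing R]

section Basis

omit [LinearOrder V]

variable (G R) in
/-- The basis chain of `t` if `t` is a `k`-simplex of the flag complex, and `0` otherwise. -/
noncomputable def cliqueChain (k : ℕ) (t : Finset V) : FlagChain G R k :=
  letI := Classical.propDecidable (t.card = k + 1 ∧ G.IsClique (t : Set V))
  if h : t.card = k + 1 ∧ G.IsClique (t : Set V) then Finsupp.single ⟨t, h⟩ 1 else 0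

lemma cliqueChain_of_isClique {k : ℕ} {t : Finset V}
    (h : t.card = k + 1 ∧ G.IsClique (t : Set V)) :
    cliqueChain G R k t = Finsupp.single ⟨t, h⟩ 1 := dif_pos h

lemma cliqueChain_of_not_isClique {k : ℕ} {t : Finset V}
    (h : ¬ (t.card = k + 1 ∧ G.IsClique (t : Set V))) : cliqueChain G R k t = 0 := dif_neg h

lemma cliqueChain_val {k : ℕ} (s : FlagSimplex G k) :
    cliqueChain G R k s.1 = Finsupp.single s 1 :=
  cliqueChain_of_isClique s.2

lemma FlagChain.hom_ext {k : ℕ} {M : Type*} [AddCommGroup M] [Module R M]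
    {f g : FlagChain G R k →ₗ[R] M}
    (h : ∀ s : FlagSimplex G k, f (cliqueChain G R k s.1) = g (cliqueChain G R k s.1)) :
    f = g :=
  Finsupp.lhom_ext' fun s => LinearMap.ext_ring <| by
    have := h s
    rw [cliqueChain_val] at this
    exact this

lemma flagAug_cliqueChain {t : Finset V} (h : t.card = 1 ∧ G.IsClique (t : Set V)) :
    flagAug G R (cliqueChain G R 0 t) = 1 := by
  rw [cliqueChain_of_isClique h]
  exact Finsupp.lsum_single _ _ _ _

variable (G R) in
noncomputable def chainsOn (k : ℕ) (S : Finset V) : Submodule R (FlagChain G R k) :=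
  Finsupp.supported R R {s : FlagSimplex G k | s.1 ⊆ S}

lemma chainsOn_mono {k : ℕ} {S S' : Finset V} (h : S ⊆ S') :
    chainsOn G R k S ≤ chainsOn G R k S' :=
  Finsupp.supported_mono fun _ hs => Set.Subset.trans hs h

lemma cliqueChain_mem_chainsOn {k : ℕ} {t S : Finset V} (h : t ⊆ S) :
    cliqueChain G R k t ∈ chainsOn G R k S := by
  by_cases ht : t.card = k + 1 ∧ G.IsClique (t : Set V)
  · rw [cliqueChain_of_isClique ht]
    exact Finsupp.single_mem_supported R 1 h
  · rw [cliqueChain_of_not_isClique ht]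
    exact zero_mem _

lemma map_mem_chainsOn {k m : ℕ} {S S' : Finset V} (F : FlagChain G R k →ₗ[R] FlagChain G R m)
    (hF : ∀ s : FlagSimplex G k, s.1 ⊆ S → F (cliqueChain G R k s.1) ∈ chainsOn G R m S')
    {c : FlagChain G R k} (hc : c ∈ chainsOn G R k S) : F c ∈ chainsOn G R m S' := by
  rw [chainsOn, Finsupp.supported_eq_span_single] at hc
  refine (Submodule.span_le (p := (chainsOn G R m S').comap F).2 ?_ : _) hc
  rintro _ ⟨s, hs, rfl⟩
  have := hF s hs
  rw [cliqueChain_val] at this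
  exact this

end Basis

lemma flagBdry_cliqueChain {k : ℕ} {t : Finset V}
    (h : t.card = k + 2 ∧ G.IsClique (t : Set V)) :
    flagBdry G R k (cliqueChain G R (k + 1) t) =
      ∑ w ∈ t, faceSign R t w • cliqueChain G R k (t.erase w) := by
  suffices ∀ s : FlagSimplex G (k + 1), flagBdry G R k (cliqueChain G R (k + 1) s.1) =
      ∑ w ∈ s.1, faceSign R s.1 w • cliqueChain G R k (s.1.erase w) from this ⟨t, h⟩
  intro s
  rw [cliqueChain_val]
  change Finsupp.lsum R _ (Finsupp.single s 1) = _
  rw [Finsupp.lsum_single, LinearMap.toSpanSingleton_apply, one_smul, ← sum_attach s.1]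
  refine sum_congr rfl fun w _ => ?_
  rw [cliqueChain_of_isClique]
  rfl

lemma card_erase_eq_and_isClique {k : ℕ} {t : Finset V}
    (h : t.card = k + 1 ∧ G.IsClique (t : Set V)) {w : V} (hw : w ∈ t) :
    (t.erase w).card = k ∧ G.IsClique (t.erase w : Set V) :=
  ⟨by rw [card_erase_of_mem hw, h.1]; rfl, h.2.subset (by simp)⟩

lemma flagBdry_comp_flagBdry (k : ℕ) :
    flagBdry G R k ∘ₗ flagBdry G R (k + 1) = 0 := by
  refine FlagChain.hom_ext fun s => ?_
  rw [LinearMap.comp_apply, flagBdry_cliqueChain s.2, map_sum, LinearMap.zero_apply]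
  have hstep : ∀ w ∈ s.1,
      flagBdry G R k (faceSign R s.1 w • cliqueChain G R (k + 1) (s.1.erase w)) =
        ∑ z ∈ s.1.erase w, (faceSign R s.1 w * faceSign R (s.1.erase w) z) •
          cliqueChain G R k ((s.1.erase w).erase z) := fun w hw => by
    rw [map_smul, flagBdry_cliqueChain (card_erase_eq_and_isClique s.2 hw), smul_sum]
    simp only [smul_smul]
  rw [sum_congr rfl hstep, sum_sigma']
  refine sum_involution (fun p _ => ⟨p.2, p.1⟩) (fun p hp => ?_) (fun p hp _ h => ?_)
    (fun p hp => ?_) (fun _ _ => rfl)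
  · obtain ⟨hw, hz⟩ := mem_sigma.1 hp
    rw [erase_right_comm, ← add_smul, faceSign_mul_faceSign_erase hw (mem_of_mem_erase hz)
      (ne_of_mem_erase hz).symm, neg_add_cancel, zero_smul]
  · exact ne_of_mem_erase (mem_sigma.1 hp).2 (congrArg Sigma.fst h)
  · obtain ⟨hw, hz⟩ := mem_sigma.1 hp
    exact mem_sigma.2 ⟨mem_of_mem_erase hz, mem_erase.2 ⟨(ne_of_mem_erase hz).symm, hw⟩⟩

lemma flagAug_comp_flagBdry : flagAug G R ∘ₗ flagBdry G R 0 = 0 := by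
  refine FlagChain.hom_ext fun s => ?_
  rw [LinearMap.comp_apply, flagBdry_cliqueChain s.2, map_sum, LinearMap.zero_apply]
  have hterm : ∀ w ∈ s.1, flagAug G R (faceSign R s.1 w • cliqueChain G R 0 (s.1.erase w)) =
      faceSign R s.1 w := fun w hw => by
    rw [map_smul, flagAug_cliqueChain (card_erase_eq_and_isClique s.2 hw), smul_eq_mul, mul_one]
  rw [sum_congr rfl hterm]
  obtain ⟨a, b, hab, hs⟩ := card_eq_two.1 s.2.1
  rw [hs, sum_pair hab, faceSign_pair_add hab]

end Chains

section Fold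

omit [Fintype V]

variable {G : SimpleGraph V} {R : Type} [CommRing R] {S : Finset V} {v u : V}

variable (G R) in
noncomputable def coneMap (v u : V) (k : ℕ) : FlagChain G R k →ₗ[R] FlagChain G R (k + 1) :=
  Finsupp.lsum R fun s => LinearMap.toSpanSingleton R _ <|
    if v ∈ s.1 ∧ u ∉ s.1 then faceSign R s.1 u • cliqueChain G R (k + 1) (insert u s.1)
    else 0

lemma coneMap_cliqueChain {k : ℕ} {t : Finset V} (h : t.card = k + 1 ∧ G.IsClique (t : Set V)) :
    coneMap G R v u k (cliqueChain G R k t) =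
      if v ∈ t ∧ u ∉ t then faceSign R t u • cliqueChain G R (k + 1) (insert u t)
      else 0 := by
  suffices ∀ s : FlagSimplex G k, coneMap G R v u k (cliqueChain G R k s.1) =
      if v ∈ s.1 ∧ u ∉ s.1 then faceSign R s.1 u • cliqueChain G R (k + 1) (insert u s.1)
      else 0 from this ⟨t, h⟩
  intro s
  rw [cliqueChain_val]
  change Finsupp.lsum R _ (Finsupp.single s 1) = _
  rw [Finsupp.lsum_single, LinearMap.toSpanSingleton_apply, one_smul]

lemma coneMap_cliqueChain_of_not {k : ℕ} {t : Finset V} (h : ¬ (v ∈ t ∧ u ∉ t)) :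
    coneMap G R v u k (cliqueChain G R k t) = 0 := by
  by_cases ht : t.card = k + 1 ∧ G.IsClique (t : Set V)
  · rw [coneMap_cliqueChain ht, if_neg h]
  · rw [cliqueChain_of_not_isClique ht, map_zero]

lemma coneMap_mem_chainsOn {k : ℕ} (hu : u ∈ S) {c : FlagChain G R k}
    (hc : c ∈ chainsOn G R k S) :
    coneMap G R v u k c ∈ chainsOn G R (k + 1) S := by
  refine map_mem_chainsOn _ (fun s hs => ?_) hc
  rw [coneMap_cliqueChain s.2]
  split_ifs
  · exact Submodule.smul_mem _ _ (cliqueChain_mem_chainsOn (insert_subset hu hs))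
  · exact zero_mem _

variable (G R) in
/-- `id - ∂D - D∂` for the cone operator `D = coneMap`, hence chain homotopic to the identity.
On simplices it is the chain map of the fold `v ↦ u` (the `foldMap_cliqueChain_*` lemmas), so
it moves chains on `S` to chains on `S \ {v}` when `u` dominates `v`. -/
noncomputable def foldMap (v u : V) : ∀ k, FlagChain G R k →ₗ[R] FlagChain G R k
  | 0 => LinearMap.id - flagBdry G R 0 ∘ₗ coneMap G R v u 0
  | k + 1 => LinearMap.id - flagBdry G R (k + 1) ∘ₗ coneMap G R v u (k + 1) -
      coneMap G R v u k ∘ₗ flagBdry G R k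

lemma foldMap_zero_apply (c : FlagChain G R 0) :
    foldMap G R v u 0 c = c - flagBdry G R 0 (coneMap G R v u 0 c) := rfl

lemma foldMap_succ_apply {k : ℕ} (c : FlagChain G R (k + 1)) :
    foldMap G R v u (k + 1) c =
      c - flagBdry G R (k + 1) (coneMap G R v u (k + 1) c) - coneMap G R v u k (flagBdry G R k c) :=
  rfl

lemma flagAug_foldMap (c : FlagChain G R 0) :
    flagAug G R (foldMap G R v u 0 c) = flagAug G R c := by
  rw [foldMap_zero_apply, map_sub, ← LinearMap.comp_apply, flagAug_comp_flagBdry,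
    LinearMap.zero_apply, sub_zero]

lemma flagBdry_foldMap {k : ℕ} (c : FlagChain G R (k + 1)) :
    flagBdry G R k (foldMap G R v u (k + 1) c) = foldMap G R v u k (flagBdry G R k c) := by
  have hbb : ∀ {m} (d : FlagChain G R (m + 2)), flagBdry G R m (flagBdry G R (m + 1) d) = 0 :=
    fun d => by rw [← LinearMap.comp_apply, flagBdry_comp_flagBdry, LinearMap.zero_apply]
  cases k with
  | zero => rw [foldMap_succ_apply, foldMap_zero_apply, map_sub, map_sub, hbb, sub_zero]
  | succ k => rw [foldMap_succ_apply, foldMap_succ_apply, map_sub, map_sub, hbb, hbb, map_zero,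
      sub_zero, sub_zero]

lemma foldMap_cliqueChain_of_notMem {k : ℕ} (s : FlagSimplex G k) (hv : v ∉ s.1) :
    foldMap G R v u k (cliqueChain G R k s.1) = cliqueChain G R k s.1 := by
  have hD : coneMap G R v u k (cliqueChain G R k s.1) = 0 :=
    coneMap_cliqueChain_of_not fun h => hv h.1
  cases k with
  | zero => rw [foldMap_zero_apply, hD, map_zero, sub_zero]
  | succ k =>
    rw [foldMap_succ_apply, hD, map_zero, sub_zero, flagBdry_cliqueChain s.2, map_sum,
      sum_eq_zero fun w _ => ?_, sub_zero]
    rw [map_smul, coneMap_cliqueChain_of_not fun h => hv (mem_of_mem_erase h.1), smul_zero]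

lemma foldMap_cliqueChain_of_mem_of_mem {k : ℕ} (s : FlagSimplex G k) (hv : v ∈ s.1)
    (hu : u ∈ s.1) (huv : u ≠ v) : foldMap G R v u k (cliqueChain G R k s.1) = 0 := by
  cases k with
  | zero =>
    obtain ⟨a, ha⟩ := card_eq_one.1 s.2.1
    rw [ha, mem_singleton] at hv hu
    exact absurd (hu.trans hv.symm) huv
  | succ k =>
    rw [foldMap_succ_apply, coneMap_cliqueChain_of_not fun h => h.2 hu, map_zero, sub_zero,
      flagBdry_cliqueChain s.2, map_sum, sum_eq_single_of_mem u hu, map_smul,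
      coneMap_cliqueChain (card_erase_eq_and_isClique s.2 hu),
      if_pos ⟨mem_erase.2 ⟨huv.symm, hv⟩, notMem_erase u _⟩, insert_erase hu, smul_smul,
      faceSign_erase_self, faceSign_mul_self, one_smul, sub_self]
    intro w hw hwu
    rw [map_smul, coneMap_cliqueChain_of_not fun h => h.2 (mem_erase.2 ⟨hwu.symm, hu⟩),
      smul_zero]

lemma flagBdry_coneMap_cliqueChain {k : ℕ} (hd : G.Dominated S v u) (s : FlagSimplex G k)
    (hs : s.1 ⊆ S) (hv : v ∈ s.1) (hu : u ∉ s.1) :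
    flagBdry G R k (coneMap G R v u k (cliqueChain G R k s.1)) = cliqueChain G R k s.1 +
      ∑ w ∈ s.1, (faceSign R s.1 u * faceSign R (insert u s.1) w) •
        cliqueChain G R k (insert u (s.1.erase w)) := by
  have hcl : (insert u s.1).card = k + 2 ∧ G.IsClique ((insert u s.1 : Finset V) : Set V) :=
    ⟨by rw [card_insert_of_notMem hu, s.2.1],
      by rw [coe_insert]; exact hd.isClique_insert s.2.2 (coe_subset.2 hs) hv⟩
  rw [coneMap_cliqueChain s.2, if_pos ⟨hv, hu⟩, map_smul, flagBdry_cliqueChain hcl,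
    sum_insert hu, erase_insert hu, faceSign_insert_self hu, smul_add, smul_smul,
    faceSign_mul_self, one_smul, smul_sum]
  refine congrArg _ (sum_congr rfl fun w hw => ?_)
  rw [smul_smul, erase_insert_of_ne fun h : u = w => hu (h ▸ hw)]

lemma coneMap_flagBdry_cliqueChain {k : ℕ} (s : FlagSimplex G (k + 1)) (hv : v ∈ s.1)
    (hu : u ∉ s.1) :
    coneMap G R v u k (flagBdry G R k (cliqueChain G R (k + 1) s.1)) =
      -∑ w ∈ s.1.erase v, (faceSign R s.1 u * faceSign R (insert u s.1) w) •
        cliqueChain G R (k + 1) (insert u (s.1.erase w)) := by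
  rw [flagBdry_cliqueChain s.2, map_sum, ← add_sum_erase _ _ hv, map_smul,
    coneMap_cliqueChain_of_not fun h => notMem_erase v _ h.1, smul_zero, zero_add,
    ← sum_neg_distrib]
  refine sum_congr rfl fun w hw => ?_
  have hws : w ∈ s.1 := mem_of_mem_erase hw
  rw [map_smul, coneMap_cliqueChain (card_erase_eq_and_isClique s.2 hws),
    if_pos ⟨mem_erase.2 ⟨(ne_of_mem_erase hw).symm, hv⟩, fun h => hu (mem_of_mem_erase h)⟩,
    smul_smul, faceSign_mul_faceSign_insert hu hws, neg_smul, neg_neg]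

lemma foldMap_cliqueChain_of_mem_of_notMem {k : ℕ} (hd : G.Dominated S v u) (s : FlagSimplex G k)
    (hs : s.1 ⊆ S) (hv : v ∈ s.1) (hu : u ∉ s.1) :
    foldMap G R v u k (cliqueChain G R k s.1) =
      -((faceSign R s.1 u * faceSign R (insert u s.1) v) •
        cliqueChain G R k (insert u (s.1.erase v))) := by
  have h := flagBdry_coneMap_cliqueChain (R := R) hd s hs hv hu
  rw [← add_sum_erase _ _ hv] at h
  cases k with
  | zero =>
    have he : s.1.erase v = ∅ := by
      rw [← card_eq_zero, card_erase_of_mem hv, s.2.1]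
    rw [he, sum_empty, add_zero] at h
    rw [foldMap_zero_apply, h, he]
    abel
  | succ k =>
    rw [foldMap_succ_apply, h, coneMap_flagBdry_cliqueChain s hv hu]
    abel

lemma foldMap_mem_chainsOn {k : ℕ} (hd : G.Dominated S v u) {c : FlagChain G R k}
    (hc : c ∈ chainsOn G R k S) : foldMap G R v u k c ∈ chainsOn G R k (S.erase v) := by
  refine map_mem_chainsOn _ (fun s hs => ?_) hc
  by_cases hv : v ∈ s.1
  · by_cases hu : u ∈ s.1
    · rw [foldMap_cliqueChain_of_mem_of_mem s hv hu hd.adj.ne.symm]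
      exact zero_mem _
    · rw [foldMap_cliqueChain_of_mem_of_notMem hd s hs hv hu]
      refine neg_mem (Submodule.smul_mem _ _ (cliqueChain_mem_chainsOn ?_))
      exact insert_subset (mem_erase.2 ⟨hd.adj.ne.symm, hd.u_mem⟩) (erase_subset_erase v hs)
  · rw [foldMap_cliqueChain_of_notMem s hv]
    exact cliqueChain_mem_chainsOn fun x hx => mem_erase.2 ⟨fun h => hv (h ▸ hx), hs hx⟩

end Fold

section Acyclic

omit [Fintype V]

variable {G : SimpleGraph V} {R : Type} [CommRing R]

variable (G R) in
/-- Acyclicity of the flag complex of the subgraph induced on `S`, whose chains are the chains of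
`G` supported on `S`. -/
def IsAcyclicOn (S : Finset V) : Prop :=
  (∀ z ∈ chainsOn G R 0 S, flagAug G R z = 0 →
    ∃ c ∈ chainsOn G R 1 S, flagBdry G R 0 c = z) ∧
  ∀ k, ∀ z ∈ chainsOn G R (k + 1) S, flagBdry G R k z = 0 →
    ∃ c ∈ chainsOn G R (k + 2) S, flagBdry G R (k + 1) c = z

lemma isAcyclicOn_singleton (b : V) : IsAcyclicOn G R {b} := by
  refine ⟨fun z hz hz0 => ⟨0, zero_mem _, ?_⟩, fun k z hz _ => ⟨0, zero_mem _, ?_⟩⟩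
  · let s₀ : FlagSimplex G 0 := ⟨{b}, card_singleton b, by simp⟩
    have hs₀ : ∀ s : FlagSimplex G 0, s.1 ⊆ {b} → s = s₀ := fun s hs =>
      Subtype.ext (eq_of_subset_of_card_le hs (by rw [s.2.1, card_singleton]))
    have hsupp : Finsupp.support z ⊆ {s₀} := fun s hs =>
      mem_singleton.2 (hs₀ s ((Finsupp.mem_supported R z).1 hz hs))
    obtain ⟨r, hr⟩ := Finsupp.support_subset_singleton'.1 hsupp
    change Finsupp.lsum R _ z = 0 at hz0
    rw [hr, Finsupp.lsum_single, LinearMap.id_apply] at hz0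
    rw [map_zero, hr, hz0, Finsupp.single_zero]
    rfl
  · have hS : {s : FlagSimplex G (k + 1) | s.1 ⊆ {b}} = ∅ := by
      refine Set.eq_empty_of_forall_notMem fun s hs => ?_
      have := card_le_card (t := {b}) hs
      rw [s.2.1, card_singleton] at this
      omega
    rw [chainsOn, hS, Finsupp.supported_empty] at hz
    rw [map_zero]
    exact ((Submodule.mem_bot R (M := FlagSimplex G (k + 1) →₀ R)).1 hz).symm

lemma IsAcyclicOn.of_erase {S : Finset V} {v u : V} (hd : G.Dominated S v u)
    (h : IsAcyclicOn G R (S.erase v)) : IsAcyclicOn G R S := by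
  have hle : ∀ {k}, chainsOn G R k (S.erase v) ≤ chainsOn G R k S :=
    @fun _ => chainsOn_mono (erase_subset v S)
  refine ⟨fun z hz hz0 => ?_, fun k z hz hz0 => ?_⟩
  · obtain ⟨c, hc, hcz⟩ := h.1 _ (foldMap_mem_chainsOn hd hz) (by rw [flagAug_foldMap, hz0])
    refine ⟨c + coneMap G R v u 0 z, add_mem (hle hc) (coneMap_mem_chainsOn hd.u_mem hz), ?_⟩
    rw [map_add, hcz, foldMap_zero_apply, sub_add_cancel]
  · obtain ⟨c, hc, hcz⟩ := h.2 k _ (foldMap_mem_chainsOn hd hz)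
      (by rw [flagBdry_foldMap, hz0, map_zero])
    refine ⟨c + coneMap G R v u (k + 1) z,
      add_mem (hle hc) (coneMap_mem_chainsOn hd.u_mem hz), ?_⟩
    rw [map_add, hcz, foldMap_succ_apply, hz0, map_zero, sub_zero, sub_add_cancel]

theorem isAcyclicOn_of_isChordal (hG : G.IsChordal) (S : Finset V) (hS : S.Nonempty)
    (hconn : ∀ x ∈ S, ∀ y ∈ S, (G.inducedOn S).Reachable x y) : IsAcyclicOn G R S := by
  induction S using Finset.strongInduction with
  | H S IH =>
  rcases (Nat.one_le_iff_ne_zero.2 (card_ne_zero.2 hS)).eq_or_lt with hcard | hcard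
  · obtain ⟨b, rfl⟩ := card_eq_one.1 hcard.symm
    exact isAcyclicOn_singleton b
  obtain ⟨v, u, hd⟩ := hG.exists_dominated hconn hcard
  refine (IH _ (erase_ssubset hd.v_mem) ?_ fun x hx y hy => ?_).of_erase hd
  · exact ⟨u, mem_erase.2 ⟨hd.adj.ne.symm, hd.u_mem⟩⟩
  · rw [coe_erase]
    exact hd.reachable_diff (ne_of_mem_erase hx) (ne_of_mem_erase hy)
      (hconn x (mem_of_mem_erase hx) y (mem_of_mem_erase hy))

end Acyclic

lemma IsAcyclicOn.flagAcyclic {G : SimpleGraph V} {R : Type} [CommRing R] [Nonempty V]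
    (h : IsAcyclicOn G R univ) : FlagAcyclic G R := by
  have hmem : ∀ {k} (c : FlagChain G R k), c ∈ chainsOn G R k univ := fun c =>
    (Finsupp.mem_supported R c).2 fun s _ => subset_univ s.1
  obtain ⟨b⟩ := ‹Nonempty V›
  refine ⟨fun r => ⟨r • cliqueChain G R 0 {b}, ?_⟩, le_antisymm (fun z hz => ?_)
    (LinearMap.range_le_ker_iff.2 flagAug_comp_flagBdry), fun k => le_antisymm (fun z hz => ?_)
    (LinearMap.range_le_ker_iff.2 (flagBdry_comp_flagBdry k))⟩
  · rw [map_smul, flagAug_cliqueChain ⟨card_singleton b, by simp⟩, smul_eq_mul, mul_one]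
  · obtain ⟨c, -, hc⟩ := h.1 z (hmem z) hz
    exact ⟨c, hc⟩
  · obtain ⟨c, -, hc⟩ := h.2 k z (hmem z) hz
    exact ⟨c, hc⟩

/-- the flag complex of a finite connected chordal graph is acyclic over
any commutative coefficient ring. -/
theorem stmt7 (G : SimpleGraph V) (hconn : G.Connected)
    (hch : ∀ n, 4 ≤ n → ¬ ∃ f : Fin n ↪ V, ∀ a b, G.Adj (f a) (f b) ↔
      (SimpleGraph.fromRel (fun i j : Fin n => (i.val + 1) % n = j.val)).Adj a b) :
    ∀ (R : Type) (_ : CommRing R), FlagAcyclic G R := by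
  intro R _
  have : Nonempty V := hconn.nonempty
  refine IsAcyclicOn.flagAcyclic (isAcyclicOn_of_isChordal hch univ univ_nonempty fun x _ y _ => ?_)
  rw [coe_univ]
  exact (hconn.preconnected x y).mono le_inducedOn_univ
end

section
/- A ptolemaic graph (finite, connected, chordal, gem-free graph) can be constructed from a single vertex by iteratively applying the following operations: adding a leaf (a new vertex adjacent to exactly one existing vertex), adding a true twin (a new vertex adjacent to an existing vertex w and to exactly the neighbors of w), or adding a false twin of a vertex whose neighborhood is a clique (a new vertex adjacent to exactly the neighbors of an existing vertex w, but not to w, where the neighborhood of w is a complete subgraph). -/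
open SimpleGraph

/-- `H` occurs as an induced subgraph of `G`. -/
def HasInducedCopy {W V : Type*} (H : SimpleGraph W) (G : SimpleGraph V) : Prop :=
  ∃ f : W ↪ V, ∀ a b, G.Adj (f a) (f b) ↔ H.Adj a b

/-- The cycle graph on `n` vertices. -/
def cycleG (n : ℕ) : SimpleGraph (Fin n) :=
  SimpleGraph.fromRel (fun i j => (i.val + 1) % n = j.val)

/-- `G` is chordal: no induced cycle of length at least 4. -/
def Chordal {V : Type*} (G : SimpleGraph V) : Prop :=
  ∀ n, 4 ≤ n → ¬ HasInducedCopy (cycleG n) G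

/-- The gem graph: the cone over the path on four vertices, apex `4`. -/
def gem : SimpleGraph (Fin 5) :=
  SimpleGraph.fromRel (fun i j => (j.val = i.val + 1 ∧ j.val ≤ 3) ∨ i.val = 4)

/-- The overlapping-gems graph on six vertices. -/
def barH : SimpleGraph (Fin 6) :=
  SimpleGraph.fromRel (fun i j =>
    (i.val, j.val) ∈ [(0,1),(0,2),(1,2),(1,3),(2,3),(4,0),(4,1),(5,2),(5,3)])

/-- Droms graph: no induced square and no induced path on 4 vertices. -/
def IsDroms {V : Type*} (G : SimpleGraph V) : Prop :=
  ¬ HasInducedCopy (cycleG 4) G ∧ ¬ HasInducedCopy (SimpleGraph.pathGraph 4) G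

/-- Graphs constructible from a single vertex by adding leaves, true twins, and
false twins of vertices with complete neighbourhood. -/
inductive Constructible : {V : Type} → SimpleGraph V → Prop
  /-- A single vertex. -/
  | single {V : Type} (G : SimpleGraph V) (v : V) (hu : ∀ u : V, u = v) :
      Constructible G
  /-- Adding a leaf `v` attached to `w`. -/
  | leaf {V : Type} (G : SimpleGraph V) (v w : V) (hvw : G.Adj v w)
      (hdeg : ∀ u, G.Adj v u → u = w)
      (h : Constructible (G.induce {u | u ≠ v})) : Constructible G
  /-- Adding a true twin `v` of `w`. -/
  | twin {V : Type} (G : SimpleGraph V) (v w : V) (hvw : G.Adj v w)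
      (hN : ∀ u, u ≠ v → u ≠ w → (G.Adj v u ↔ G.Adj w u))
      (h : Constructible (G.induce {u | u ≠ v})) : Constructible G
  /-- Adding a false twin `v` of a vertex `w` whose neighbourhood is a clique. -/
  | falseTwin {V : Type} (G : SimpleGraph V) (v w : V) (hne : v ≠ w)
      (hvw : ¬ G.Adj v w) (hN : ∀ u, G.Adj v u ↔ G.Adj w u)
      (hclique : G.IsClique {u | G.Adj w u})
      (h : Constructible (G.induce {u | u ≠ v})) : Constructible G

namespace Pto

variable {V : Type*} (G : SimpleGraph V)

/-- v is a pendant vertex with neighbour w -/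
def Pend (v w : V) : Prop := G.Adj v w ∧ ∀ u, G.Adj v u → u = w

def TT (v w : V) : Prop := G.Adj v w ∧ ∀ u, u ≠ v → u ≠ w → (G.Adj v u ↔ G.Adj w u)

def FT (v w : V) : Prop := v ≠ w ∧ ¬ G.Adj v w ∧ ∀ u, G.Adj v u ↔ G.Adj w u

variable {G}

lemma TT.symm {v w : V} (h : TT G v w) : TT G w v :=
  ⟨h.1.symm, fun u h1 h2 => (h.2 u h2 h1).symm⟩

lemma FT.symm {v w : V} (h : FT G v w) : FT G w v :=
  ⟨h.1.symm, fun hc => h.2.1 hc.symm, fun u => (h.2.2 u).symm⟩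

/-- transfer induced copies along induced subgraphs -/
lemma hasInducedCopy_induce {W : Type*} {H : SimpleGraph W} {s : Set V}
    (h : HasInducedCopy H (G.induce s)) : HasInducedCopy H G := by
  obtain ⟨f, hf⟩ := h
  refine ⟨f.trans ⟨Subtype.val, Subtype.val_injective⟩, fun a b => ?_⟩
  simpa using hf a b

lemma chordal_induce (hch : Chordal G) (s : Set V) : Chordal (G.induce s) :=
  fun n hn hc => hch n hn (hasInducedCopy_induce hc)

lemma gemfree_induce (hg : ¬ HasInducedCopy gem G) (s : Set V) :
    ¬ HasInducedCopy gem (G.induce s) := fun hc => hg (hasInducedCopy_induce hc)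

/-- build a gem from an induced P4 (a-b-c-d) plus an apex e -/
lemma gem_of (hgem : ¬ HasInducedCopy gem G) {a b c d e : V}
    (hab : G.Adj a b) (hbc : G.Adj b c) (hcd : G.Adj c d)
    (hac : ¬ G.Adj a c) (had : ¬ G.Adj a d) (hbd : ¬ G.Adj b d)
    (hac' : a ≠ c) (had' : a ≠ d) (hbd' : b ≠ d)
    (hea : G.Adj e a) (heb : G.Adj e b) (hec : G.Adj e c) (hed : G.Adj e d) : False := by
  apply hgem
  have hinj : Function.Injective (fun i : Fin 5 => ![a,b,c,d,e] i) := by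
    intro i j hij
    fin_cases i <;> fin_cases j <;> simp_all
  refine ⟨⟨fun i : Fin 5 => ![a,b,c,d,e] i, hinj⟩, ?_⟩
  intro i j
  fin_cases i <;> fin_cases j <;>
    simp only [gem, SimpleGraph.fromRel_adj, Matrix.cons_val_zero, Matrix.cons_val_one,
      Matrix.head_cons, Function.Embedding.coeFn_mk] <;>
    norm_num [Fin.ext_iff] <;>
    first
      | assumption
      | exact G.irrefl
      | exact hab.symm | exact hbc.symm | exact hcd.symm
      | exact hea.symm | exact heb.symm | exact hec.symm | exact hed.symm
      | exact fun h => hac h.symm | exact fun h => had h.symm | exact fun h => hbd h.symm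


/-- a chordless cycle contradicts chordality -/
lemma cycle_of (hch : Chordal G) {n : ℕ} (hn : 4 ≤ n) (u : ℕ → V)
    (hinj : ∀ i j, i < j → j < n → u i ≠ u j)
    (hadj : ∀ i, i + 1 < n → G.Adj (u i) (u (i+1)))
    (hclose : G.Adj (u (n-1)) (u 0))
    (hchord : ∀ i j, i + 1 < j → j < n → ¬(i = 0 ∧ j = n-1) → ¬ G.Adj (u i) (u j)) :
    False := by
  have aux : ∀ a b : ℕ, a < b → b < n →
      (G.Adj (u a) (u b) ↔ ((a+1) % n = b ∨ (b+1) % n = a)) := by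
    intro a b hab hbn
    constructor
    · intro h
      by_contra hr
      push_neg at hr
      obtain ⟨h1, h2⟩ := hr
      have hb1 : a + 1 < b := by
        rcases Nat.lt_or_ge (a+1) b with h' | h'
        · exact h'
        · have : b = a + 1 := by omega
          subst this
          exact absurd (Nat.mod_eq_of_lt hbn) h1
      have hne : ¬ (a = 0 ∧ b = n - 1) := by
        rintro ⟨rfl, rfl⟩
        apply h2
        have : n - 1 + 1 = n := by omega
        rw [this, Nat.mod_self]
      exact hchord a b hb1 hbn hne h
    · rintro (h1 | h2)
      · have h1' : a + 1 < n := by omega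
        rw [Nat.mod_eq_of_lt h1'] at h1
        subst h1
        exact hadj a h1'
      · rcases Nat.lt_or_ge (b+1) n with h' | h'
        · rw [Nat.mod_eq_of_lt h'] at h2; omega
        · have hb : b = n - 1 := by omega
          have ha : a = 0 := by
            have : b + 1 = n := by omega
            rw [this, Nat.mod_self] at h2; omega
          subst hb; subst ha
          exact hclose.symm
  apply hch n hn
  have hinj' : Function.Injective (fun i : Fin n => u i.val) := by
    intro i j hij
    rcases lt_trichotomy i.val j.val with h | h | h
    · exact absurd hij (hinj _ _ h j.isLt)
    · exact Fin.ext h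
    · exact absurd hij.symm (hinj _ _ h i.isLt)
  refine ⟨⟨fun i : Fin n => u i.val, hinj'⟩, fun a b => ?_⟩
  have hcyc : (cycleG n).Adj a b ↔ (a ≠ b ∧ ((a.val+1) % n = b.val ∨ (b.val+1) % n = a.val)) := by
    simp [cycleG, SimpleGraph.fromRel_adj]
  rw [hcyc]
  simp only [Function.Embedding.coeFn_mk]
  rcases lt_trichotomy a.val b.val with h | h | h
  · rw [aux a.val b.val h b.isLt]
    constructor
    · intro hh; exact ⟨fun hc => by simp [Fin.ext_iff, hc] at h, hh⟩
    · exact fun hh => hh.2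
  · have : a = b := Fin.ext h
    subst this
    simp [G.irrefl]
  · rw [adj_comm, aux b.val a.val h a.isLt]
    constructor
    · intro hh; exact ⟨fun hc => by simp [Fin.ext_iff, hc] at h, hh.symm⟩
    · exact fun hh => hh.2.symm

/-! ## sequences and minimal paths -/

def IsSeq (G : SimpleGraph V) (P : V → Prop) (x y : V) (m : ℕ) (w : ℕ → V) : Prop :=
  w 0 = x ∧ w m = y ∧ (∀ i, i < m → G.Adj (w i) (w (i+1))) ∧ (∀ i, 0 < i → i < m → P (w i))

lemma isSeq_one_adj {P : V → Prop} {x y : V} {w : ℕ → V} (h : IsSeq G P x y 1 w) :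
    G.Adj x y := by
  have := h.2.2.1 0 (by omega)
  rwa [h.1, h.2.1] at this

lemma splice_adj {P : V → Prop} {x y : V} {m : ℕ} {w : ℕ → V} (hw : IsSeq G P x y m w)
    {i j : ℕ} (hij : i < j) (hjm : j ≤ m) (hadj' : G.Adj (w i) (w j)) :
    ∃ w', IsSeq G P x y (m - (j - i) + 1) w' := by
  obtain ⟨h0, hm, hadj, hP⟩ := hw
  refine ⟨fun t => if t ≤ i then w t else w (t + (j - i) - 1), ?_, ?_, ?_, ?_⟩
  all_goals dsimp only
  · simp [h0]
  · have h1 : ¬ (m - (j - i) + 1 ≤ i) := by omega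
    rw [if_neg h1]
    rw [show m - (j - i) + 1 + (j - i) - 1 = m by omega]
    exact hm
  · intro t ht
    by_cases h1 : t + 1 ≤ i
    · rw [if_pos (by omega), if_pos h1]
      exact hadj t (by omega)
    · by_cases h2 : t ≤ i
      · -- t = i
        have hti : t = i := by omega
        rw [if_pos h2, if_neg h1, hti]
        rw [show i + 1 + (j - i) - 1 = j by omega]
        exact hadj'
      · rw [if_neg h2, if_neg h1]
        rw [show t + 1 + (j - i) - 1 = (t + (j - i) - 1) + 1 by omega]
        exact hadj _ (by omega)
  · intro t ht0 htm
    by_cases h2 : t ≤ i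
    · rw [if_pos h2]
      exact hP t ht0 (by omega)
    · rw [if_neg h2]
      exact hP _ (by omega) (by omega)

lemma splice_eq {P : V → Prop} {x y : V} {m : ℕ} {w : ℕ → V} (hw : IsSeq G P x y m w)
    {i j : ℕ} (hij : i < j) (hjm : j ≤ m) (heq : w i = w j) :
    ∃ w', IsSeq G P x y (m - (j - i)) w' := by
  obtain ⟨h0, hm, hadj, hP⟩ := hw
  refine ⟨fun t => if t ≤ i then w t else w (t + (j - i)), ?_, ?_, ?_, ?_⟩
  all_goals dsimp only
  · simp [h0]
  · by_cases h1 : m - (j - i) ≤ i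
    · have hji : j = m := by omega
      have hii : m - (j - i) = i := by omega
      rw [if_pos h1, hii, heq, hji]
      exact hm
    · rw [if_neg h1, show m - (j - i) + (j - i) = m by omega]
      exact hm
  · intro t ht
    by_cases h1 : t + 1 ≤ i
    · rw [if_pos (by omega), if_pos h1]
      exact hadj t (by omega)
    · by_cases h2 : t ≤ i
      · have hti : t = i := by omega
        rw [if_pos h2, if_neg h1, hti, heq]
        rw [show i + 1 + (j - i) = j + 1 by omega]
        exact hadj j (by omega)
      · rw [if_neg h2, if_neg h1]
        rw [show t + 1 + (j - i) = (t + (j - i)) + 1 by omega]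
        exact hadj _ (by omega)
  · intro t ht0 htm
    by_cases h2 : t ≤ i
    · rw [if_pos h2]
      exact hP t ht0 (by omega)
    · rw [if_neg h2]
      exact hP _ (by omega) (by omega)

open Classical in
/-- minimal path extraction -/
lemma minpath {P : V → Prop} {x y : V} (hxy : x ≠ y)
    (hsafe : (¬ P x ∧ ¬ P y) ∨ ¬ G.Adj x y)
    (hex : ∃ m, 2 ≤ m ∧ ∃ w, IsSeq G P x y m w) :
    ∃ m w, 2 ≤ m ∧ IsSeq G P x y m w ∧
      (∀ i j, i + 1 < j → j ≤ m → ¬(i = 0 ∧ j = m) → ¬ G.Adj (w i) (w j)) ∧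
      (∀ i j, i < j → j ≤ m → w i ≠ w j) := by
  classical
  set Q : ℕ → Prop := fun m => 2 ≤ m ∧ ∃ w, IsSeq G P x y m w with hQ
  have hexQ : ∃ m, Q m := hex
  set m := Nat.find hexQ with hmdef
  obtain ⟨hm2, w, hw⟩ := Nat.find_spec hexQ
  have hmin : ∀ k, k < m → ¬ Q k := fun k hk => Nat.find_min hexQ hk
  -- no sequence of smaller length ≥ 2; and length-1 seq handling
  have hshort : ∀ k, k < m → (∃ w', IsSeq G P x y k w') → k = 1 ∧ G.Adj x y := by
    intro k hk ⟨w', hw'⟩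
    rcases Nat.lt_or_ge k 2 with h2 | h2
    · interval_cases k
      · exact absurd (hw'.1.symm.trans hw'.2.1) hxy
      · exact ⟨rfl, isSeq_one_adj hw'⟩
    · exact absurd ⟨h2, w', hw'⟩ (hmin k hk)
  refine ⟨m, w, hm2, hw, ?_, ?_⟩
  · intro i j hij hjm hne hadj'
    obtain ⟨w', hw'⟩ := splice_adj hw (by omega : i < j) hjm hadj'
    have hlt : m - (j - i) + 1 < m := by omega
    have := hshort _ hlt ⟨w', hw'⟩
    omega
  · intro i j hij hjm heq
    obtain ⟨w', hw'⟩ := splice_eq hw hij hjm heq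
    have hlt : m - (j - i) < m := by omega
    rcases hsafe with ⟨hPx, hPy⟩ | hnadj
    · -- endpoints don't satisfy P
      by_cases hi0 : i = 0
      · subst hi0
        by_cases hjm' : j = m
        · subst hjm'
          apply hxy
          rw [← hw.1, ← hw.2.1]
          exact heq
        · apply hPx
          have hh : P (w j) := hw.2.2.2 j (by omega) (by omega)
          rwa [← heq, hw.1] at hh
      · by_cases hjm' : j = m
        · subst hjm'
          apply hPy
          have hh : P (w i) := hw.2.2.2 i (by omega) (by omega)
          rwa [heq, hw.2.1] at hh
        · have := hshort _ hlt ⟨w', hw'⟩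
          omega
    · have := hshort _ hlt ⟨w', hw'⟩
      exact hnadj this.2

lemma seq_of_walk : ∀ {x y : V} (p : G.Walk x y),
    ∃ w, IsSeq G (fun _ => True) x y p.length w := by
  intro x y p
  induction p with
  | nil => exact ⟨fun _ => _, rfl, by simp, fun i hi => by simp at hi, fun i h1 h2 => trivial⟩
  | @cons a b c h q ih =>
    obtain ⟨w, hw⟩ := ih
    refine ⟨fun t => if t = 0 then a else w (t - 1), ?_, ?_, ?_, fun i h1 h2 => trivial⟩
    all_goals dsimp only
    · simp
    · rw [SimpleGraph.Walk.length_cons, if_neg (by omega)]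
      simpa using hw.2.1
    · intro i hi
      rw [SimpleGraph.Walk.length_cons] at hi
      rcases Nat.eq_zero_or_pos i with h0 | h0
      · subst h0
        simpa [hw.1] using h
      · rw [if_neg (by omega), if_neg (by omega)]
        rw [show i + 1 - 1 = (i - 1) + 1 by omega]
        exact hw.2.2.1 (i - 1) (by omega)

/-! ## distance facts -/

lemma adj_dist_le (hconn : G.Connected) {z a b : V} (h : G.Adj a b) :
    G.dist z b ≤ G.dist z a + 1 := by
  refine le_trans (hconn.dist_triangle (v := a)) ?_
  have : G.dist a b ≤ 1 := by simpa using SimpleGraph.dist_le h.toWalk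
  omega

lemma not_adj_dist (hconn : G.Connected) {z a b : V} (h : G.dist z a + 1 < G.dist z b) :
    ¬ G.Adj a b := fun hadj => by have := adj_dist_le hconn (z := z) hadj; omega

lemma ne_of_dist {z a b : V} (h : G.dist z a ≠ G.dist z b) : a ≠ b := by
  rintro rfl; exact h rfl

lemma eq_of_dist_zero (hconn : G.Connected) {z a : V} (h : G.dist z a = 0) : a = z :=
  ((hconn z a).dist_eq_zero_iff.mp h).symm

lemma dist_getVert_le (hconn : G.Connected) {z a b : V} (p : G.Walk a b) (i : ℕ) :
    G.dist z (p.getVert i) ≤ G.dist z a + i := by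
  induction p generalizing i with
  | nil => simp [SimpleGraph.Walk.getVert]
  | @cons u c d h q ih =>
    rcases Nat.eq_zero_or_pos i with h0 | h0
    · subst h0; simp [SimpleGraph.Walk.getVert]
    · have : (SimpleGraph.Walk.cons h q).getVert i = q.getVert (i - 1) := by
        rw [show i = (i-1) + 1 by omega]
        simp [SimpleGraph.Walk.getVert]
      rw [this]
      calc G.dist z (q.getVert (i-1)) ≤ G.dist z c + (i - 1) := ih _
        _ ≤ (G.dist z u + 1) + (i - 1) := by
            have := adj_dist_le hconn (z := z) h
            omega
        _ ≤ G.dist z u + i := by omega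

lemma exists_parent (hconn : G.Connected) {z u : V} {j : ℕ} (hu : G.dist z u = j + 1) :
    ∃ t, G.Adj t u ∧ G.dist z t = j := by
  obtain ⟨p, hp⟩ := (hconn z u).exists_walk_length_eq_dist
  refine ⟨p.getVert j, ?_, ?_⟩
  · have : G.Adj (p.getVert j) (p.getVert (j+1)) := p.adj_getVert_succ (by omega)
    rwa [show j + 1 = p.length by omega, p.getVert_length] at this
  · have h1 : G.dist z (p.getVert j) ≤ j := by
      have := dist_getVert_le hconn p j (z := z)
      simpa [SimpleGraph.dist_self] using this
    have h2 : G.Adj (p.getVert j) u := by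
      have : G.Adj (p.getVert j) (p.getVert (j+1)) := p.adj_getVert_succ (by omega)
      rwa [show j + 1 = p.length by omega, p.getVert_length] at this
    have := adj_dist_le hconn (z := z) h2
    omega

/-- geodesic descent to the root -/
lemma descend (hconn : G.Connected) (z : V) :
    ∀ (n : ℕ) (u : V), G.dist z u = n →
      ∃ w : ℕ → V, w 0 = u ∧ (∀ i, i < n → G.Adj (w i) (w (i+1))) ∧
        (∀ i, i ≤ n → G.dist z (w i) = n - i) := by
  intro n
  induction n with
  | zero =>
    intro u hu
    exact ⟨fun _ => u, rfl, fun i hi => absurd hi (by omega),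
      fun i hi => by simpa [Nat.le_zero.mp hi] using hu⟩
  | succ n ih =>
    intro u hu
    obtain ⟨t, ht, htd⟩ := exists_parent hconn hu
    obtain ⟨w, hw0, hwadj, hwd⟩ := ih t htd
    refine ⟨fun i => if i = 0 then u else w (i - 1), by simp, ?_, ?_⟩
    all_goals dsimp only
    · intro i hi
      rcases Nat.eq_zero_or_pos i with h0 | h0
      · subst h0; simpa [hw0] using ht.symm
      · rw [if_neg (by omega), if_neg (by omega), show i + 1 - 1 = (i-1)+1 by omega]
        exact hwadj _ (by omega)
    · intro i hi
      rcases Nat.eq_zero_or_pos i with h0 | h0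
      · subst h0; simpa using hu
      · rw [if_neg (by omega)]

        rw [hwd (i-1) (by omega)]
        omega

/-! ## layer lemmas -/

/-- F3: two adjacent vertices on the same level have a common neighbour one level down. -/
lemma common_parent (hconn : G.Connected) (hch : Chordal G) (z : V) {j : ℕ} {p q : V}
    (hj : 1 ≤ j) (hp : G.dist z p = j) (hq : G.dist z q = j) (hadj : G.Adj p q) :
    ∃ t, G.Adj p t ∧ G.Adj q t ∧ G.dist z t = j - 1 := by
  -- build a path from p to q through lower levels
  obtain ⟨wp, hwp0, hwpadj, hwpd⟩ := descend hconn z j p hp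
  obtain ⟨wq, hwq0, hwqadj, hwqd⟩ := descend hconn z j q hq
  have hpz : wp j = z := eq_of_dist_zero hconn (by simpa using hwpd j le_rfl)
  have hqz : wq j = z := eq_of_dist_zero hconn (by simpa using hwqd j le_rfl)
  have hex : ∃ m, 2 ≤ m ∧ ∃ w, IsSeq G (fun u => G.dist z u < j) p q m w := by
    refine ⟨2*j, by omega, fun i => if i ≤ j then wp i else wq (2*j - i), ?_, ?_, ?_, ?_⟩
    all_goals dsimp only
    · rw [if_pos (by omega)]; exact hwp0
    · rw [if_neg (by omega), show 2*j - 2*j = 0 by omega]; exact hwq0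
    · intro i hi
      rcases Nat.lt_or_ge (i+1) (j+1) with h1 | h1
      · rw [if_pos (by omega), if_pos (by omega)]
        exact hwpadj i (by omega)
      · rcases Nat.eq_or_lt_of_le h1 with h2 | h2
        · -- i + 1 = j + 1, i.e. i = j
          rw [if_pos (by omega), if_neg (by omega), show i = j by omega, hpz,
            show 2*j - (j+1) = j - 1 by omega]
          have := hwqadj (j-1) (by omega)
          rw [show j - 1 + 1 = j by omega, hqz] at this
          exact this.symm
        · rw [if_neg (by omega), if_neg (by omega)]
          have := hwqadj (2*j - i - 1) (by omega)
          rw [show 2*j - i - 1 + 1 = 2*j - i by omega] at this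
          rw [show 2*j - (i+1) = 2*j - i - 1 by omega]
          exact this.symm
    · intro i h0 hm
      rcases Nat.lt_or_ge i (j+1) with h1 | h1
      · rw [if_pos (by omega), hwpd i (by omega)]; omega
      · rw [if_neg (by omega), hwqd (2*j - i) (by omega)]; omega
  obtain ⟨m, w, hm2, hw, hchord, hinj⟩ := minpath (G := G) hadj.ne
    (Or.inl ⟨by omega, by omega⟩) hex
  rcases Nat.lt_or_ge m 3 with h3 | h3
  · -- m = 2 : common neighbour
    have hm : m = 2 := by omega
    subst hm
    refine ⟨w 1, ?_, ?_, ?_⟩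
    · have := hw.2.2.1 0 (by omega); rwa [hw.1] at this
    · have := hw.2.2.1 1 (by omega)
      rw [hw.2.1] at this
      exact this.symm
    · have hlt : G.dist z (w 1) < j := hw.2.2.2 1 (by omega) (by omega)
      have : G.dist z p ≤ G.dist z (w 1) + 1 := by
        have h1 := hw.2.2.1 0 (by omega)
        rw [hw.1] at h1
        exact adj_dist_le hconn h1.symm
      omega
  · -- m ≥ 3 : chordless cycle of length m+1 ≥ 4
    exfalso
    apply cycle_of hch (n := m + 1) (by omega) w
    · intro a b hab hbn
      exact hinj a b hab (by omega)
    · intro i hi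
      exact hw.2.2.1 i (by omega)
    · rw [show m + 1 - 1 = m by omega, hw.1, hw.2.1]
      exact hadj.symm
    · intro a b hab hbn hne
      apply hchord a b hab (by omega)
      rintro ⟨h1, h2⟩
      exact hne ⟨h1, by omega⟩

/-- Lemma C: two nonadjacent same-level vertices cannot have a common neighbour one
level up (in a chordal graph). -/
lemma no_fork (hconn : G.Connected) (hch : Chordal G) (z : V) {j : ℕ} {v x y : V}
    (hj : 1 ≤ j) (hx : G.dist z x = j) (hy : G.dist z y = j) (hne : x ≠ y)
    (hnadj : ¬ G.Adj x y) (hvx : G.Adj v x) (hvy : G.Adj v y)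
    (hv : G.dist z v = j + 1) : False := by
  obtain ⟨wp, hwp0, hwpadj, hwpd⟩ := descend hconn z j x hx
  obtain ⟨wq, hwq0, hwqadj, hwqd⟩ := descend hconn z j y hy
  have hpz : wp j = z := eq_of_dist_zero hconn (by simpa using hwpd j le_rfl)
  have hqz : wq j = z := eq_of_dist_zero hconn (by simpa using hwqd j le_rfl)
  have hex : ∃ m, 2 ≤ m ∧ ∃ w, IsSeq G (fun u => G.dist z u < j) x y m w := by
    refine ⟨2*j, by omega, fun i => if i ≤ j then wp i else wq (2*j - i), ?_, ?_, ?_, ?_⟩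
    all_goals dsimp only
    · rw [if_pos (by omega)]; exact hwp0
    · rw [if_neg (by omega), show 2*j - 2*j = 0 by omega]; exact hwq0
    · intro i hi
      rcases Nat.lt_or_ge (i+1) (j+1) with h1 | h1
      · rw [if_pos (by omega), if_pos (by omega)]
        exact hwpadj i (by omega)
      · rcases Nat.eq_or_lt_of_le h1 with h2 | h2
        · rw [if_pos (by omega), if_neg (by omega), show i = j by omega, hpz,
            show 2*j - (j+1) = j - 1 by omega]
          have := hwqadj (j-1) (by omega)
          rw [show j - 1 + 1 = j by omega, hqz] at this
          exact this.symm
        · rw [if_neg (by omega), if_neg (by omega)]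
          have := hwqadj (2*j - i - 1) (by omega)
          rw [show 2*j - i - 1 + 1 = 2*j - i by omega] at this
          rw [show 2*j - (i+1) = 2*j - i - 1 by omega]
          exact this.symm
    · intro i h0 hm
      rcases Nat.lt_or_ge i (j+1) with h1 | h1
      · rw [if_pos (by omega), hwpd i (by omega)]; omega
      · rw [if_neg (by omega), hwqd (2*j - i) (by omega)]; omega
  obtain ⟨m, w, hm2, hw, hchord, hinj⟩ := minpath (G := G) hne (Or.inr hnadj) hex
  -- cycle x = w 0, ..., w m = y, v
  apply cycle_of hch (n := m + 2) (by omega) (fun i => if i ≤ m then w i else v)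
  · intro a b hab hbn
    try dsimp only
    by_cases hbm : b ≤ m
    · rw [if_pos (by omega), if_pos hbm]
      exact hinj a b hab hbm
    · rw [if_pos (by omega), if_neg hbm]
      -- w a ≠ v since levels differ
      refine ne_of_dist (G := G) (z := z) ?_
      have hda : G.dist z (w a) ≤ j := by
        rcases Nat.eq_zero_or_pos a with h0 | h0
        · subst h0; rw [hw.1]; omega
        · rcases Nat.eq_or_lt_of_le (show a ≤ m by omega) with h2 | h2
          · rw [h2, hw.2.1]; omega
          · have := hw.2.2.2 a h0 h2; omega
      omega
  · intro i hi
    try dsimp only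
    by_cases him : i + 1 ≤ m
    · rw [if_pos (by omega), if_pos him]
      exact hw.2.2.1 i (by omega)
    · have : i = m := by omega
      subst this
      rw [if_pos le_rfl, if_neg him, hw.2.1]
      exact hvy.symm
  · try dsimp only
    rw [show m + 2 - 1 = m + 1 by omega, if_neg (by omega), if_pos (by omega), hw.1]
    exact hvx
  · intro a b hab hbn hne'
    try dsimp only
    by_cases hbm : b ≤ m
    · rw [if_pos (by omega), if_pos hbm]
      by_cases hend : a = 0 ∧ b = m
      · rw [hend.1, hend.2, hw.1, hw.2.1]
        exact hnadj
      · exact hchord a b hab hbm hend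

    · have hbm1 : b = m + 1 := by omega
      rw [if_pos (by omega), if_neg hbm]
      -- a is internal (a ≠ 0 since ¬(a=0 ∧ b=m+1)), so dist (w a) < j, dist v = j+1
      have ha0 : a ≠ 0 := fun h => hne' ⟨h, by omega⟩
      have hint : G.dist z (w a) < j := hw.2.2.2 a (by omega) (by omega)
      intro hadj'
      have := adj_dist_le hconn (z := z) hadj'
      omega

/-- Lemma B: adjacent same-level vertices have the same down-neighbourhoods. -/
lemma down_eq (hconn : G.Connected) (hch : Chordal G) (hgem : ¬ HasInducedCopy gem G)
    (z : V) {j : ℕ} {p q x : V} (hp : G.dist z p = j) (hq : G.dist z q = j)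
    (hpq : G.Adj p q) (hx : G.Adj p x) (hxd : G.dist z x = j - 1) : G.Adj q x := by
  have hj : 1 ≤ j := by
    by_contra h
    have h0 : j = 0 := by omega
    subst h0
    have := eq_of_dist_zero hconn hp
    have := eq_of_dist_zero hconn hq
    exact G.irrefl (by rwa [‹p = z›, ‹q = z›] at hpq)
  obtain ⟨t, hpt, hqt, htd⟩ := common_parent hconn hch z hj hp hq hpq
  by_contra hqx
  have hxt : x ≠ t := by
    rintro rfl; exact hqx hqt
  -- j = 1 : then x = z = t, contradiction
  rcases Nat.eq_or_lt_of_le hj with hj1 | hj2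
  · exfalso
    apply hxt
    have h1 : G.dist z x = 0 := by omega
    have h2 : G.dist z t = 0 := by omega
    rw [eq_of_dist_zero hconn h1, eq_of_dist_zero hconn h2]
  -- x and t are adjacent, else no_fork at level j-1 with apex p
  have hxt' : G.Adj x t := by
    by_contra hxtn
    exact no_fork hconn hch z (j := j - 1) (by omega) hxd htd hxt hxtn hx hpt
      (by rw [show j - 1 + 1 = j by omega]; exact hp)
  -- common parent of x and t
  obtain ⟨q1, hxq1, htq1, hq1d⟩ := common_parent hconn hch z (j := j - 1) (by omega)
    hxd htd hxt'
  -- gem: induced path q - p - x - q1 with apex t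
  have hnq1q : ¬ G.Adj q q1 := fun h => not_adj_dist hconn (z := z) (by omega) h.symm
  have hnpq1 : ¬ G.Adj p q1 := fun h => not_adj_dist hconn (z := z) (by omega) h.symm
  exact gem_of hgem hpq.symm hx hxq1 hqx hnq1q hnpq1
    (ne_of_dist (G := G) (z := z) (a := q) (b := x) (by omega))
    (ne_of_dist (G := G) (z := z) (a := q) (b := q1) (by omega))
    (ne_of_dist (G := G) (z := z) (a := p) (b := q1) (by omega))
    hqt.symm hpt.symm hxt'.symm htq1

/-! ## connectivity after deletion, reach sets -/

lemma induce_adj_iff {s : Set V} {a b : s} : (G.induce s).Adj a b ↔ G.Adj a b := by simp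

lemma connected_del (hconn : G.Connected) (v : V) (hne : ∃ u : V, u ≠ v)
    (hN : ∀ a b, G.Adj v a → G.Adj v b → a ≠ b → (ha : a ≠ v) → (hb : b ≠ v) →
      (G.induce {u | u ≠ v}).Reachable ⟨a, ha⟩ ⟨b, hb⟩) :
    (G.induce {u | u ≠ v}).Connected := by
  have key : ∀ n {x y : V} (p : G.Walk x y), p.length ≤ n → (hx : x ≠ v) → (hy : y ≠ v) →
      (G.induce {u | u ≠ v}).Reachable ⟨x, hx⟩ ⟨y, hy⟩ := by
    intro n
    induction n with
    | zero =>
      intro x y p hp hx hy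
      cases p with
      | nil => exact Reachable.refl _
      | cons h q => simp at hp
    | succ n ih =>
      intro x y p hp hx hy
      cases p with
      | nil => exact Reachable.refl _
      | @cons _ c _ h q =>
        by_cases hc : c = v
        · cases q with
          | nil => exact absurd hc hy
          | @cons _ d _ h2 q2 =>
            have h2' : G.Adj v d := hc ▸ h2
            have h' : G.Adj x v := hc ▸ h
            have hd : d ≠ v := fun hh => G.irrefl (hh ▸ h2')
            by_cases hxd : x = d
            · subst hxd
              exact ih q2 (by simp at hp ⊢; omega) hx hy
            · exact (hN x d h'.symm h2' hxd hx hd).trans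
                (ih q2 (by simp at hp ⊢; omega) hd hy)
        · refine Reachable.trans ?_ (ih q (by simp at hp; omega) hc hy)
          exact SimpleGraph.Adj.reachable (by rw [induce_adj_iff]; exact h)
  rw [SimpleGraph.connected_iff]
  obtain ⟨u, hu⟩ := hne
  refine ⟨?_, ⟨⟨u, hu⟩⟩⟩
  rintro ⟨x, hx⟩ ⟨y, hy⟩
  obtain ⟨p⟩ := hconn x y
  exact key p.length p le_rfl hx hy

/-- the reachability set of a vertex -/
def RS {W : Type*} (H : SimpleGraph W) (a : W) : Set W := {b | H.Reachable a b}

lemma RS_self {W : Type*} (H : SimpleGraph W) (a : W) : a ∈ RS H a := Reachable.refl a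

lemma RS_closed {W : Type*} {H : SimpleGraph W} {a b c : W} (hb : b ∈ RS H a)
    (h : H.Adj b c) : c ∈ RS H a := hb.trans h.reachable

lemma RS_connected {W : Type*} (H : SimpleGraph W) (a : W) :
    (H.induce (RS H a)).Connected := by
  have key : ∀ {x y : W} (p : H.Walk x y) (hx : x ∈ RS H a),
      ∃ hy : y ∈ RS H a, (H.induce (RS H a)).Reachable ⟨x, hx⟩ ⟨y, hy⟩ := by
    intro x y p
    induction p with
    | nil => exact fun hx => ⟨hx, Reachable.refl _⟩
    | @cons _ c _ h q ih =>
      intro hx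
      have hc : c ∈ RS H a := RS_closed hx h
      obtain ⟨hy, hr⟩ := ih hc
      exact ⟨hy, Reachable.trans (SimpleGraph.Adj.reachable
        (by rw [induce_adj_iff]; exact h)) hr⟩
  rw [SimpleGraph.connected_iff]
  refine ⟨?_, ⟨⟨a, RS_self H a⟩⟩⟩
  rintro ⟨x, hx⟩ ⟨y, hy⟩
  obtain ⟨p⟩ := (hx.symm.trans hy : H.Reachable x y)
  obtain ⟨hy', hr⟩ := key p hx
  have : (⟨y, hy'⟩ : RS H a) = ⟨y, hy⟩ := rfl
  exact this ▸ hr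

/-! ## twins in connected P4-free C4-free graphs -/

def P4free {W : Type*} (H : SimpleGraph W) : Prop :=
  ∀ a b c d : W, H.Adj a b → H.Adj b c → H.Adj c d → ¬ H.Adj a c → ¬ H.Adj a d →
    ¬ H.Adj b d → a ≠ c → a ≠ d → b ≠ d → False

def C4free {W : Type*} (H : SimpleGraph W) : Prop :=
  ∀ a b c d : W, H.Adj a b → H.Adj b c → H.Adj c d → H.Adj d a → ¬ H.Adj a c →
    ¬ H.Adj b d → a ≠ c → b ≠ d → False

lemma tp_twins_aux : ∀ (N : ℕ) {W : Type} [Finite W] (H : SimpleGraph W),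
    Nat.card W ≤ N → H.Connected → 2 ≤ Nat.card W → P4free H → C4free H →
    (∃ x y, TT H x y) ∨ (∃ x y, FT H x y) := by
  intro N
  induction N with
  | zero =>
    intro W _ H hcard _ h2 _ _
    omega
  | succ N ih =>
    intro W _ H hcard hconn h2 hp4 hc4
    have : Nonempty W := Nat.card_pos_iff.mp (by omega) |>.1
    -- a vertex of maximum degree
    obtain ⟨u, hu⟩ := Finite.exists_max (fun x : W => {y | H.Adj x y}.ncard)
    -- u is universal
    have huniv : ∀ x : W, x ≠ u → H.Adj u x := by
      intro x hxu
      by_contra hux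
      obtain ⟨p⟩ := hconn u x
      obtain ⟨w0, hw0⟩ := seq_of_walk p
      have hex : ∃ m, 2 ≤ m ∧ ∃ w, IsSeq H (fun _ => True) u x m w := by
        refine ⟨p.length, ?_, w0, hw0⟩
        rcases Nat.lt_or_ge p.length 2 with hlen | hlen
        · interval_cases hlen' : p.length
          · exact absurd (hw0.1.symm.trans hw0.2.1) (Ne.symm hxu)
          · exact absurd (isSeq_one_adj hw0) hux
        · exact hlen
      obtain ⟨m, w, hm2, hw, hchord, hinj⟩ := minpath (G := H) (Ne.symm hxu)
        (Or.inr hux) hex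
      rcases Nat.lt_or_ge m 3 with h3 | h3
      · -- m = 2 : common neighbour y of u and x; degree contradiction
        have hm : m = 2 := by omega
        subst hm
        set y := w 1 with hy
        have huy : H.Adj u y := by have := hw.2.2.1 0 (by omega); rwa [hw.1] at this
        have hyx : H.Adj y x := by have := hw.2.2.1 1 (by omega); rwa [hw.2.1] at this
        have hsub : ∀ t, H.Adj u t → t ≠ y → H.Adj y t := by
          intro t hut hty
          by_contra htyn
          have htx : t ≠ x := fun hh => hux (hh ▸ hut)
          by_cases htx' : H.Adj t x
          · exact hc4 u t x y hut htx' hyx.symm huy.symm hux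
              (fun hh => htyn hh.symm) (Ne.symm hxu) hty
          · exact hp4 t u y x hut.symm huy hyx (fun hh => htyn hh.symm) htx' hux
              hty htx (Ne.symm hxu)
        -- now N(u) \ {y} ∪ {u, x} ⊆ N(y), contradiction with maximality
        exfalso
        have hsub2 : ({t | H.Adj u t} \ {y}) ∪ {u, x} ⊆ {t | H.Adj y t} := by
          rintro t (⟨ht1, ht2⟩ | ht)
          · exact hsub t ht1 ht2
          · rcases ht with rfl | rfl
            · exact huy.symm
            · exact hyx
        have hfin : ({t | H.Adj u t} \ {y} : Set W).Finite := Set.toFinite _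
        have hdisj : Disjoint ({t | H.Adj u t} \ {y}) ({u, x} : Set W) := by
          rw [Set.disjoint_right]
          rintro t (rfl | rfl)
          · rintro ⟨ht, -⟩; exact H.irrefl ht
          · rintro ⟨ht, -⟩; exact hux ht
        have hcard2 : (({t | H.Adj u t} \ {y}) ∪ {u, x} : Set W).ncard
            = ({t | H.Adj u t} \ {y} : Set W).ncard + 2 := by
          rw [Set.ncard_union_eq hdisj (Set.toFinite _) (Set.toFinite _),
            Set.ncard_pair (Ne.symm hxu)]
        have hyN : y ∈ {t | H.Adj u t} := huy
        have hd1 : ({t | H.Adj u t} \ {y}).ncard + 1 = {t | H.Adj u t}.ncard :=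
          Set.ncard_diff_singleton_add_one hyN (Set.toFinite _)
        have hle : (({t | H.Adj u t} \ {y}) ∪ {u, x}).ncard ≤ {t | H.Adj y t}.ncard :=
          Set.ncard_le_ncard hsub2 (Set.toFinite _)
        have hmax := hu y
        omega
      · -- m ≥ 3 : induced P4
        exact hp4 (w 0) (w 1) (w 2) (w 3)
          (hw.2.2.1 0 (by omega)) (hw.2.2.1 1 (by omega)) (hw.2.2.1 2 (by omega))
          (hchord 0 2 (by omega) (by omega) (by omega))
          (by
            by_cases hm3 : m = 3
            · have h31 : w 3 = x := by rw [← hm3]; exact hw.2.1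
              rw [hw.1, h31]; exact hux
            · exact hchord 0 3 (by omega) (by omega) (by omega))
          (hchord 1 3 (by omega) (by omega) (by omega))
          (hinj 0 2 (by omega) (by omega)) (hinj 0 3 (by omega) (by omega))
          (hinj 1 3 (by omega) (by omega))
    -- u is universal; now split on whether there is an edge avoiding u
    have hcardW' : ({t : W | t ≠ u}).ncard = Nat.card W - 1 := by
      have h1 : ({t : W | t ≠ u} : Set W) = {u}ᶜ := by ext t; simp
      have h2 := Set.ncard_add_ncard_compl ({u} : Set W)
      rw [Set.ncard_singleton] at h2
      rw [h1]
      omega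
    by_cases hedge : ∃ x y : W, x ≠ u ∧ y ≠ u ∧ H.Adj x y
    · obtain ⟨x0, y0, hx0, hy0, hxy0⟩ := hedge
      set W' : Set W := {t | t ≠ u} with hW'
      set H' : SimpleGraph W' := H.induce W' with hH'
      have hx0' : x0 ∈ W' := hx0
      set S : Set W' := RS H' ⟨x0, hx0'⟩ with hS
      set K : SimpleGraph S := H'.induce S with hK
      have hKconn : K.Connected := RS_connected H' ⟨x0, hx0'⟩
      have hKadj : ∀ a b : S, K.Adj a b ↔ H.Adj a.1.1 b.1.1 := by
        intro a b
        rw [hK, induce_adj_iff, hH', induce_adj_iff]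
      have hy0S : (⟨y0, hy0⟩ : W') ∈ S :=
        RS_closed (RS_self H' ⟨x0, hx0'⟩) (by rw [hH', induce_adj_iff]; exact hxy0)
      have hcardS : Nat.card S ≤ Nat.card W - 1 := by
        rw [Nat.card_coe_set_eq]
        calc S.ncard ≤ (Set.univ : Set W').ncard := Set.ncard_le_ncard (Set.subset_univ _)
          _ = Nat.card W' := Set.ncard_univ _
          _ = W'.ncard := Nat.card_coe_set_eq _
          _ = Nat.card W - 1 := hcardW'
      have hcardS2 : 2 ≤ Nat.card S := by
        rw [Nat.card_coe_set_eq]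
        show 1 < S.ncard
        rw [Set.one_lt_ncard_iff (Set.toFinite _)]
        exact ⟨⟨x0, hx0'⟩, ⟨y0, hy0⟩, RS_self H' ⟨x0, hx0'⟩, hy0S,
          fun hh => H.ne_of_adj hxy0 (congrArg Subtype.val hh)⟩
      have hclosed : ∀ (a : S) (t : W'), H'.Adj a.1 t → t ∈ S :=
        fun a t h => RS_closed a.2 h
      have hKp4 : P4free K := by
        intro a b c d h1 h2 h3 h4 h5 h6 h7 h8 h9
        exact hp4 a.1.1 b.1.1 c.1.1 d.1.1 ((hKadj a b).mp h1) ((hKadj b c).mp h2)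
          ((hKadj c d).mp h3) (fun hh => h4 ((hKadj a c).mpr hh))
          (fun hh => h5 ((hKadj a d).mpr hh)) (fun hh => h6 ((hKadj b d).mpr hh))
          (fun hh => h7 (Subtype.ext (Subtype.ext hh)))
          (fun hh => h8 (Subtype.ext (Subtype.ext hh)))
          (fun hh => h9 (Subtype.ext (Subtype.ext hh)))
      have hKc4 : C4free K := by
        intro a b c d h1 h2 h3 h4 h5 h6 h7 h8
        exact hc4 a.1.1 b.1.1 c.1.1 d.1.1 ((hKadj a b).mp h1) ((hKadj b c).mp h2)
          ((hKadj c d).mp h3) ((hKadj d a).mp h4)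
          (fun hh => h5 ((hKadj a c).mpr hh)) (fun hh => h6 ((hKadj b d).mpr hh))
          (fun hh => h7 (Subtype.ext (Subtype.ext hh)))
          (fun hh => h8 (Subtype.ext (Subtype.ext hh)))
      -- the key translation between K-adjacency and H-adjacency at a vertex of S
      have htrans : ∀ (a : S) (t : W), t ≠ u → a.1.1 ≠ t →
          (H.Adj a.1.1 t ↔ ∃ (ht : t ∈ W') (htS : (⟨t, ht⟩ : W') ∈ S),
            K.Adj a ⟨⟨t, ht⟩, htS⟩) := by
        intro a t htu hat
        constructor
        · intro h
          have ht : t ∈ W' := htu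
          have hadj' : H'.Adj a.1 ⟨t, ht⟩ := by rw [hH', induce_adj_iff]; exact h
          have htS : (⟨t, ht⟩ : W') ∈ S := hclosed a ⟨t, ht⟩ hadj'
          exact ⟨ht, htS, by rw [hKadj]; exact h⟩
        · rintro ⟨ht, htS, hadj'⟩
          exact (hKadj a ⟨⟨t, ht⟩, htS⟩).mp hadj'
      rcases ih K (by omega) hKconn hcardS2 hKp4 hKc4 with ⟨x, y, hxy⟩ | ⟨x, y, hxy⟩
      · left
        refine ⟨x.1.1, y.1.1, (hKadj x y).mp hxy.1, ?_⟩
        intro t htx hty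
        by_cases htu : t = u
        · subst htu
          constructor
          · intro _; exact (huniv y.1.1 y.1.2).symm
          · intro _; exact (huniv x.1.1 x.1.2).symm
        · constructor
          · intro h
            obtain ⟨ht, htS, hadj'⟩ := (htrans x t htu (Ne.symm htx)).mp h
            have hKyt : K.Adj y ⟨⟨t, ht⟩, htS⟩ := by
              refine (hxy.2 ⟨⟨t, ht⟩, htS⟩ ?_ ?_).mp hadj'
              · exact fun hh => htx (congrArg (fun z : S => z.1.1) hh)
              · exact fun hh => hty (congrArg (fun z : S => z.1.1) hh)
            exact (hKadj y _).mp hKyt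
          · intro h
            obtain ⟨ht, htS, hadj'⟩ := (htrans y t htu (Ne.symm hty)).mp h
            have hKxt : K.Adj x ⟨⟨t, ht⟩, htS⟩ := by
              refine (hxy.2 ⟨⟨t, ht⟩, htS⟩ ?_ ?_).mpr hadj'
              · exact fun hh => htx (congrArg (fun z : S => z.1.1) hh)
              · exact fun hh => hty (congrArg (fun z : S => z.1.1) hh)
            exact (hKadj x _).mp hKxt
      · right
        refine ⟨x.1.1, y.1.1, fun hh => hxy.1 (Subtype.ext (Subtype.ext hh)),
          fun hh => hxy.2.1 ((hKadj x y).mpr hh), ?_⟩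
        intro t
        by_cases htu : t = u
        · subst htu
          constructor
          · intro _; exact (huniv y.1.1 y.1.2).symm
          · intro _; exact (huniv x.1.1 x.1.2).symm
        · constructor
          · intro h
            have hxt : x.1.1 ≠ t := H.ne_of_adj h
            obtain ⟨ht, htS, hadj'⟩ := (htrans x t htu hxt).mp h
            exact (hKadj y _).mp ((hxy.2.2 ⟨⟨t, ht⟩, htS⟩).mp hadj')
          · intro h
            have hyt : y.1.1 ≠ t := H.ne_of_adj h
            obtain ⟨ht, htS, hadj'⟩ := (htrans y t htu hyt).mp h
            exact (hKadj x _).mp ((hxy.2.2 ⟨⟨t, ht⟩, htS⟩).mpr hadj')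
    · -- no edge among non-u vertices
      push_neg at hedge
      by_cases hc2 : Nat.card W ≤ 2
      · -- exactly two vertices : u and one other, true twins
        obtain ⟨x, hx⟩ : ∃ x : W, x ≠ u := by
          by_contra hno
          push_neg at hno
          have : Nat.card W = 1 := by
            rw [Nat.card_eq_one_iff_exists]
            exact ⟨u, fun t => hno t⟩
          omega
        left
        refine ⟨u, x, huniv x hx, ?_⟩
        intro t htu htx
        exfalso
        have h3 : ({u, x, t} : Set W).ncard = 3 := by
          rw [Set.ncard_insert_of_notMem (by simp [Ne.symm hx, Ne.symm htu]),
            Set.ncard_pair (Ne.symm htx)]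
        have hle : ({u, x, t} : Set W).ncard ≤ Nat.card W := by
          rw [← Set.ncard_univ]
          exact Set.ncard_le_ncard (Set.subset_univ _)
        omega
      · -- at least 3 vertices : two non-u vertices are false twins
        push_neg at hc2
        obtain ⟨x, y, hx, hy, hxy⟩ : ∃ x y : W, x ∈ ({t : W | t ≠ u}) ∧
            y ∈ ({t : W | t ≠ u}) ∧ x ≠ y := by
          rw [← Set.one_lt_ncard_iff (Set.toFinite _), hcardW']
          omega
        right
        refine ⟨x, y, hxy, hedge x y hx hy, ?_⟩
        intro t
        by_cases htu : t = u
        · subst htu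
          constructor
          · intro _; exact (huniv y hy).symm
          · intro _; exact (huniv x hx).symm
        · constructor
          · intro h; exact absurd h (hedge x t hx htu)
          · intro h; exact absurd h (hedge y t hy htu)

/-- an induced 4-cycle contradicts chordality -/
lemma c4_of (hch : Chordal G) {a b c d : V}
    (hab : G.Adj a b) (hbc : G.Adj b c) (hcd : G.Adj c d) (hda : G.Adj d a)
    (hac : ¬ G.Adj a c) (hbd : ¬ G.Adj b d) (hac' : a ≠ c) (hbd' : b ≠ d) : False := by
  apply cycle_of hch (n := 4) le_rfl
    (fun i => if i = 0 then a else if i = 1 then b else if i = 2 then c else d)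
  · intro i j hij hj
    have hi : i < 3 := by omega
    interval_cases i <;> interval_cases j <;> simp_all <;>
      first
        | exact G.ne_of_adj hab
        | exact G.ne_of_adj hbc
        | exact G.ne_of_adj hcd
        | exact fun hh => G.ne_of_adj hda hh.symm
        | exact hac'
        | exact hbd'
  · intro i hi
    have : i < 3 := by omega
    interval_cases i <;> simp_all
  · simpa using hda
  · intro i j hij hj hne
    have : i < 2 := by omega
    interval_cases i <;> interval_cases j <;> simp_all

end Pto

open Pto

/-- Every finite connected chordal gem-free graph with at least two vertices has a
pendant vertex, a true twin pair, or a false twin pair. -/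
lemma exists_reduction : ∀ (n : ℕ) {V : Type} [Finite V] (G : SimpleGraph V),
    Nat.card V ≤ n → G.Connected → Chordal G → ¬ HasInducedCopy gem G →
    2 ≤ Nat.card V →
    (∃ v w, Pend G v w) ∨ (∃ v w, TT G v w) ∨ (∃ v w, FT G v w) := by
  intro n
  induction n with
  | zero => intro V _ G hcard _ _ _ h2; omega
  | succ n ih =>
    intro V _ G hcard hconn hch hgem h2
    by_contra hcon
    simp only [not_or, not_exists] at hcon
    obtain ⟨hP, hT, hF⟩ := hcon
    haveI hNE : Nonempty V := Nat.card_pos_iff.mp (by omega) |>.1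
    have z : V := Classical.choice hNE
    set lvl : V → ℕ := fun u => G.dist z u with hlvl
    obtain ⟨vm, hvm⟩ := Finite.exists_max lvl
    set k : ℕ := lvl vm with hk
    have hk1 : 1 ≤ k := by
      by_contra hk0
      have : Nat.card V = 1 := by
        rw [Nat.card_eq_one_iff_exists]
        refine ⟨z, fun u => eq_of_dist_zero hconn ?_⟩
        have h1 : lvl u ≤ k := hvm u
        have h2 : lvl u = G.dist z u := rfl
        omega
      omega
    by_cases hedge : ∃ x y : V, lvl x = k ∧ lvl y = k ∧ G.Adj x y
    · -- Case 1: an edge in the top layer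
      obtain ⟨x, y, hxk, hyk, hxy⟩ := hedge
      set Ltop : Set V := {u | lvl u = k} with hLtop
      have hx' : x ∈ Ltop := hxk
      have hy' : y ∈ Ltop := hyk
      set H : SimpleGraph Ltop := G.induce Ltop with hH
      set S : Set Ltop := RS H ⟨x, hx'⟩ with hS
      set K : SimpleGraph S := H.induce S with hK
      have hKconn : K.Connected := RS_connected H ⟨x, hx'⟩
      have hKadj : ∀ a b : S, K.Adj a b ↔ G.Adj a.1.1 b.1.1 := by
        intro a b
        rw [hK, induce_adj_iff, hH, induce_adj_iff]
      have hy'S : (⟨y, hy'⟩ : Ltop) ∈ S :=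
        RS_closed (RS_self H ⟨x, hx'⟩) (by rw [hH, induce_adj_iff]; exact hxy)
      have hcardS2 : 2 ≤ Nat.card S := by
        rw [Nat.card_coe_set_eq]
        show 1 < S.ncard
        rw [Set.one_lt_ncard_iff (Set.toFinite _)]
        exact ⟨⟨x, hx'⟩, ⟨y, hy'⟩, RS_self H ⟨x, hx'⟩, hy'S,
          fun hh => G.ne_of_adj hxy (congrArg Subtype.val hh)⟩
      -- adjacent same-level vertices have the same down-neighbours, propagated
      have hstep : ∀ p q : Ltop, H.Adj p q → ∀ t : V, lvl t = k - 1 →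
          (G.Adj p.1 t ↔ G.Adj q.1 t) := by
        intro p q hpq t ht
        have hpq' : G.Adj p.1 q.1 := by rwa [hH, induce_adj_iff] at hpq
        have htd : G.dist z t = k - 1 := ht
        constructor
        · intro h
          exact down_eq hconn hch hgem z (j := k) p.2 q.2 hpq' h htd
        · intro h
          exact down_eq hconn hch hgem z (j := k) q.2 p.2 hpq'.symm h htd
      have hkey : ∀ (p q : Ltop), H.Reachable p q → ∀ t : V, lvl t = k - 1 →
          (G.Adj p.1 t ↔ G.Adj q.1 t) := by
        intro p q hr
        obtain ⟨w⟩ := hr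
        induction w with
        | nil => exact fun t ht => Iff.rfl
        | @cons p' q' r' h wtail ih =>
          exact fun t ht => (hstep p' q' h t ht).trans (ih t ht)
      -- a common neighbour below the whole component
      have hxd : G.dist z x = (k - 1) + 1 := by
        have h2 : lvl x = G.dist z x := rfl
        omega
      obtain ⟨t₀, ht₀x, ht₀d⟩ := exists_parent hconn (u := x) hxd
      have hlt₀ : lvl t₀ = k - 1 := ht₀d
      have ht₀all : ∀ a : S, G.Adj a.1.1 t₀ :=
        fun a => (hkey ⟨x, hx'⟩ a.1 a.2 t₀ hlt₀).mp ht₀x.symm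
      -- neighbours of S-vertices are at level k or k-1
      have hnbr1 : ∀ (a : S) (t : V), G.Adj a.1.1 t → lvl t = k ∨ lvl t = k - 1 := by
        intro a t h
        have h1 : lvl t ≤ k := hvm t
        have h2 : G.dist z a.1.1 ≤ G.dist z t + 1 := adj_dist_le hconn (z := z) h.symm
        have h3 : lvl a.1.1 = G.dist z a.1.1 := rfl
        have h4 : lvl t = G.dist z t := rfl
        have h5 : lvl a.1.1 = k := a.1.2
        omega
      have hKp4 : P4free K := by
        intro a b c d h1 h2 h3 h4 h5 h6 h7 h8 h9
        exact gem_of hgem ((hKadj a b).mp h1) ((hKadj b c).mp h2) ((hKadj c d).mp h3)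
          (fun hh => h4 ((hKadj a c).mpr hh)) (fun hh => h5 ((hKadj a d).mpr hh))
          (fun hh => h6 ((hKadj b d).mpr hh))
          (fun hh => h7 (Subtype.ext (Subtype.ext hh)))
          (fun hh => h8 (Subtype.ext (Subtype.ext hh)))
          (fun hh => h9 (Subtype.ext (Subtype.ext hh)))
          (ht₀all a).symm (ht₀all b).symm (ht₀all c).symm (ht₀all d).symm
      have hKc4 : C4free K := by
        intro a b c d h1 h2 h3 h4 h5 h6 h7 h8
        exact c4_of hch ((hKadj a b).mp h1) ((hKadj b c).mp h2) ((hKadj c d).mp h3)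
          ((hKadj d a).mp h4)
          (fun hh => h5 ((hKadj a c).mpr hh)) (fun hh => h6 ((hKadj b d).mpr hh))
          (fun hh => h7 (Subtype.ext (Subtype.ext hh)))
          (fun hh => h8 (Subtype.ext (Subtype.ext hh)))
      have hclosedS : ∀ (a : S) (t : Ltop), H.Adj a.1 t → t ∈ S :=
        fun a t h => RS_closed a.2 h
      -- the translation between G-adjacency at an S vertex and K-adjacency
      have htrans : ∀ (a : S) (t : V), lvl t = k →
          (G.Adj a.1.1 t ↔ ∃ (ht : t ∈ Ltop) (htS : (⟨t, ht⟩ : Ltop) ∈ S),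
            K.Adj a ⟨⟨t, ht⟩, htS⟩) := by
        intro a t hlt
        constructor
        · intro h
          have ht : t ∈ Ltop := hlt
          have hadj' : H.Adj a.1 ⟨t, ht⟩ := by rw [hH, induce_adj_iff]; exact h
          exact ⟨ht, hclosedS a ⟨t, ht⟩ hadj', by rw [hKadj]; exact h⟩
        · rintro ⟨ht, htS, hadj'⟩
          exact (hKadj a ⟨⟨t, ht⟩, htS⟩).mp hadj'
      -- now apply the twin lemma inside the component
      rcases tp_twins_aux (Nat.card S) K le_rfl hKconn hcardS2 hKp4 hKc4 with
        ⟨x1, y1, hxy1⟩ | ⟨x1, y1, hxy1⟩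
      · -- true twins in K lift to true twins in G
        refine hT x1.1.1 y1.1.1 ⟨(hKadj x1 y1).mp hxy1.1, ?_⟩
        intro t htx hty
        by_cases hlt : lvl t = k
        · by_cases htS : (⟨t, hlt⟩ : Ltop) ∈ S
          · have hne1 : (⟨⟨t, hlt⟩, htS⟩ : S) ≠ x1 :=
              fun hh => htx (congrArg (fun s : S => s.1.1) hh)
            have hne2 : (⟨⟨t, hlt⟩, htS⟩ : S) ≠ y1 :=
              fun hh => hty (congrArg (fun s : S => s.1.1) hh)
            have := hxy1.2 ⟨⟨t, hlt⟩, htS⟩ hne1 hne2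
            rw [hKadj, hKadj] at this
            exact this
          · constructor
            · intro h
              obtain ⟨ht, htS', hadj'⟩ := (htrans x1 t hlt).mp h
              exact absurd htS' htS
            · intro h
              obtain ⟨ht, htS', hadj'⟩ := (htrans y1 t hlt).mp h
              exact absurd htS' htS
        · constructor
          · intro h
            have hlt' : lvl t = k - 1 := (hnbr1 x1 t h).resolve_left hlt
            exact (hkey x1.1 y1.1 (x1.2.symm.trans y1.2) t hlt').mp h
          · intro h
            have hlt' : lvl t = k - 1 := (hnbr1 y1 t h).resolve_left hlt
            exact (hkey x1.1 y1.1 (x1.2.symm.trans y1.2) t hlt').mpr h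
      · -- false twins in K lift to false twins in G
        refine hF x1.1.1 y1.1.1 ⟨fun hh => hxy1.1 (Subtype.ext (Subtype.ext hh)),
          fun hh => hxy1.2.1 ((hKadj x1 y1).mpr hh), ?_⟩
        intro t
        by_cases hlt : lvl t = k
        · by_cases htS : (⟨t, hlt⟩ : Ltop) ∈ S
          · have := hxy1.2.2 ⟨⟨t, hlt⟩, htS⟩
            rw [hKadj, hKadj] at this
            exact this
          · constructor
            · intro h
              obtain ⟨ht, htS', hadj'⟩ := (htrans x1 t hlt).mp h
              exact absurd htS' htS
            · intro h
              obtain ⟨ht, htS', hadj'⟩ := (htrans y1 t hlt).mp h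
              exact absurd htS' htS
        · constructor
          · intro h
            have hlt' : lvl t = k - 1 := (hnbr1 x1 t h).resolve_left hlt
            exact (hkey x1.1 y1.1 (x1.2.symm.trans y1.2) t hlt').mp h
          · intro h
            have hlt' : lvl t = k - 1 := (hnbr1 y1 t h).resolve_left hlt
            exact (hkey x1.1 y1.1 (x1.2.symm.trans y1.2) t hlt').mpr h
    · -- Case 2: top layer is independent
      push_neg at hedge
      -- every neighbour of a top-layer vertex is one level down
      have hnbr : ∀ v, lvl v = k → ∀ t, G.Adj v t → lvl t = k - 1 := by
        intro v hv t ht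
        have h1 : lvl t ≤ k := hvm t
        have h2 : lvl v ≤ lvl t + 1 := by
          have := adj_dist_le hconn (z := z) ht.symm
          simpa [hlvl] using this
        have h3 : lvl t ≠ k := fun hh => hedge v t hv hh ht
        omega
      -- top-layer neighbourhoods are cliques
      have hclq : ∀ v, lvl v = k → ∀ a b, G.Adj v a → G.Adj v b → a ≠ b → G.Adj a b := by
        intro v hv a b hva hvb hne'
        by_contra hnadj
        have hla : lvl a = k - 1 := hnbr v hv a hva
        have hlb : lvl b = k - 1 := hnbr v hv b hvb
        rcases Nat.eq_or_lt_of_le hk1 with hk1' | hk2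
        · -- k = 1 : a = b = z
          apply hne'
          have h1 : lvl a = 0 := by omega
          have h2 : lvl b = 0 := by omega
          rw [eq_of_dist_zero hconn h1, eq_of_dist_zero hconn h2]
        · exact no_fork hconn hch z (j := k - 1) (by omega) hla hlb hne' hnadj hva hvb
            (by rw [show k - 1 + 1 = k by omega]; exact hv)
      -- every top-layer vertex has at least two neighbours
      have htwo : ∀ v, lvl v = k → ∃ a b, G.Adj v a ∧ G.Adj v b ∧ a ≠ b := by
        intro v hv
        have hvd : G.dist z v = (k - 1) + 1 := by
          have h2 : lvl v = G.dist z v := rfl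
          omega
        obtain ⟨t, htv, htd⟩ := exists_parent hconn (u := v) hvd
        by_contra hone
        push_neg at hone
        refine hP v t ⟨htv.symm, fun s hs => ?_⟩
        exact (hone t s htv.symm hs).symm
      -- choose v in the top layer with minimal neighbourhood
      obtain ⟨v, hvk, hvmin⟩ := Set.exists_min_image {u | lvl u = k}
        (fun u => {t | G.Adj u t}.ncard) (Set.toFinite _) ⟨vm, rfl⟩
      obtain ⟨a0, b0, hva0, hvb0, hab0⟩ := htwo v hvk
      have hk2 : 2 ≤ k := by
        by_contra hkk
        have h1 : lvl a0 = 0 := by have := hnbr v hvk a0 hva0; omega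
        have h2 : lvl b0 = 0 := by have := hnbr v hvk b0 hvb0; omega
        exact hab0 (by rw [eq_of_dist_zero hconn h1, eq_of_dist_zero hconn h2])
      have hzv : z ≠ v := by
        intro hh
        rw [← hh] at hvk
        simp [hlvl, SimpleGraph.dist_self] at hvk
        omega
      -- remove v
      have hG'conn : (G.induce {u | u ≠ v}).Connected := by
        refine connected_del hconn v ⟨z, hzv⟩ ?_
        intro p q hvp hvq hpq hp hq
        exact SimpleGraph.Adj.reachable
          (by rw [induce_adj_iff]; exact hclq v hvk p q hvp hvq hpq)
      have hcard' : Nat.card {u | u ≠ v} = Nat.card V - 1 := by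
        rw [Nat.card_coe_set_eq]
        have h1 : ({t : V | t ≠ v} : Set V) = {v}ᶜ := by ext t; simp
        have h2 := Set.ncard_add_ncard_compl ({v} : Set V)
        rw [Set.ncard_singleton] at h2
        rw [h1]
        omega
      have hcard3 : 3 ≤ Nat.card V := by
        have hav : a0 ≠ v := fun hh => G.irrefl (hh ▸ hva0)
        have hbv : b0 ≠ v := fun hh => G.irrefl (hh ▸ hvb0)
        have h3 : ({v, a0, b0} : Set V).ncard = 3 := by
          rw [Set.ncard_insert_of_notMem (by simp [Ne.symm hav, Ne.symm hbv]),
            Set.ncard_pair hab0]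
        have hle : ({v, a0, b0} : Set V).ncard ≤ Nat.card V := by
          rw [← Set.ncard_univ]
          exact Set.ncard_le_ncard (Set.subset_univ _)
        omega
      rcases ih (G.induce {u | u ≠ v}) (by omega) hG'conn
        (chordal_induce hch _) (gemfree_induce hgem _) (by omega)
        with ⟨⟨u, hu⟩, ⟨w, hw⟩, hPend⟩ | ⟨⟨a, ha⟩, ⟨b, hb⟩, hTT⟩ | ⟨⟨a, ha⟩, ⟨b, hb⟩, hFT⟩
      · -- lifted pendant
        have huw : G.Adj u w := by
          have := hPend.1
          rwa [induce_adj_iff] at this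
        have hdeg : ∀ t, t ≠ v → G.Adj u t → t = w := by
          intro t ht hadj
          have := hPend.2 ⟨t, ht⟩ (by rw [induce_adj_iff]; exact hadj)
          exact congrArg Subtype.val this
        by_cases hvu : G.Adj v u
        · -- u is a neighbour of v: v and u are true twins
          obtain ⟨c, hvc, hcu⟩ : ∃ c, G.Adj v c ∧ c ≠ u := by
            by_cases hh : a0 = u
            · exact ⟨b0, hvb0, fun h2 => hab0 (hh.trans h2.symm)⟩
            · exact ⟨a0, hva0, hh⟩
          have hcv : c ≠ v := fun hh => G.irrefl (hh ▸ hvc)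
          have hw_in : G.Adj v w := by
            have hcu' : G.Adj u c := (hclq v hvk c u hvc hvu hcu).symm
            have := hdeg c hcv hcu'
            rwa [this] at hvc
          refine hT v u ⟨hvu, fun t htv htu => ?_⟩
          constructor
          · intro hvt
            exact (hclq v hvk t u hvt hvu htu).symm
          · intro hut
            have htv' : t ≠ v := htv
            have := hdeg t htv' hut
            rw [this]
            exact hw_in
        · -- otherwise u is a pendant vertex of G
          refine hP u w ⟨huw, fun t ht => ?_⟩
          have htv : t ≠ v := fun hh => hvu (hh ▸ ht).symm
          exact hdeg t htv ht
      · -- lifted true twins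
        have hab' : G.Adj a b := by
          have := hTT.1
          rwa [induce_adj_iff] at this
        have haneb : a ≠ b := G.ne_of_adj hab'
        have htw : ∀ t, t ≠ v → t ≠ a → t ≠ b → (G.Adj a t ↔ G.Adj b t) := by
          intro t ht h1 h2
          have := hTT.2 ⟨t, ht⟩ (fun hh => h1 (congrArg Subtype.val hh))
            (fun hh => h2 (congrArg Subtype.val hh))
          rwa [induce_adj_iff, induce_adj_iff] at this
        have key : ∀ a b : V, a ≠ v → b ≠ v → G.Adj a b →
            (∀ t, t ≠ v → t ≠ a → t ≠ b → (G.Adj a t ↔ G.Adj b t)) →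
            G.Adj v a → ¬ G.Adj v b → False := by
          clear hab' haneb htw ha hb hTT
          intro a b hav hbv hab htw hva hvb
          have hla : lvl a = k - 1 := hnbr v hvk a hva
          obtain ⟨c, hvc, hca⟩ : ∃ c, G.Adj v c ∧ c ≠ a := by
            by_cases hh : a0 = a
            · exact ⟨b0, hvb0, fun h2 => hab0 (hh.trans h2.symm)⟩
            · exact ⟨a0, hva0, hh⟩
          have hcv : c ≠ v := fun hh => G.irrefl (hh ▸ hvc)
          have hlc : lvl c = k - 1 := hnbr v hvk c hvc
          have hac : G.Adj a c := hclq v hvk a c hva hvc (Ne.symm hca)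
          have hcb : c ≠ b := fun hh => hvb (hh ▸ hvc)
          have hbc : G.Adj b c := (htw c hcv hca hcb).mp hac
          -- step 1 : N[a] ⊆ N[c]
          have hstep1 : ∀ t, G.Adj a t → t = c ∨ G.Adj c t := by
            intro t hat
            by_cases htc : t = c
            · exact Or.inl htc
            right
            by_cases htv : t = v
            · exact htv ▸ hvc.symm
            by_cases htb : t = b
            · exact htb ▸ hbc.symm
            by_cases hvt : G.Adj v t
            · exact hclq v hvk c t hvc hvt (Ne.symm htc)
            by_contra hct
            have hta : t ≠ a := fun hh => G.irrefl (hh ▸ hat)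
            have hbt : G.Adj b t := (htw t htv hta htb).mp hat
            exact gem_of hgem (a := v) (b := c) (c := b) (d := t) (e := a)
              hvc hbc.symm hbt hvb hvt (fun hh => hct hh)
              (Ne.symm hbv) (Ne.symm htv) (fun hh => htc hh.symm)
              hva.symm hac hab hat
          -- a and c are not true twins : a witness w'
          have hnall : ¬ ∀ t, t ≠ a → t ≠ c → (G.Adj a t ↔ G.Adj c t) :=
            fun hall => hT a c ⟨hac, hall⟩
          push_neg at hnall
          obtain ⟨w', hw'a, hw'c, hw'iff⟩ := hnall
          obtain ⟨hcw', haw'⟩ : G.Adj c w' ∧ ¬ G.Adj a w' := by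
            rcases hw'iff with ⟨h1, h2⟩ | ⟨h1, h2⟩
            · rcases hstep1 w' h1 with hh | hh
              · exact absurd hh hw'c
              · exact absurd hh h2
            · exact ⟨h2, h1⟩
          have hw'v : w' ≠ v := fun hh => haw' (hh ▸ hva.symm)
          have hw'b : w' ≠ b := fun hh => haw' (hh ▸ hab)
          have hbw' : ¬ G.Adj b w' := fun h => haw' ((htw w' hw'v hw'a hw'b).mpr h)
          have hvw' : ¬ G.Adj v w' := fun h =>
            haw' (hclq v hvk a w' hva h (Ne.symm hw'a))
          -- levels
          have hw'le : lvl w' ≤ k := hvm w'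
          have hw'ge : k - 2 ≤ lvl w' := by
            have h1 : G.dist z c ≤ G.dist z w' + 1 := adj_dist_le hconn (z := z) hcw'.symm
            have h2 : lvl c = G.dist z c := rfl
            have h3 : lvl w' = G.dist z w' := rfl
            omega
          -- parent of a
          have had : G.dist z a = (k - 2) + 1 := by
            have h2 : lvl a = G.dist z a := rfl
            omega
          obtain ⟨t₀, ht₀a, ht₀d⟩ := exists_parent hconn (u := a) had
          have hlt₀ : lvl t₀ = k - 2 := ht₀d
          have hdown : ∀ p q x : V, lvl p = k - 1 → lvl q = k - 1 → G.Adj p q →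
              G.Adj p x → lvl x = k - 2 → G.Adj q x := by
            intro p q x hp hq hpq hpx hx
            refine down_eq hconn hch hgem z (j := k - 1) hp hq hpq hpx ?_
            have h3 : lvl x = G.dist z x := rfl
            have : G.dist z x = k - 1 - 1 := by omega
            exact this
          have hct₀ : G.Adj c t₀ := hdown a c t₀ hla hlc hac ht₀a.symm hlt₀
          have hnvt₀ : ¬ G.Adj v t₀ := by
            intro h
            have := adj_dist_le hconn (z := z) h.symm
            have h2 : lvl t₀ = G.dist z t₀ := rfl
            have h3 : lvl v = G.dist z v := rfl
            have h4 : lvl v = k := hvk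
            omega
          have hvnet₀ : v ≠ t₀ := fun hh => by
            have h2 : lvl t₀ = G.dist z t₀ := rfl
            have h3 : lvl v = G.dist z v := rfl
            have h4 : lvl v = k := hvk
            rw [hh] at h4
            omega
          -- three cases for the level of w'
          have hw'cases : lvl w' = k - 2 ∨ lvl w' = k - 1 ∨ lvl w' = k := by omega
          rcases hw'cases with hlw' | hlw' | hlw'
          · -- w' one more level down : contradiction with ¬ Adj a w'
            exact haw' (hdown c a w' hlc hla hac.symm hcw' hlw')
          · -- same level as a : gem v-a-t₀-w' with apex c
            have ht₀w' : G.Adj w' t₀ := hdown c w' t₀ hlc hlw' hcw' hct₀ hlt₀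
            have hvnw' : v ≠ w' := Ne.symm hw'v
            exact gem_of hgem (a := v) (b := a) (c := t₀) (d := w') (e := c)
              hva ht₀a.symm ht₀w'.symm hnvt₀ hvw' haw'
              hvnet₀ hvnw' (Ne.symm hw'a)
              hvc.symm hac.symm hct₀ hcw'
          · -- top level : contradiction with minimality of N(v)
            have hw'min : {t | G.Adj v t}.ncard ≤ {t | G.Adj w' t}.ncard :=
              hvmin w' hlw'
            have hTsubS : {t | G.Adj w' t} ⊆ {t | G.Adj v t} := by
              intro d hd
              simp only [Set.mem_setOf_eq] at hd ⊢
              by_cases hdc : d = c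
              · exact hdc ▸ hvc
              have hld' : lvl d = k - 1 := hnbr w' hlw' d hd
              have hcd : G.Adj c d := hclq w' hlw' c d hcw'.symm hd (Ne.symm hdc)
              have hdt₀ : G.Adj d t₀ := hdown c d t₀ hlc hld' hcd hct₀ hlt₀
              have hda' : a ≠ d := fun hh => haw' (by rw [hh]; exact hd.symm)
              have hvned : v ≠ d := by
                intro hh
                rw [← hh] at hld'
                rw [hvk] at hld'
                omega
              have hda : G.Adj a d := by
                by_contra hda
                have hnvd : ¬ G.Adj v d := fun h => hda (hclq v hvk a d hva h hda')
                exact gem_of hgem (a := v) (b := a) (c := t₀) (d := d) (e := c)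
                  hva ht₀a.symm hdt₀.symm hnvt₀ hnvd hda
                  hvnet₀ hvned hda'
                  hvc.symm hac.symm hct₀ hcd
              by_contra hdS
              have hnw'v : ¬ G.Adj w' v := fun h => hedge w' v hlw' hvk h
              exact gem_of hgem (a := w') (b := d) (c := a) (d := v) (e := c)
                hd hda.symm hva.symm (fun h => haw' h.symm) hnw'v
                (fun h => hdS h.symm)
                hw'a hw'v (Ne.symm hvned)
                hcw' hcd hac.symm hvc.symm
            have hssub : {t | G.Adj w' t} ⊂ {t | G.Adj v t} := by
              refine ⟨hTsubS, fun hsub2 => ?_⟩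
              have : G.Adj w' a := hsub2 hva
              exact haw' this.symm
            have := Set.ncard_lt_ncard hssub (Set.toFinite _)
            omega
        by_cases hva : G.Adj v a <;> by_cases hvb : G.Adj v b
        · refine hT a b ⟨hab', fun t h1 h2 => ?_⟩
          by_cases htv : t = v
          · subst htv; exact iff_of_true hva.symm hvb.symm
          · exact htw t htv h1 h2
        · exact key a b ha hb hab' htw hva hvb
        · exact key b a hb ha hab'.symm
            (fun t ht h1 h2 => (htw t ht h2 h1).symm) hvb hva
        · refine hT a b ⟨hab', fun t h1 h2 => ?_⟩
          by_cases htv : t = v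
          · subst htv
            exact iff_of_false (fun h => hva h.symm) (fun h => hvb h.symm)
          · exact htw t htv h1 h2
      · -- lifted false twins
        have haneb : a ≠ b := fun hh => hFT.1 (Subtype.ext hh)
        have hnab : ¬ G.Adj a b := fun hh => hFT.2.1 (by rw [induce_adj_iff]; exact hh)
        have htw : ∀ t, t ≠ v → (G.Adj a t ↔ G.Adj b t) := by
          intro t ht
          have := hFT.2.2 ⟨t, ht⟩
          rwa [induce_adj_iff, induce_adj_iff] at this
        have key2 : ∀ a b : V, a ≠ v → b ≠ v → a ≠ b → ¬ G.Adj a b →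
            (∀ t, t ≠ v → (G.Adj a t ↔ G.Adj b t)) →
            G.Adj v a → ¬ G.Adj v b → False := by
          clear haneb hnab htw ha hb hFT
          intro a b hav hbv hab hnab htw hva hvb
          have hla : lvl a = k - 1 := hnbr v hvk a hva
          obtain ⟨c, hvc, hca⟩ : ∃ c, G.Adj v c ∧ c ≠ a := by
            by_cases hh : a0 = a
            · exact ⟨b0, hvb0, fun h2 => hab0 (hh.trans h2.symm)⟩
            · exact ⟨a0, hva0, hh⟩
          have hcv : c ≠ v := fun hh => G.irrefl (hh ▸ hvc)
          have hlc : lvl c = k - 1 := hnbr v hvk c hvc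
          have hac : G.Adj a c := hclq v hvk a c hva hvc (Ne.symm hca)
          have hbc : G.Adj b c := (htw c hcv).mp hac
          have had : G.dist z a = (k - 2) + 1 := by
            have h2 : lvl a = G.dist z a := rfl
            omega
          obtain ⟨t₀, ht₀a, ht₀d⟩ := exists_parent hconn (u := a) had
          have hlt₀ : lvl t₀ = k - 2 := ht₀d
          have ht₀v : t₀ ≠ v := by
            intro hh
            have h3 : lvl v = k := hvk
            rw [← hh] at h3
            omega
          have hbt₀ : G.Adj b t₀ := (htw t₀ ht₀v).mp ht₀a.symm
          have hct₀ : G.Adj c t₀ :=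
            down_eq hconn hch hgem z (j := k - 1) hla hlc hac ht₀a.symm
              (by have h3 : lvl t₀ = G.dist z t₀ := rfl
                  have : G.dist z t₀ = k - 1 - 1 := by omega
                  exact this)
          have hnvt₀ : ¬ G.Adj v t₀ := by
            intro h
            have := adj_dist_le hconn (z := z) h.symm
            have h2 : lvl t₀ = G.dist z t₀ := rfl
            have h3 : lvl v = G.dist z v := rfl
            have h4 : lvl v = k := hvk
            omega
          exact gem_of hgem (a := v) (b := a) (c := t₀) (d := b) (e := c)
            hva ht₀a.symm hbt₀.symm hnvt₀ hvb hnab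
            (Ne.symm ht₀v) (Ne.symm hbv) hab
            hvc.symm hac.symm hct₀ hbc.symm
        by_cases hva : G.Adj v a <;> by_cases hvb : G.Adj v b
        · refine hF a b ⟨haneb, hnab, fun t => ?_⟩
          by_cases htv : t = v
          · subst htv; exact iff_of_true hva.symm hvb.symm
          · exact htw t htv
        · exact key2 a b ha hb haneb hnab htw hva hvb
        · exact key2 b a hb ha (Ne.symm haneb) (fun h => hnab h.symm)
            (fun t ht => (htw t ht).symm) hvb hva
        · refine hF a b ⟨haneb, hnab, fun t => ?_⟩
          by_cases htv : t = v
          · subst htv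
            exact iff_of_false (fun h => hva h.symm) (fun h => hvb h.symm)
          · exact htw t htv

/-- main induction for stmt8 -/
lemma constructible_main : ∀ (n : ℕ) {V : Type} [Finite V] (G : SimpleGraph V),
    Nat.card V ≤ n → G.Connected → Chordal G → ¬ HasInducedCopy gem G →
    Constructible G := by
  intro n
  induction n with
  | zero =>
    intro V _ G hcard hconn _ _
    have : Nonempty V := hconn.nonempty
    have := Nat.card_pos (α := V)
    omega
  | succ n ih =>
    intro V _ G hcard hconn hch hgem
    have hNE : Nonempty V := hconn.nonempty
    have hpos := Nat.card_pos (α := V)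
    by_cases h1 : Nat.card V ≤ 1
    · have hone : Nat.card V = 1 := by omega
      rw [Nat.card_eq_one_iff_exists] at hone
      obtain ⟨v, hv⟩ := hone
      exact Constructible.single G v hv
    · have hcard_del : ∀ v : V, Nat.card {u | u ≠ v} = Nat.card V - 1 := by
        intro v
        rw [Nat.card_coe_set_eq]
        have hh1 : ({t : V | t ≠ v} : Set V) = {v}ᶜ := by ext t; simp
        have hh2 := Set.ncard_add_ncard_compl ({v} : Set V)
        rw [Set.ncard_singleton] at hh2
        rw [hh1]
        omega
      rcases exists_reduction (Nat.card V) G le_rfl hconn hch hgem (by omega) with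
        ⟨v, w, hvw, hdeg⟩ | ⟨v, w, hvw, hN⟩ | ⟨v, w, hne, hnadj, hN⟩
      · -- pendant
        have hwv : w ≠ v := (G.ne_of_adj hvw).symm
        have hconn' : (G.induce {u | u ≠ v}).Connected := by
          refine connected_del hconn v ⟨w, hwv⟩ ?_
          intro a b h1 h2 hne _ _
          exact absurd ((hdeg a h1).trans (hdeg b h2).symm) hne
        exact Constructible.leaf G v w hvw hdeg
          (ih _ (by rw [hcard_del v]; omega) hconn' (chordal_induce hch _)
            (gemfree_induce hgem _))
      · -- true twin
        have hwv : w ≠ v := (G.ne_of_adj hvw).symm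
        have hconn' : (G.induce {u | u ≠ v}).Connected := by
          refine connected_del hconn v ⟨w, hwv⟩ ?_
          intro a b h1 h2 hab ha hb
          by_cases haw : a = w
          · have hbw : b ≠ w := fun hh => hab (haw.trans hh.symm)
            have hwb : G.Adj w b := (hN b hb hbw).mp h2
            have : G.Adj a b := haw ▸ hwb
            exact SimpleGraph.Adj.reachable (by rw [induce_adj_iff]; exact this)
          · by_cases hbw : b = w
            · have hwa : G.Adj w a := (hN a ha haw).mp h1
              have : G.Adj a b := hbw ▸ hwa.symm
              exact SimpleGraph.Adj.reachable (by rw [induce_adj_iff]; exact this)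
            · have hwa : G.Adj w a := (hN a ha haw).mp h1
              have hwb : G.Adj w b := (hN b hb hbw).mp h2
              refine Reachable.trans
                (SimpleGraph.Adj.reachable (v := (⟨w, hwv⟩ : {u | u ≠ v}))
                  (by rw [induce_adj_iff]; exact hwa.symm)) ?_
              exact SimpleGraph.Adj.reachable (by rw [induce_adj_iff]; exact hwb)
        exact Constructible.twin G v w hvw hN
          (ih _ (by rw [hcard_del v]; omega) hconn' (chordal_induce hch _)
            (gemfree_induce hgem _))
      · -- false twin
        have hclique : G.IsClique {u | G.Adj w u} := by
          intro a hA b hB hab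
          by_contra hnadj'
          have hva : G.Adj v a := (hN a).mpr hA
          have hvb : G.Adj v b := (hN b).mpr hB
          exact c4_of hch (a := v) (b := a) (c := w) (d := b)
            hva hA.symm hB hvb.symm hnadj hnadj' hne hab
        have hconn' : (G.induce {u | u ≠ v}).Connected := by
          refine connected_del hconn v ⟨w, Ne.symm hne⟩ ?_
          intro a b h1 h2 hab ha hb
          have hA : a ∈ {u | G.Adj w u} := (hN a).mp h1
          have hB : b ∈ {u | G.Adj w u} := (hN b).mp h2
          exact SimpleGraph.Adj.reachable
            (by rw [induce_adj_iff]; exact hclique hA hB hab)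
        exact Constructible.falseTwin G v w hne hnadj hN hclique
          (ih _ (by rw [hcard_del v]; omega) hconn' (chordal_induce hch _)
            (gemfree_induce hgem _))


/-- every ptolemaic graph (finite, connected, chordal, gem-free) can be
constructed from a single vertex by adding leaves, true twins, and false twins of
vertices with complete neighbourhood. -/
theorem stmt8 {V : Type} [Finite V] (G : SimpleGraph V) (hconn : G.Connected)
    (hch : Chordal G) (hgem : ¬ HasInducedCopy gem G) :
    Constructible G :=
  constructible_main (Nat.card V) G le_rfl hconn hch hgem
end

section
/- Let Γ be a finite graph containing two false twins v and v' (non-adjacent vertices with the same neighborhood) such that the neighborhood of v is a clique. If the induced subgraph Γ' = Γ − v' has a cut-vertex w, then v ≠ w and w is also a cut-vertex of Γ. -/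
open SimpleGraph

lemma lemC {V : Type} (G : SimpleGraph V) (x0 : V)
    (h : ∀ y z (hy : G.Adj y x0) (hz : G.Adj x0 z),
      (G.induce {u | u ≠ x0}).Reachable ⟨y, hy.ne⟩ ⟨z, hz.ne'⟩) :
    ∀ {a b : V} (p : G.Walk a b) (ha : a ≠ x0) (hb : b ≠ x0),
      (G.induce {u | u ≠ x0}).Reachable ⟨a, ha⟩ ⟨b, hb⟩ := by
  intro a b p
  generalize hl : p.length = n
  induction n using Nat.strong_induction_on generalizing a b p with
  | _ n IH =>
    intro ha hb
    cases p with
    | nil => exact Reachable.refl _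
    | @cons _ c _ h1 p' =>
      by_cases hc : c = x0
      · subst hc
        cases p' with
        | nil => exact absurd rfl hb
        | @cons _ d _ h2 p'' =>
          subst hl
          refine (h a d h1 h2).trans (IH p''.length (by simp only [Walk.length_cons]; omega) p'' rfl h2.ne' hb)
      · subst hl
        refine Reachable.trans ?_ (IH p'.length (by simp only [Walk.length_cons]; omega) p' rfl hc hb)
        exact Adj.reachable (by simpa using h1)

lemma twinDel {V : Type} (G : SimpleGraph V) (hconn : G.Connected)
    (v v' : V) (hne : v ≠ v') (hnadj : ¬ G.Adj v v')
    (htwin : ∀ u, G.Adj v u ↔ G.Adj v' u) :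
    (G.induce {u | u ≠ v'}).Connected := by
  rw [connected_iff]
  refine ⟨fun a b => ?_, ⟨⟨v, hne⟩⟩⟩
  obtain ⟨a, ha⟩ := a
  obtain ⟨b, hb⟩ := b
  refine lemC G v' ?_ ((hconn a b).some) ha hb
  intro y z hy hz
  have hyv : G.Adj v y := (htwin y).mpr hy.symm
  have hzv : G.Adj v z := (htwin z).mpr hz
  exact (Adj.reachable
      (show (G.induce {u | u ≠ v'}).Adj ⟨y, hy.ne⟩ ⟨v, hne⟩ by simpa using hyv.symm)).trans
    (Adj.reachable (show (G.induce {u | u ≠ v'}).Adj ⟨v, hne⟩ ⟨z, hz.ne'⟩ by simpa using hzv))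

lemma simpDel {V : Type} (G : SimpleGraph V) (hconn : G.Connected)
    (v : V) (hclq : G.IsClique {u | G.Adj v u}) (hx : ∃ u, u ≠ v) :
    (G.induce {u | u ≠ v}).Connected := by
  obtain ⟨x, hx⟩ := hx
  rw [connected_iff]
  refine ⟨fun a b => ?_, ⟨⟨x, hx⟩⟩⟩
  obtain ⟨a, ha⟩ := a
  obtain ⟨b, hb⟩ := b
  refine lemC G v ?_ ((hconn a b).some) ha hb
  intro y z hy hz
  by_cases heq : y = z
  · subst heq; exact Reachable.refl _
  · exact Adj.reachable
      (show (G.induce {u | u ≠ v}).Adj ⟨y, hy.ne⟩ ⟨z, hz.ne'⟩ by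
        simpa using hclq hy.symm hz heq)

/-- let `v, v'` be false twins of a finite graph `G` such that the
neighbourhood of `v` is a clique. If `G - v'` has a cut-vertex `w`, then `v ≠ w`
and `w` is a cut-vertex of `G`. -/
theorem stmt10 {V : Type} [Finite V] (G : SimpleGraph V) (hconn : G.Connected)
    (v v' : V) (hne : v ≠ v') (hnadj : ¬ G.Adj v v')
    (htwin : ∀ u, G.Adj v u ↔ G.Adj v' u)
    (hclique : G.IsClique {u | G.Adj v u})
    (w : {u : V // u ≠ v'}) (hw : IsCutVertex (G.induce {u | u ≠ v'}) w) :
    v ≠ w.1 ∧ IsCutVertex G w.1 := by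
  set Γ' := G.induce {u | u ≠ v'} with hΓ'
  have hΓconn : Γ'.Connected := twinDel G hconn v v' hne hnadj htwin
  -- a third vertex
  obtain ⟨c, hcv, hcv'⟩ : ∃ c, c ≠ v ∧ c ≠ v' := by
    obtain ⟨p⟩ := hconn v v'
    cases p with
    | nil => exact absurd rfl hne
    | @cons _ c _ h1 p' =>
      exact ⟨c, h1.ne', fun h => hnadj (h ▸ h1)⟩
  have hvw : v ≠ w.1 := by
    intro hvw
    apply hw
    have hwv : w = (⟨v, hne⟩ : {u : V // u ≠ v'}) := Subtype.ext hvw.symm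
    rw [hwv]
    refine simpDel Γ' hΓconn ⟨v, hne⟩ ?_ ⟨⟨c, hcv'⟩, by simp [hcv]⟩
    rintro ⟨y, hy⟩ hym ⟨z, hz⟩ hzm hyz
    have hy' : G.Adj v y := by simpa [hΓ'] using hym
    have hz' : G.Adj v z := by simpa [hΓ'] using hzm
    simpa [hΓ'] using hclique hy' hz' (fun h => hyz (Subtype.ext h))
  refine ⟨hvw, fun hGw => ?_⟩
  set G2 := G.induce {u | u ≠ w.1} with hG2
  have hv2 : v ≠ w.1 := hvw
  have hv2' : v' ≠ w.1 := Ne.symm w.2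
  have hconn2 : (G2.induce {u | u ≠ (⟨v', hv2'⟩ : {u : V // u ≠ w.1})}).Connected := by
    refine twinDel G2 hGw ⟨v, hv2⟩ ⟨v', hv2'⟩ (by simp [hne]) (by simpa [hG2] using hnadj) ?_
    rintro ⟨u, hu⟩
    simpa [hG2] using htwin u
  apply hw
  -- transfer along iso
  have e : (G2.induce {u | u ≠ (⟨v', hv2'⟩ : {u : V // u ≠ w.1})}) ≃g
      (Γ'.induce {u | u ≠ w}) := by
    refine ⟨⟨fun x => ⟨⟨x.1.1, fun h => x.2 (Subtype.ext h)⟩,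
        fun h => x.1.2 (congrArg Subtype.val h)⟩,
      fun x => ⟨⟨x.1.1, fun h => x.2 (Subtype.ext h)⟩,
        fun h => x.1.2 (congrArg Subtype.val h)⟩, ?_, ?_⟩, ?_⟩
    · rintro ⟨⟨u, h1⟩, h2⟩; rfl
    · rintro ⟨⟨u, h1⟩, h2⟩; rfl
    · rintro ⟨⟨a, _⟩, _⟩ ⟨⟨b, _⟩, _⟩; simp [hΓ', hG2]
  exact e.connected_iff.mp hconn2
end

section
/- Let L be the free Lie algebra over a field k on generators x₁, y₁, ..., xₙ, yₙ modulo the single relation [x₁,y₁] + [x₂,y₂] + ... + [xₙ,yₙ] = 0, with n ≥ 2 (the associated graded Lie algebra of a genus-n surface group). Then L is not isomorphic to the free product of a 2-dimensional abelian Lie algebra and a free Lie algebra. -/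
/-- The Lie algebra `⟨x₁,y₁,…,xₙ,yₙ ∣ [x₁,y₁]+⋯+[xₙ,yₙ]⟩`: the associated graded Lie
algebra of a genus-`n` surface group. Here `(i, 0)` plays the role of `xᵢ` and
`(i, 1)` that of `yᵢ`. -/
noncomputable def surfaceLie (k : Type) [Field k] (n : ℕ) : Type :=
  FreeLieAlgebra k (Fin n × Fin 2) ⧸
    LieSubmodule.lieSpan k (FreeLieAlgebra k (Fin n × Fin 2))
      ({∑ i : Fin n, ⁅FreeLieAlgebra.of k (i, (0 : Fin 2)),
          FreeLieAlgebra.of k (i, (1 : Fin 2))⁆} : Set (FreeLieAlgebra k (Fin n × Fin 2)))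

noncomputable instance (k : Type) [Field k] (n : ℕ) : LieRing (surfaceLie k n) := by
  unfold surfaceLie; infer_instance

noncomputable instance (k : Type) [Field k] (n : ℕ) : LieAlgebra k (surfaceLie k n) := by
  unfold surfaceLie; infer_instance

/-- The free product of the 2-dimensional abelian Lie algebra (on `Sum.inl true`,
`Sum.inl false`) with the free Lie algebra on `X`, presented as
`⟨a, b, X ∣ [a,b]⟩`. -/
noncomputable def abelianFreeProd (k : Type) [Field k] (X : Type) : Type :=
  FreeLieAlgebra k (Bool ⊕ X) ⧸
    LieSubmodule.lieSpan k (FreeLieAlgebra k (Bool ⊕ X))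
      ({⁅(FreeLieAlgebra.of k (Sum.inl true) : FreeLieAlgebra k (Bool ⊕ X)), FreeLieAlgebra.of k (Sum.inl false)⁆} :
        Set (FreeLieAlgebra k (Bool ⊕ X)))

noncomputable instance (k : Type) [Field k] (X : Type) : LieRing (abelianFreeProd k X) := by
  unfold abelianFreeProd; infer_instance

noncomputable instance (k : Type) [Field k] (X : Type) : LieAlgebra k (abelianFreeProd k X) := by
  unfold abelianFreeProd; infer_instance

/-!
If `⁅u, v⁆ = 0` in the surface Lie algebra `L`, let `ū, v̄` be their images in `V = L/⁅L, L⁆`. For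
every bilinear form `ω` on `V` whose antisymmetrisation vanishes on the relator `∑ xᵢ ∧ yᵢ`, the
central extension of `V` by the cocycle `ω - ωᵀ` is a quotient of `L`, so `ω(ū, v̄) = ω(v̄, ū)`.
Hence `ū ∧ v̄` is a multiple of `∑ xᵢ ∧ yᵢ`; a Plücker relation between two different handles
forces that multiple to vanish, so `ū` and `v̄` are linearly dependent. In the free product of
`k²` with a free Lie algebra, however, the two generators of `k²` commute and stay independent
in the abelianization.
-/

open FreeLieAlgebra

attribute [local instance] LieRing.ofAssociativeRing

namespace LieIdeal.Quotient

variable {R L M : Type*} [CommRing R] [LieRing L] [LieAlgebra R L] [LieRing M] [LieAlgebra R M]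
  (I : LieIdeal R L)

noncomputable def mkHom : L →ₗ⁅R⁆ L ⧸ I :=
  { LieSubmodule.Quotient.mk' I with map_lie' := rfl }

lemma mkHom_surjective : Function.Surjective (mkHom I) :=
  LieSubmodule.Quotient.surjective_mk' I

noncomputable def lift (f : L →ₗ⁅R⁆ M) (h : I ≤ f.ker) : L ⧸ I →ₗ⁅R⁆ M :=
  { I.toSubmodule.liftQ f.toLinearMap fun _ hx => LieHom.mem_ker.mp (h hx) with
    map_lie' := by
      rintro ⟨x⟩ ⟨y⟩
      exact f.map_lie x y }

lemma hom_ext {f g : L ⧸ I →ₗ⁅R⁆ M} (h : f.comp (mkHom I) = g.comp (mkHom I)) : f = g := by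
  ext w
  obtain ⟨x, rfl⟩ := mkHom_surjective I w
  exact LieHom.congr_fun h x

end LieIdeal.Quotient

lemma LieHom.lieSpan_singleton_le_ker_iff {R L M : Type*} [CommRing R] [LieRing L]
    [LieAlgebra R L] [LieRing M] [LieAlgebra R M] (f : L →ₗ⁅R⁆ M) (r : L) :
    LieSubmodule.lieSpan R L {r} ≤ f.ker ↔ f r = 0 := by
  rw [LieSubmodule.lieSpan_le, Set.singleton_subset_iff, SetLike.mem_coe, LieHom.mem_ker]

def LinearMap.toLieHomOfIsLieAbelian {R L M : Type*} [CommRing R] [LieRing L] [LieAlgebra R L]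
    [LieRing M] [LieAlgebra R M] [IsLieAbelian L] [IsLieAbelian M] (f : L →ₗ[R] M) :
    L →ₗ⁅R⁆ M :=
  { f with
    map_lie' := fun {x y} => by
      rw [trivial_lie_zero, trivial_lie_zero]
      exact f.map_zero }

@[simp] lemma LinearMap.toLieHomOfIsLieAbelian_apply {R L M : Type*} [CommRing R] [LieRing L]
    [LieAlgebra R L] [LieRing M] [LieAlgebra R M] [IsLieAbelian L] [IsLieAbelian M]
    (f : L →ₗ[R] M) (x : L) : f.toLieHomOfIsLieAbelian x = f x :=
  rfl

lemma isLieAbelian_of_commRing (A : Type*) [CommRing A] : IsLieAbelian A :=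
  isMulCommutative_iff_isLieAbelian.mp inferInstance

attribute [local instance] isLieAbelian_of_commRing

-- The central extension of `V` by `R` with cocycle `ω - ωᵀ`; antisymmetrising makes every
-- bilinear form `ω` a cocycle.
def Heisenberg {R V : Type*} [CommRing R] [AddCommGroup V] [Module R V]
    (_ω : V →ₗ[R] V →ₗ[R] R) : Type _ :=
  V × R

namespace Heisenberg

noncomputable section

variable {R V : Type*} [CommRing R] [AddCommGroup V] [Module R V] (ω : V →ₗ[R] V →ₗ[R] R)

instance : AddCommGroup (Heisenberg ω) := inferInstanceAs (AddCommGroup (V × R))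

instance : Module R (Heisenberg ω) := inferInstanceAs (Module R (V × R))

instance : LieRing (Heisenberg ω) where
  bracket x y := ((0 : V), ω x.1 y.1 - ω y.1 x.1)
  add_lie x y z := Prod.ext (add_zero 0).symm <| by
    change ω (x.1 + y.1) z.1 - ω z.1 (x.1 + y.1) = _ + _
    simp only [map_add, LinearMap.add_apply]; ring
  lie_add x y z := Prod.ext (add_zero 0).symm <| by
    change ω x.1 (y.1 + z.1) - ω (y.1 + z.1) x.1 = _ + _
    simp only [map_add, LinearMap.add_apply]; ring
  lie_self x := Prod.ext rfl (sub_self _)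
  leibniz_lie x y z := Prod.ext (add_zero 0).symm <| by
    change ω x.1 0 - ω 0 x.1 = (ω 0 z.1 - ω z.1 0) + (ω y.1 0 - ω 0 y.1)
    simp

instance : LieAlgebra R (Heisenberg ω) where
  lie_smul t x y := Prod.ext (smul_zero t).symm <| by
    change ω x.1 (t • y.1) - ω (t • y.1) x.1 = t * (ω x.1 y.1 - ω y.1 x.1)
    simp only [map_smul, LinearMap.smul_apply, smul_eq_mul]; ring

def ofBase (v : V) : Heisenberg ω := (v, 0)

def ofCenter : R →ₗ[R] Heisenberg ω := LinearMap.inr R V R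

lemma lie_ofBase (v w : V) : ⁅ofBase ω v, ofBase ω w⁆ = ofCenter ω (ω v w - ω w v) := rfl

variable {ω}

lemma snd_lie (x y : Heisenberg ω) :
    (⁅x, y⁆ : Heisenberg ω).2 = ω x.1 y.1 - ω y.1 x.1 := rfl

end

noncomputable def fst {R V : Type*} [CommRing R] [LieRing V] [LieAlgebra R V] [IsLieAbelian V]
    (ω : V →ₗ[R] V →ₗ[R] R) : Heisenberg ω →ₗ⁅R⁆ V :=
  { LinearMap.fst R V R with
    map_lie' := fun {x y} => (trivial_lie_zero V V x.1 y.1).symm }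

end Heisenberg

section Plucker

variable {R ι : Type*} [CommRing R]

def pluckerCoord (x y : ι → R) (p q : ι) : R := x p * y q - x q * y p

lemma pluckerCoord_swap (x y : ι → R) (p q : ι) :
    pluckerCoord x y q p = -pluckerCoord x y p q := by
  unfold pluckerCoord; ring

lemma pluckerCoord_relation (x y : ι → R) (a b c d : ι) :
    pluckerCoord x y a b * pluckerCoord x y c d - pluckerCoord x y a c * pluckerCoord x y b d
      + pluckerCoord x y a d * pluckerCoord x y b c = 0 := by
  unfold pluckerCoord; ring

lemma not_linearIndependent_of_pluckerCoord_eq_zero {K : Type*} [Field K] {x y : ι → K}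
    (h : ∀ p q, pluckerCoord x y p q = 0) : ¬LinearIndependent K ![x, y] := by
  rw [LinearIndependent.pair_iff]
  intro hxy
  by_cases hx : x = 0
  · exact one_ne_zero (hxy 1 0 (by simp [hx])).1
  obtain ⟨p, hp⟩ := Function.ne_iff.mp hx
  refine hp (neg_eq_zero.mp (hxy (y p) (-x p) (funext fun q => ?_)).2)
  simpa [pluckerCoord, mul_comm, sub_eq_add_neg] using h q p

variable (R) in
def coordForm (p q : ι) : (ι → R) →ₗ[R] (ι → R) →ₗ[R] R :=
  (LinearMap.mul R R).compl₁₂ (LinearMap.proj p) (LinearMap.proj q)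

@[simp] lemma coordForm_apply (p q : ι) (x y : ι → R) : coordForm R p q x y = x p * y q := rfl

end Plucker

section SurfaceRelator

variable {R : Type*} [CommRing R] {n : ℕ}

-- The pairing of `ω - ωᵀ` with the relator `∑ xᵢ ∧ yᵢ`.
def evalSurfaceRelator (ω : (Fin n × Fin 2 → R) →ₗ[R] (Fin n × Fin 2 → R) →ₗ[R] R) : R :=
  ∑ i : Fin n, (ω (Pi.single (i, 0) 1) (Pi.single (i, 1) 1)
    - ω (Pi.single (i, 1) 1) (Pi.single (i, 0) 1))

lemma evalSurfaceRelator_sub (ω ω' : (Fin n × Fin 2 → R) →ₗ[R] (Fin n × Fin 2 → R) →ₗ[R] R) :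
    evalSurfaceRelator (ω - ω') = evalSurfaceRelator ω - evalSurfaceRelator ω' := by
  simp only [evalSurfaceRelator, LinearMap.sub_apply, ← Finset.sum_sub_distrib]
  exact Finset.sum_congr rfl fun _ _ => by ring

lemma evalSurfaceRelator_coordForm_of_ne {p q : Fin n × Fin 2} (h : p.1 ≠ q.1 ∨ p.2 = q.2) :
    evalSurfaceRelator (coordForm R p q) = 0 := by
  refine Finset.sum_eq_zero fun i _ => ?_
  obtain ⟨a, s⟩ := p
  obtain ⟨b, t⟩ := q
  simp only [coordForm_apply, Pi.single_apply, Prod.mk.injEq]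
  split_ifs <;> grind

lemma evalSurfaceRelator_coordForm_self (i : Fin n) :
    evalSurfaceRelator (coordForm R (i, 0) (i, 1)) = 1 := by
  simp [evalSurfaceRelator, Pi.single_apply]

lemma pluckerCoord_eq_zero_of_evalSurfaceRelator [NoZeroDivisors R] (hn : 2 ≤ n) {x y : Fin n × Fin 2 → R}
    (h : ∀ ω, evalSurfaceRelator ω = 0 → ω x y - ω y x = 0) (p q : Fin n × Fin 2) :
    pluckerCoord x y p q = 0 := by
  have off_handle : ∀ p q : Fin n × Fin 2, p.1 ≠ q.1 ∨ p.2 = q.2 → pluckerCoord x y p q = 0 :=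
    fun p q hpq => by
      simpa [pluckerCoord, mul_comm] using h _ (evalSurfaceRelator_coordForm_of_ne (R := R) hpq)
  have handle_eq (i j : Fin n) :
      pluckerCoord x y (i, 0) (i, 1) = pluckerCoord x y (j, 0) (j, 1) := by
    have := h (coordForm R (i, 0) (i, 1) - coordForm R (j, 0) (j, 1)) (by
      rw [evalSurfaceRelator_sub, evalSurfaceRelator_coordForm_self,
        evalSurfaceRelator_coordForm_self, sub_self])
    simp only [LinearMap.sub_apply, coordForm_apply] at this
    unfold pluckerCoord
    linear_combination this
  -- The Plücker relation between two distinct handles `i ≠ j` reads `P² = 0`.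
  have handle_zero (i : Fin n) : pluckerCoord x y (i, 0) (i, 1) = 0 := by
    obtain ⟨j, hji⟩ := Fintype.exists_ne_of_one_lt_card (by simp; omega) i
    have := pluckerCoord_relation x y (i, 0) (i, 1) (j, 0) (j, 1)
    rwa [← handle_eq i j, off_handle (i, 0) (j, 0) (.inl hji.symm),
      off_handle (i, 1) (j, 1) (.inl hji.symm), off_handle (i, 0) (j, 1) (.inl hji.symm),
      off_handle (i, 1) (j, 0) (.inl hji.symm), mul_zero, sub_zero, add_zero,
      mul_self_eq_zero] at this
  obtain ⟨a, s⟩ := p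
  obtain ⟨b, t⟩ := q
  rcases eq_or_ne a b with rfl | hab
  · fin_cases s <;> fin_cases t
    · exact off_handle _ _ (.inr rfl)
    · exact handle_zero a
    · exact (pluckerCoord_swap x y _ _).trans (neg_eq_zero.mpr (handle_zero a))
    · exact off_handle _ _ (.inr rfl)
  · exact off_handle _ _ (.inl hab)

end SurfaceRelator

noncomputable section

namespace surfaceLie

variable {k : Type} [Field k] {n : ℕ} {M : Type*} [LieRing M] [LieAlgebra k M]

variable (k n) in
def relator : FreeLieAlgebra k (Fin n × Fin 2) :=
  ∑ i : Fin n, ⁅of k (i, (0 : Fin 2)), of k (i, (1 : Fin 2))⁆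

variable (k n) in
def mk : FreeLieAlgebra k (Fin n × Fin 2) →ₗ⁅k⁆ surfaceLie k n :=
  LieIdeal.Quotient.mkHom _

def lift (f : FreeLieAlgebra k (Fin n × Fin 2) →ₗ⁅k⁆ M) (hf : f (relator k n) = 0) :
    surfaceLie k n →ₗ⁅k⁆ M :=
  LieIdeal.Quotient.lift _ f ((f.lieSpan_singleton_le_ker_iff _).mpr hf)

@[simp] lemma lift_mk (f : FreeLieAlgebra k (Fin n × Fin 2) →ₗ⁅k⁆ M) (hf : f (relator k n) = 0)
    (x : FreeLieAlgebra k (Fin n × Fin 2)) : lift f hf (mk k n x) = f x :=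
  rfl

lemma hom_ext {f g : surfaceLie k n →ₗ⁅k⁆ M}
    (h : ∀ j, f (mk k n (of k j)) = g (mk k n (of k j))) : f = g :=
  LieIdeal.Quotient.hom_ext _ (FreeLieAlgebra.hom_ext h)

variable (k n) in
def abelianization : surfaceLie k n →ₗ⁅k⁆ (Fin n × Fin 2 → k) :=
  lift (FreeLieAlgebra.lift k fun j => Pi.single j 1) <| by
    simp only [relator, map_sum, LieHom.map_lie, trivial_lie_zero, Finset.sum_const_zero]

def toHeisenberg (ω : (Fin n × Fin 2 → k) →ₗ[k] (Fin n × Fin 2 → k) →ₗ[k] k)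
    (hω : evalSurfaceRelator ω = 0) : surfaceLie k n →ₗ⁅k⁆ Heisenberg ω :=
  lift (FreeLieAlgebra.lift k fun j => Heisenberg.ofBase ω (Pi.single j 1)) <| by
    simp only [relator, map_sum, LieHom.map_lie, FreeLieAlgebra.lift_of_apply,
      Heisenberg.lie_ofBase]
    rw [← map_sum]
    exact (congrArg _ hω).trans (map_zero _)

lemma fst_toHeisenberg (ω : (Fin n × Fin 2 → k) →ₗ[k] (Fin n × Fin 2 → k) →ₗ[k] k)
    (hω : evalSurfaceRelator ω = 0) (w : surfaceLie k n) :
    (toHeisenberg ω hω w).1 = abelianization k n w := by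
  have : (Heisenberg.fst ω).comp (toHeisenberg ω hω) = abelianization k n :=
    hom_ext fun _ => by
      simp only [LieHom.comp_apply, toHeisenberg, abelianization, lift_mk, lift_of_apply]
      rfl
  exact LieHom.congr_fun this w

lemma not_linearIndependent_abelianization (hn : 2 ≤ n) {u v : surfaceLie k n}
    (huv : ⁅u, v⁆ = 0) :
    ¬LinearIndependent k ![abelianization k n u, abelianization k n v] := by
  refine not_linearIndependent_of_pluckerCoord_eq_zero
    (pluckerCoord_eq_zero_of_evalSurfaceRelator hn fun ω hω => ?_)
  have := congrArg Prod.snd (congrArg (toHeisenberg ω hω) huv)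
  rwa [LieHom.map_lie, Heisenberg.snd_lie, fst_toHeisenberg, fst_toHeisenberg, map_zero] at this

lemma not_linearIndependent_of_lie_eq_zero [IsLieAbelian M] (hn : 2 ≤ n)
    (f : surfaceLie k n →ₗ⁅k⁆ M) {u v : surfaceLie k n} (huv : ⁅u, v⁆ = 0) :
    ¬LinearIndependent k ![f u, f v] := by
  let g := (Fintype.linearCombination k fun j => f (mk k n (of k j))).toLieHomOfIsLieAbelian
  have hfg : f = g.comp (abelianization k n) := hom_ext fun j => by
    simp [g, abelianization, Fintype.linearCombination_apply_single]
  intro hli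
  refine not_linearIndependent_abelianization hn huv (LinearIndependent.of_comp g.toLinearMap ?_)
  convert hli using 1
  rw [hfg]
  ext i
  fin_cases i <;> rfl

end surfaceLie

end

noncomputable section

namespace abelianFreeProd

variable (k : Type) [Field k] (X : Type)

def mk : FreeLieAlgebra k (Bool ⊕ X) →ₗ⁅k⁆ abelianFreeProd k X :=
  LieIdeal.Quotient.mkHom _

lemma lie_mk_of_inl : ⁅mk k X (of k (.inl true)), mk k X (of k (.inl false))⁆ = 0 := by
  rw [← LieHom.map_lie]
  exact LieSubmodule.Quotient.mk_eq_zero'.mpr (LieSubmodule.subset_lieSpan rfl)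

def projAbelian : abelianFreeProd k X →ₗ⁅k⁆ (Bool → k) :=
  LieIdeal.Quotient.lift _ (FreeLieAlgebra.lift k (Sum.elim (Pi.single · 1) 0)) <|
    (LieHom.lieSpan_singleton_le_ker_iff _ _).mpr (by rw [LieHom.map_lie, trivial_lie_zero])

lemma projAbelian_mk (x : FreeLieAlgebra k (Bool ⊕ X)) :
    projAbelian k X (mk k X x) = FreeLieAlgebra.lift k (Sum.elim (Pi.single · 1) 0) x :=
  rfl

lemma linearIndependent_projAbelian_mk_of_inl :
    LinearIndependent k ![projAbelian k X (mk k X (of k (.inl true))),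
      projAbelian k X (mk k X (of k (.inl false)))] := by
  simp only [projAbelian_mk, lift_of_apply, Sum.elim_inl]
  rw [LinearIndependent.pair_iff]
  intro s t h
  exact ⟨by simpa using congrFun h true, by simpa using congrFun h false⟩

end abelianFreeProd

end

/-- for `n ≥ 2`, the one-relator Lie algebra
`⟨x₁,y₁,…,xₙ,yₙ ∣ [x₁,y₁]+⋯+[xₙ,yₙ]⟩` is not isomorphic to the free product of a
2-dimensional abelian Lie algebra and a free Lie algebra. -/
theorem stmt12 (k : Type) [Field k] (n : ℕ) (hn : 2 ≤ n) (X : Type) :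
    IsEmpty (surfaceLie k n ≃ₗ⁅k⁆ abelianFreeProd k X) := by
  refine ⟨fun e => surfaceLie.not_linearIndependent_of_lie_eq_zero hn
    ((abelianFreeProd.projAbelian k X).comp e.toLieHom)
    (u := e.symm (abelianFreeProd.mk k X (of k (.inl true))))
    (v := e.symm (abelianFreeProd.mk k X (of k (.inl false)))) ?_ ?_⟩
  · rw [← e.symm.map_lie, abelianFreeProd.lie_mk_of_inl, map_zero]
  · simpa using abelianFreeProd.linearIndependent_projAbelian_mk_of_inl k X
end

section
/- Let Γ₁ and Γ₂ be finite connected graphs sharing exactly one common vertex v, and let Γ = Γ₁ ∨_v Γ₂ be their connected sum (union glued at v). Then the Bestvina–Brady group B_Γ decomposes as the free product B_{Γ₁} * B_{Γ₂} of the Bestvina–Brady groups of the two pieces. -/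
open SimpleGraph

/-- The defining relations of the right-angled Artin group of `G`. -/
def raagRels {V : Type} (G : SimpleGraph V) : Set (FreeGroup V) :=
  {x | ∃ v w, G.Adj v w ∧
    x = FreeGroup.of v * FreeGroup.of w * (FreeGroup.of v)⁻¹ * (FreeGroup.of w)⁻¹}

/-- The right-angled Artin group of `G`. -/
def RAAG {V : Type} (G : SimpleGraph V) : Type := PresentedGroup (raagRels G)

instance {V : Type} (G : SimpleGraph V) : Group (RAAG G) := by
  unfold RAAG; infer_instance

/-- The generator of the RAAG corresponding to a vertex. -/
def RAAG.gen {V : Type} (G : SimpleGraph V) (v : V) : RAAG G := PresentedGroup.of v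

/-- The cone over a graph `Λ`, with apex `none`. -/
def coneGraph {W : Type} (H : SimpleGraph W) : SimpleGraph (Option W) :=
  SimpleGraph.fromRel (fun a b =>
    a = none ∨ ∃ x y, a = some x ∧ b = some y ∧ H.Adj x y)
/-!
If `χ w = 1` for some `w`, the map `h ↦ (h * w ^ (-χ h), χ h)` identifies a group with
`ker χ ⋊ ℤ`, where `ℤ` acts on `ker χ` by conjugation with powers of `w`. The RAAG of the
connected sum is the amalgam of the RAAGs of `Γ₁` and `Γ₂` over `⟨v⟩`, and `v` plays the role
of `w` in both, so these splittings glue to an isomorphism of `G_Γ` with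
`(B_Γ₁ ∗ B_Γ₂) ⋊ ℤ` under which `χ_Γ` becomes the projection to `ℤ`. Taking kernels gives
`B_Γ ≃ B_Γ₁ ∗ B_Γ₂`.
-/

open Monoid Multiplicative
open scoped Monoid.Coprod

namespace RAAG

variable {V : Type} {G : SimpleGraph V}

theorem gen_commute {a b : V} (h : G.Adj a b) : Commute (gen G a) (gen G b) := by
  rw [← commutatorElement_eq_one_iff_commute, commutatorElement_def]
  have := PresentedGroup.one_of_mem (rels := raagRels G) ⟨a, b, h, rfl⟩
  simp only [map_mul, map_inv] at this
  exact this

def lift {H : Type*} [Group H] (f : V → H) (hf : ∀ a b, G.Adj a b → Commute (f a) (f b)) :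
    RAAG G →* H :=
  PresentedGroup.toGroup (rels := raagRels G) (f := f) <| by
    rintro _ ⟨a, b, hab, rfl⟩
    simpa [← commutatorElement_def] using (hf a b hab).commutator_eq

@[simp]
theorem lift_gen {H : Type*} [Group H] (f : V → H) (hf : ∀ a b, G.Adj a b → Commute (f a) (f b))
    (u : V) : lift f hf (gen G u) = f u :=
  PresentedGroup.toGroup.of _

theorem hom_ext {H : Type*} [Group H] {f g : RAAG G →* H} (h : ∀ u, f (gen G u) = g (gen G u)) :
    f = g :=
  PresentedGroup.ext h

theorem closure_range_gen : Subgroup.closure (Set.range (gen G)) = ⊤ :=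
  PresentedGroup.closure_range_of _

variable (G) in
def induceHom (s : Set V) : RAAG (G.induce s) →* RAAG G :=
  lift (fun u => gen G u) fun _ _ h => gen_commute h

@[simp]
theorem induceHom_gen (s : Set V) (u : s) : induceHom G s (gen (G.induce s) u) = gen G u :=
  lift_gen _ _ _

end RAAG

section Splitting

variable {H : Type*} [Group H] (χ : H →* Multiplicative ℤ) (w : H)

abbrev conjZPowKer : Multiplicative ℤ →* MulAut χ.ker :=
  MulAut.conjNormal.comp (zpowersHom H w)

variable {χ w}

def toKerSemidirect (hw : χ w = ofAdd 1) : H →* χ.ker ⋊[conjZPowKer χ w] Multiplicative ℤ :=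
  MonoidHom.mk' (fun h => ⟨⟨h * w ^ (-(χ h).toAdd), by simp [hw, ← ofAdd_zsmul]⟩, χ h⟩)
    fun g h => by
      ext
      · simp only [SemidirectProduct.mul_left, Subgroup.coe_mul, MonoidHom.comp_apply,
          zpowersHom_apply, MulAut.conjNormal_apply, map_mul, toAdd_mul]
        group
      · simp

theorem toKerSemidirect_of_mem_ker (hw : χ w = ofAdd 1) (k : χ.ker) :
    toKerSemidirect hw k = SemidirectProduct.inl k := by
  ext
  · simp [toKerSemidirect, MonoidHom.mem_ker.mp k.2]
  · exact k.2

theorem toKerSemidirect_self (hw : χ w = ofAdd 1) :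
    toKerSemidirect hw w = SemidirectProduct.inr (ofAdd 1) := by
  ext
  · simp [toKerSemidirect, hw]
  · exact hw

end Splitting

def coprodAction {G M N : Type*} [Group G] [Group M] [Group N] (φ₁ : G →* MulAut M)
    (φ₂ : G →* MulAut N) : G →* MulAut (M ∗ N) where
  toFun g := MulEquiv.coprodCongr (φ₁ g) (φ₂ g)
  map_one' := MulEquiv.toMonoidHom_injective <| Coprod.hom_ext (by ext; simp) (by ext; simp)
  map_mul' g h := MulEquiv.toMonoidHom_injective <| Coprod.hom_ext (by ext; simp) (by ext; simp)

section coprodAction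

variable {G M N : Type*} [Group G] [Group M] [Group N] (φ₁ : G →* MulAut M) (φ₂ : G →* MulAut N)

@[simp]
theorem coprodAction_inl (g : G) (m : M) :
    coprodAction φ₁ φ₂ g (Coprod.inl m) = Coprod.inl (φ₁ g m) := rfl

@[simp]
theorem coprodAction_inr (g : G) (n : N) :
    coprodAction φ₁ φ₂ g (Coprod.inr n) = Coprod.inr (φ₂ g n) := rfl

theorem coprodAction_comp_inl (g : G) :
    (coprodAction φ₁ φ₂ g).toMonoidHom.comp Coprod.inl = Coprod.inl.comp (φ₁ g).toMonoidHom :=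
  rfl

theorem coprodAction_comp_inr (g : G) :
    (coprodAction φ₁ φ₂ g).toMonoidHom.comp Coprod.inr = Coprod.inr.comp (φ₂ g).toMonoidHom :=
  rfl

end coprodAction

noncomputable def MulEquiv.kerEquivOfRightHom {N G K : Type*} [Group N] [Group G] [Group K]
    {φ : G →* MulAut N} (e : K ≃* N ⋊[φ] G) {χ : K →* G}
    (hχ : SemidirectProduct.rightHom.comp (e : K →* N ⋊[φ] G) = χ) : χ.ker ≃* N :=
  have hker : χ.ker.map (e : K →* N ⋊[φ] G) = SemidirectProduct.rightHom.ker := by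
    rw [Subgroup.map_equiv_eq_comap_symm, MonoidHom.comap_ker, ← hχ]
    congr 1
    ext x
    simp
  (e.subgroupMap χ.ker).trans <| (MulEquiv.subgroupCongr hker).trans <|
    (MulEquiv.subgroupCongr SemidirectProduct.range_inl_eq_ker_rightHom).symm.trans
      (MonoidHom.ofInjective SemidirectProduct.inl_injective).symm

theorem MonoidHom.eq_of_comp_eq_of_closure_range_union {H H₁ H₂ K : Type*} [Group H] [Group H₁]
    [Group H₂] [Monoid K] {ι₁ : H₁ →* H} {ι₂ : H₂ →* H}
    (hgen : Subgroup.closure (Set.range ι₁ ∪ Set.range ι₂) = ⊤) {f g : H →* K}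
    (h₁ : f.comp ι₁ = g.comp ι₁) (h₂ : f.comp ι₂ = g.comp ι₂) : f = g :=
  eq_of_eqOn_dense hgen <| by
    rintro _ (⟨x, rfl⟩ | ⟨x, rfl⟩)
    exacts [DFunLike.congr_fun h₁ x, DFunLike.congr_fun h₂ x]

section Amalgam

variable {H H₁ H₂ : Type*} [Group H] [Group H₁] [Group H₂]
  {χ₁ : H₁ →* Multiplicative ℤ} {χ₂ : H₂ →* Multiplicative ℤ} {w₁ : H₁} {w₂ : H₂}

variable (χ₁ χ₂ w₁ w₂) in
abbrev KerCoprodSemidirect : Type _ :=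
  (χ₁.ker ∗ χ₂.ker) ⋊[coprodAction (conjZPowKer χ₁ w₁) (conjZPowKer χ₂ w₂)] Multiplicative ℤ

variable (χ₂ w₂) in
def toKerCoprodLeft (hw₁ : χ₁ w₁ = ofAdd 1) : H₁ →* KerCoprodSemidirect χ₁ χ₂ w₁ w₂ :=
  (SemidirectProduct.map Coprod.inl (.id _) fun g => (coprodAction_comp_inl _ _ g).symm).comp
    (toKerSemidirect hw₁)

variable (χ₁ w₁) in
def toKerCoprodRight (hw₂ : χ₂ w₂ = ofAdd 1) : H₂ →* KerCoprodSemidirect χ₁ χ₂ w₁ w₂ :=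
  (SemidirectProduct.map Coprod.inr (.id _) fun g => (coprodAction_comp_inr _ _ g).symm).comp
    (toKerSemidirect hw₂)

@[simp]
theorem toKerCoprodLeft_of_mem_ker (hw₁ : χ₁ w₁ = ofAdd 1) (k : χ₁.ker) :
    toKerCoprodLeft χ₂ w₂ hw₁ k = SemidirectProduct.inl (Coprod.inl k) := by
  rw [toKerCoprodLeft, MonoidHom.comp_apply, toKerSemidirect_of_mem_ker, SemidirectProduct.map_inl]

@[simp]
theorem toKerCoprodRight_of_mem_ker (hw₂ : χ₂ w₂ = ofAdd 1) (k : χ₂.ker) :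
    toKerCoprodRight χ₁ w₁ hw₂ k = SemidirectProduct.inl (Coprod.inr k) := by
  rw [toKerCoprodRight, MonoidHom.comp_apply, toKerSemidirect_of_mem_ker, SemidirectProduct.map_inl]

theorem toKerCoprodLeft_self (hw₁ : χ₁ w₁ = ofAdd 1) :
    toKerCoprodLeft χ₂ w₂ hw₁ w₁ = SemidirectProduct.inr (ofAdd 1) := by
  rw [toKerCoprodLeft, MonoidHom.comp_apply, toKerSemidirect_self, SemidirectProduct.map_inr,
    MonoidHom.id_apply]

theorem toKerCoprodRight_self (hw₂ : χ₂ w₂ = ofAdd 1) :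
    toKerCoprodRight χ₁ w₁ hw₂ w₂ = SemidirectProduct.inr (ofAdd 1) := by
  rw [toKerCoprodRight, MonoidHom.comp_apply, toKerSemidirect_self, SemidirectProduct.map_inr,
    MonoidHom.id_apply]

def ofKerCoprod (ι₁ : H₁ →* H) (ι₂ : H₂ →* H) (hι : ι₁ w₁ = ι₂ w₂) :
    KerCoprodSemidirect χ₁ χ₂ w₁ w₂ →* H :=
  SemidirectProduct.lift (Coprod.lift (ι₁.comp χ₁.ker.subtype) (ι₂.comp χ₂.ker.subtype))
    (zpowersHom H (ι₁ w₁)) fun g => by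
      ext k <;>
      simp only [MonoidHom.comp_apply, MulEquiv.coe_toMonoidHom, coprodAction_inl,
        coprodAction_inr, Coprod.lift_apply_inl, Coprod.lift_apply_inr, zpowersHom_apply,
        MulAut.conj_apply, MulAut.conjNormal_apply, Subgroup.coe_subtype, map_mul, map_inv] <;>
      simp only [map_zpow, hι]

theorem ofKerCoprod_comp_toKerCoprodLeft (hw₁ : χ₁ w₁ = ofAdd 1) (ι₁ : H₁ →* H) (ι₂ : H₂ →* H)
    (hι : ι₁ w₁ = ι₂ w₂) : (ofKerCoprod ι₁ ι₂ hι).comp (toKerCoprodLeft χ₂ w₂ hw₁) = ι₁ := by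
  ext h
  show ι₁ (h * w₁ ^ (-(χ₁ h).toAdd)) * ι₁ w₁ ^ (χ₁ h).toAdd = ι₁ h
  simp

theorem ofKerCoprod_comp_toKerCoprodRight (hw₂ : χ₂ w₂ = ofAdd 1) (ι₁ : H₁ →* H) (ι₂ : H₂ →* H)
    (hι : ι₁ w₁ = ι₂ w₂) : (ofKerCoprod ι₁ ι₂ hι).comp (toKerCoprodRight χ₁ w₁ hw₂) = ι₂ := by
  ext h
  show ι₂ (h * w₂ ^ (-(χ₂ h).toAdd)) * ι₁ w₁ ^ (χ₂ h).toAdd = ι₂ h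
  simp [hι]

variable {hw₁ : χ₁ w₁ = ofAdd 1} {hw₂ : χ₂ w₂ = ofAdd 1} {ι₁ : H₁ →* H} {ι₂ : H₂ →* H}
  {Ψ : H →* KerCoprodSemidirect χ₁ χ₂ w₁ w₂}

theorem ofKerCoprod_comp_eq_id (hι : ι₁ w₁ = ι₂ w₂)
    (hgen : Subgroup.closure (Set.range ι₁ ∪ Set.range ι₂) = ⊤)
    (hΨ₁ : Ψ.comp ι₁ = toKerCoprodLeft χ₂ w₂ hw₁) (hΨ₂ : Ψ.comp ι₂ = toKerCoprodRight χ₁ w₁ hw₂) :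
    (ofKerCoprod ι₁ ι₂ hι).comp Ψ = .id H :=
  MonoidHom.eq_of_comp_eq_of_closure_range_union hgen
    (by rw [MonoidHom.comp_assoc, hΨ₁, ofKerCoprod_comp_toKerCoprodLeft]; rfl)
    (by rw [MonoidHom.comp_assoc, hΨ₂, ofKerCoprod_comp_toKerCoprodRight]; rfl)

theorem comp_ofKerCoprod_eq_id (hι : ι₁ w₁ = ι₂ w₂)
    (hΨ₁ : Ψ.comp ι₁ = toKerCoprodLeft χ₂ w₂ hw₁) (hΨ₂ : Ψ.comp ι₂ = toKerCoprodRight χ₁ w₁ hw₂) :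
    Ψ.comp (ofKerCoprod ι₁ ι₂ hι) = .id _ := by
  refine SemidirectProduct.hom_ext (Coprod.hom_ext ?_ ?_) (MonoidHom.ext_mint ?_)
  · ext k : 1
    simpa [ofKerCoprod] using DFunLike.congr_fun hΨ₁ (k : H₁)
  · ext k : 1
    simpa [ofKerCoprod] using DFunLike.congr_fun hΨ₂ (k : H₂)
  · simpa [ofKerCoprod, toKerCoprodLeft_self] using DFunLike.congr_fun hΨ₁ w₁

theorem rightHom_comp_eq (hgen : Subgroup.closure (Set.range ι₁ ∪ Set.range ι₂) = ⊤)
    {χ : H →* Multiplicative ℤ} (hχ₁ : χ.comp ι₁ = χ₁) (hχ₂ : χ.comp ι₂ = χ₂)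
    (hΨ₁ : Ψ.comp ι₁ = toKerCoprodLeft χ₂ w₂ hw₁) (hΨ₂ : Ψ.comp ι₂ = toKerCoprodRight χ₁ w₁ hw₂) :
    SemidirectProduct.rightHom.comp Ψ = χ :=
  MonoidHom.eq_of_comp_eq_of_closure_range_union hgen
    (by rw [MonoidHom.comp_assoc, hΨ₁, hχ₁]; rfl)
    (by rw [MonoidHom.comp_assoc, hΨ₂, hχ₂]; rfl)

noncomputable def kerEquivCoprodOfAmalgam {χ : H →* Multiplicative ℤ} (hι : ι₁ w₁ = ι₂ w₂)
    (hgen : Subgroup.closure (Set.range ι₁ ∪ Set.range ι₂) = ⊤)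
    (hχ₁ : χ.comp ι₁ = χ₁) (hχ₂ : χ.comp ι₂ = χ₂)
    (hΨ₁ : Ψ.comp ι₁ = toKerCoprodLeft χ₂ w₂ hw₁) (hΨ₂ : Ψ.comp ι₂ = toKerCoprodRight χ₁ w₁ hw₂) :
    χ.ker ≃* χ₁.ker ∗ χ₂.ker :=
  (Ψ.toMulEquiv (ofKerCoprod ι₁ ι₂ hι) (ofKerCoprod_comp_eq_id hι hgen hΨ₁ hΨ₂)
    (comp_ofKerCoprod_eq_id hι hΨ₁ hΨ₂)).kerEquivOfRightHom
      (rightHom_comp_eq hgen hχ₁ hχ₂ hΨ₁ hΨ₂)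

end Amalgam

namespace RAAG

variable {V : Type} (G : SimpleGraph V) {s t : Set V}

theorem closure_range_induceHom_union (hun : s ∪ t = Set.univ) :
    Subgroup.closure (Set.range (induceHom G s) ∪ Set.range (induceHom G t)) = ⊤ :=
  eq_top_iff.2 <| closure_range_gen.ge.trans <| Subgroup.closure_mono <| by
    rintro _ ⟨u, rfl⟩
    rcases (hun ▸ Set.mem_univ u : u ∈ s ∪ t) with hu | hu
    exacts [Or.inl ⟨gen _ ⟨u, hu⟩, induceHom_gen _ _⟩, Or.inr ⟨gen _ ⟨u, hu⟩, induceHom_gen _ _⟩]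

variable {G} {K : Type*} [Group K] (f₁ : RAAG (G.induce s) →* K) (f₂ : RAAG (G.induce t) →* K)

-- The last branch is never taken when `s ∪ t` covers `V`.
open Classical in
noncomputable def glueGen (u : V) : K :=
  if hs : u ∈ s then f₁ (gen _ ⟨u, hs⟩) else if ht : u ∈ t then f₂ (gen _ ⟨u, ht⟩) else 1

theorem glueGen_of_mem_left {u : V} (hs : u ∈ s) : glueGen f₁ f₂ u = f₁ (gen _ ⟨u, hs⟩) :=
  dif_pos hs

theorem glueGen_of_mem_right
    (hf : ∀ u (hs : u ∈ s) (ht : u ∈ t), f₁ (gen _ ⟨u, hs⟩) = f₂ (gen _ ⟨u, ht⟩))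
    {u : V} (ht : u ∈ t) : glueGen f₁ f₂ u = f₂ (gen _ ⟨u, ht⟩) := by
  by_cases hs : u ∈ s
  · exact (glueGen_of_mem_left f₁ f₂ hs).trans (hf u hs ht)
  · exact (dif_neg hs).trans (dif_pos ht)

noncomputable def glue (hedges : ∀ a b, G.Adj a b → (a ∈ s ∧ b ∈ s) ∨ (a ∈ t ∧ b ∈ t))
    (hf : ∀ u (hs : u ∈ s) (ht : u ∈ t), f₁ (gen _ ⟨u, hs⟩) = f₂ (gen _ ⟨u, ht⟩)) :
    RAAG G →* K :=
  lift (glueGen f₁ f₂) fun a b hab => by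
    rcases hedges a b hab with ⟨ha, hb⟩ | ⟨ha, hb⟩
    · rw [glueGen_of_mem_left f₁ f₂ ha, glueGen_of_mem_left f₁ f₂ hb]
      exact (gen_commute (G := G.induce s) (a := ⟨a, ha⟩) (b := ⟨b, hb⟩) hab).map f₁
    · rw [glueGen_of_mem_right f₁ f₂ hf ha, glueGen_of_mem_right f₁ f₂ hf hb]
      exact (gen_commute (G := G.induce t) (a := ⟨a, ha⟩) (b := ⟨b, hb⟩) hab).map f₂

variable (hedges : ∀ a b, G.Adj a b → (a ∈ s ∧ b ∈ s) ∨ (a ∈ t ∧ b ∈ t))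
  (hf : ∀ u (hs : u ∈ s) (ht : u ∈ t), f₁ (gen _ ⟨u, hs⟩) = f₂ (gen _ ⟨u, ht⟩))

theorem glue_comp_induceHom_left : (glue f₁ f₂ hedges hf).comp (induceHom G s) = f₁ :=
  hom_ext fun u => by simp [glue, glueGen_of_mem_left f₁ f₂ u.2]

theorem glue_comp_induceHom_right : (glue f₁ f₂ hedges hf).comp (induceHom G t) = f₂ :=
  hom_ext fun u => by simp [glue, glueGen_of_mem_right f₁ f₂ hf u.2]

end RAAG

theorem stmt16_general {V : Type} (G : SimpleGraph V) (s t : Set V) (v : V)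
    (hst : s ∩ t = {v}) (hun : s ∪ t = Set.univ)
    (hedges : ∀ a b, G.Adj a b → (a ∈ s ∧ b ∈ s) ∨ (a ∈ t ∧ b ∈ t))
    (χ : RAAG G →* Multiplicative ℤ)
    (hχ : ∀ u, χ (RAAG.gen G u) = Multiplicative.ofAdd 1)
    (χ₁ : RAAG (G.induce s) →* Multiplicative ℤ)
    (hχ₁ : ∀ u, χ₁ (RAAG.gen (G.induce s) u) = Multiplicative.ofAdd 1)
    (χ₂ : RAAG (G.induce t) →* Multiplicative ℤ)
    (hχ₂ : ∀ u, χ₂ (RAAG.gen (G.induce t) u) = Multiplicative.ofAdd 1) :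
    Nonempty (↥χ.ker ≃* Monoid.Coprod ↥χ₁.ker ↥χ₂.ker) := by
  have hv : v ∈ s ∩ t := hst.ge rfl
  set w₁ := RAAG.gen (G.induce s) ⟨v, hv.1⟩
  set w₂ := RAAG.gen (G.induce t) ⟨v, hv.2⟩
  have hι : RAAG.induceHom G s w₁ = RAAG.induceHom G t w₂ := by
    simp only [w₁, w₂, RAAG.induceHom_gen]
  have hglue : ∀ u (hs : u ∈ s) (ht : u ∈ t),
      toKerCoprodLeft χ₂ w₂ (hχ₁ _) (RAAG.gen _ ⟨u, hs⟩) =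
        toKerCoprodRight χ₁ w₁ (hχ₂ _) (RAAG.gen _ ⟨u, ht⟩) := by
    rintro u hs ht
    obtain rfl : u = v := hst.le ⟨hs, ht⟩
    exact (toKerCoprodLeft_self _).trans (toKerCoprodRight_self _).symm
  exact ⟨kerEquivCoprodOfAmalgam hι (RAAG.closure_range_induceHom_union G hun)
    (RAAG.hom_ext fun u => by simp [hχ, hχ₁]) (RAAG.hom_ext fun u => by simp [hχ, hχ₂])
    (RAAG.glue_comp_induceHom_left _ _ hedges hglue)
    (RAAG.glue_comp_induceHom_right _ _ hedges hglue)⟩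

/-- if `Γ` is the connected sum of two finite connected graphs
`Γ₁ = Γ.induce s` and `Γ₂ = Γ.induce t` glued at the single common vertex `v`, then
the Bestvina–Brady group of `Γ` is the free product of the Bestvina–Brady groups of
`Γ₁` and `Γ₂`. -/
theorem stmt16 {V : Type} [Finite V] (G : SimpleGraph V) (s t : Set V) (v : V)
    (hst : s ∩ t = {v}) (hun : s ∪ t = Set.univ)
    (hedges : ∀ a b, G.Adj a b → (a ∈ s ∧ b ∈ s) ∨ (a ∈ t ∧ b ∈ t))
    (h1 : (G.induce s).Connected) (h2 : (G.induce t).Connected)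
    (χ : RAAG G →* Multiplicative ℤ)
    (hχ : ∀ u, χ (RAAG.gen G u) = Multiplicative.ofAdd 1)
    (χ₁ : RAAG (G.induce s) →* Multiplicative ℤ)
    (hχ₁ : ∀ u, χ₁ (RAAG.gen (G.induce s) u) = Multiplicative.ofAdd 1)
    (χ₂ : RAAG (G.induce t) →* Multiplicative ℤ)
    (hχ₂ : ∀ u, χ₂ (RAAG.gen (G.induce t) u) = Multiplicative.ofAdd 1) :
    Nonempty (↥χ.ker ≃* Monoid.Coprod ↥χ₁.ker ↥χ₂.ker) :=
  stmt16_general G s t v hst hun hedges χ hχ χ₁ hχ₁ χ₂ hχ₂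
end
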